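/- arXiv:math/0404202 — 6 statements merged into one kernel-verified Lean document; each statement's English description precedes it below -/
import Mathlib

section
/- Let m be a nonnegative integer and let λ be any partition. Writing M_l for the number of boxes of the m-tableau T_m(λ) carrying the entry l, the following hold: (i) M_p − M_{p+1} ∈ {0, 1, 2} for every integer p with p ≥ m and p ≥ 1; (ii) M_p − M_{p+1} ∈ {−1, 0, 1} for every integer p with 1 ≤ p ≤ m − 1; (iii) if m ≥ 1 then M_0 ∈ {⌊M_1/2⌋, ⌈M_1/2⌉}; (iv) if m = 0 then M_0 ∈ {⌊(M_1+1)/2⌋, ⌈(M_1+1)/2⌉}. -/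
open scoped Classical

/-- The multiplicity `M_l` of the entry `l` in the `m`-tableau `T_m(λ)`:
the number of boxes `(i,j)` (here 0-indexed, so the box in row `i+1` and
column `j+1` of the Young diagram of `lam`, i.e. `j < lam i`) whose entry
`|i - j + m|` equals `l`. -/
noncomputable def Mmult (lam : ℕ → ℕ) (m : ℝ) (l : ℝ) : ℕ :=
  Set.ncard {p : ℕ × ℕ | p.2 < lam p.1 ∧ |(p.1 : ℝ) - (p.2 : ℝ) + m| = l}

/-!
Every box with entry `l ≥ 1` lies on one of the diagonals `i - j = l - m` and `i - j = -l - m`,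
so `M_l = D (l - m) + D (-l - m)` and `M_0 = D (-m)`, where `D c` is the length of the diagonal
`i - j = c` of the Young diagram. Moving boxes one row up or one column to the left shows that `D`
increases up to the main diagonal, decreases after it, and changes by at most one per step.
-/

open Set

namespace MTableau

def diagram (lam : ℕ → ℕ) : Set (ℕ × ℕ) := {p | p.2 < lam p.1}

def diagonal (lam : ℕ → ℕ) (c : ℤ) : Set (ℕ × ℕ) := {p ∈ diagram lam | (p.1 : ℤ) - p.2 = c}

noncomputable def diagLength (lam : ℕ → ℕ) (c : ℤ) : ℕ := (diagonal lam c).ncard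

variable {lam : ℕ → ℕ} {c : ℤ}

theorem diagram_finite (hanti : Antitone lam) (hfin : ∃ N, ∀ i, N ≤ i → lam i = 0) :
    (diagram lam).Finite := by
  obtain ⟨N, hN⟩ := hfin
  refine ((finite_Iio N).prod (finite_Iio (lam 0))).subset ?_
  rintro ⟨i, j⟩ (h : j < lam i)
  refine ⟨mem_Iio.2 <| not_le.1 fun hi => ?_, h.trans_le (hanti i.zero_le)⟩
  rw [hN i hi] at h
  exact j.not_lt_zero h

theorem diagonal_finite (hdiag : (diagram lam).Finite) (c : ℤ) : (diagonal lam c).Finite :=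
  hdiag.subset (sep_subset _ _)

theorem eq_of_mem_diagonal_of_fst_eq {p q : ℕ × ℕ} (hp : p ∈ diagonal lam c) (hq : q ∈ diagonal lam c)
    (h : p.1 = q.1) : p = q :=
  Prod.ext h (by have := hp.2; have := hq.2; omega)

theorem eq_of_mem_diagonal_of_snd_eq {p q : ℕ × ℕ} (hp : p ∈ diagonal lam c) (hq : q ∈ diagonal lam c)
    (h : p.2 = q.2) : p = q :=
  Prod.ext (by have := hp.2; have := hq.2; omega) h

theorem diagLength_add_one_le (hanti : Antitone lam) (hdiag : (diagram lam).Finite)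
    (hc : 0 ≤ c) : diagLength lam (c + 1) ≤ diagLength lam c :=
  ncard_le_ncard_of_injOn (fun p => (p.1 - 1, p.2))
    (fun p ⟨hp, hpc⟩ => ⟨hp.trans_le (hanti (p.1.sub_le 1)), by simp only; omega⟩)
    (fun _ hp _ hq h => eq_of_mem_diagonal_of_snd_eq hp hq (Prod.ext_iff.1 h).2)
    (diagonal_finite hdiag c)

theorem diagLength_sub_one_le (hdiag : (diagram lam).Finite) (hc : c ≤ 0) :
    diagLength lam (c - 1) ≤ diagLength lam c :=
  ncard_le_ncard_of_injOn (fun p => (p.1, p.2 - 1))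
    (fun p ⟨(hp : p.2 < lam p.1), hpc⟩ => ⟨(by omega : p.2 - 1 < lam p.1), by simp only; omega⟩)
    (fun _ hp _ hq h => eq_of_mem_diagonal_of_fst_eq hp hq (Prod.ext_iff.1 h).1)
    (diagonal_finite hdiag c)

theorem diagLength_le_succ_add_one (hdiag : (diagram lam).Finite) (c : ℤ) :
    diagLength lam c ≤ diagLength lam (c + 1) + 1 := by
  calc diagLength lam c ≤ (insert (c.toNat, 0) (diagonal lam (c + 1))).ncard :=
        ncard_le_ncard_of_injOn (fun p => (p.1, p.2 - 1)) ?_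
          (fun _ hp _ hq h => eq_of_mem_diagonal_of_fst_eq hp hq (Prod.ext_iff.1 h).1)
          ((diagonal_finite hdiag _).insert _)
    _ ≤ diagLength lam (c + 1) + 1 := ncard_insert_le _ _
  rintro ⟨i, j⟩ ⟨hij : j < lam i, hc : (i : ℤ) - j = c⟩
  rcases Nat.eq_zero_or_pos j with rfl | hj
  · exact mem_insert_iff.2 (Or.inl (Prod.ext (by simp only; omega) rfl))
  · exact mem_insert_of_mem _ ⟨(by omega : j - 1 < lam i), by simp only; omega⟩

theorem diagLength_le_pred_add_one (hanti : Antitone lam) (hdiag : (diagram lam).Finite)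
    (c : ℤ) : diagLength lam c ≤ diagLength lam (c - 1) + 1 := by
  calc diagLength lam c ≤ (insert (0, (-c).toNat) (diagonal lam (c - 1))).ncard :=
        ncard_le_ncard_of_injOn (fun p => (p.1 - 1, p.2)) ?_
          (fun _ hp _ hq h => eq_of_mem_diagonal_of_snd_eq hp hq (Prod.ext_iff.1 h).2)
          ((diagonal_finite hdiag _).insert _)
    _ ≤ diagLength lam (c - 1) + 1 := ncard_insert_le _ _
  rintro ⟨i, j⟩ ⟨hij : j < lam i, hc : (i : ℤ) - j = c⟩
  rcases Nat.eq_zero_or_pos i with rfl | hi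
  · exact mem_insert_iff.2 (Or.inl (Prod.ext rfl (by simp only; omega)))
  · exact mem_insert_of_mem _ ⟨hij.trans_le (hanti (i.sub_le 1)), by simp only; omega⟩

theorem diagLength_le_of_nonneg_of_le (hanti : Antitone lam) (hdiag : (diagram lam).Finite)
    (c d : ℤ) (hc : 0 ≤ c) (hcd : c ≤ d) : diagLength lam d ≤ diagLength lam c :=
  antitoneOn_of_add_one_le ordConnected_Ici
    (fun _ _ ha _ => diagLength_add_one_le hanti hdiag ha) hc (hc.trans hcd) hcd

theorem diagLength_le_of_le_of_nonpos (hdiag : (diagram lam).Finite)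
    (c d : ℤ) (hcd : c ≤ d) (hd : d ≤ 0) : diagLength lam c ≤ diagLength lam d :=
  monotoneOn_of_sub_one_le ordConnected_Iic
    (fun _ _ ha _ => diagLength_sub_one_le hdiag ha) (hcd.trans hd) hd hcd

theorem diagLength_le_add_one (hanti : Antitone lam) (hdiag : (diagram lam).Finite)
    (c d : ℤ) (h₁ : c ≤ d + 1) (h₂ : d ≤ c + 1) : diagLength lam c ≤ diagLength lam d + 1 := by
  obtain rfl | rfl | rfl : d = c - 1 ∨ d = c ∨ d = c + 1 := by omega
  · exact diagLength_le_pred_add_one hanti hdiag c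
  · omega
  · exact diagLength_le_succ_add_one hdiag c

theorem Mmult_natCast_eq_ncard (m l : ℕ) :
    Mmult lam m l = {p ∈ diagram lam | |(p.1 : ℤ) - p.2 + m| = l}.ncard := by
  unfold Mmult
  congr! 4 with p
  exact_mod_cast Iff.rfl

theorem Mmult_zero (m : ℕ) : Mmult lam m 0 = diagLength lam (-m) := by
  rw [← Nat.cast_zero, Mmult_natCast_eq_ncard, diagLength]
  congr 1
  ext p
  simp only [diagonal, mem_sep_iff, Nat.cast_zero, abs_eq_zero]
  exact and_congr_right fun _ => by omega

theorem Mmult_natCast (hdiag : (diagram lam).Finite) (m : ℕ) {l : ℕ} (hl : 1 ≤ l) :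
    Mmult lam m l = diagLength lam (l - m) + diagLength lam (-l - m) := by
  rw [Mmult_natCast_eq_ncard, diagLength, diagLength,
    ← ncard_union_eq _ (diagonal_finite hdiag _) (diagonal_finite hdiag _)]
  · congr 1
    ext p
    simp only [diagonal, mem_sep_iff, mem_union, ← and_or_left, abs_eq (Int.natCast_nonneg l)]
    exact and_congr_right fun _ => by omega
  · exact disjoint_left.2 fun p hp hq => by have := hp.2; have := hq.2; omega

theorem Mmult_natCast_add_one (hdiag : (diagram lam).Finite) (m p : ℕ) :
    Mmult lam m (p + 1) = diagLength lam (p + 1 - m) + diagLength lam (-(p + 1) - m) := by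
  rw [← Nat.cast_succ, Mmult_natCast hdiag m p.succ_pos]
  push_cast
  rfl

theorem Mmult_one (hdiag : (diagram lam).Finite) (m : ℕ) :
    Mmult lam m 1 = diagLength lam (1 - m) + diagLength lam (-1 - m) := by
  exact_mod_cast Mmult_natCast hdiag m le_rfl

variable {m p : ℕ}

theorem Mmult_add_one_le (hanti : Antitone lam) (hdiag : (diagram lam).Finite) (hp : 1 ≤ p)
    (hmp : m ≤ p) : Mmult lam m (p + 1) ≤ Mmult lam m p := by
  rw [Mmult_natCast_add_one hdiag, Mmult_natCast hdiag m hp]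
  have := diagLength_le_of_nonneg_of_le hanti hdiag (p - m) (p + 1 - m) (by omega) (by omega)
  have := diagLength_le_of_le_of_nonpos hdiag (-(p + 1) - m) (-p - m) (by omega) (by omega)
  omega

theorem Mmult_le_add_one_add_two (hanti : Antitone lam) (hdiag : (diagram lam).Finite)
    (hp : 1 ≤ p) : Mmult lam m p ≤ Mmult lam m (p + 1) + 2 := by
  rw [Mmult_natCast_add_one hdiag, Mmult_natCast hdiag m hp]
  have := diagLength_le_add_one hanti hdiag (p - m) (p + 1 - m) (by omega) (by omega)
  have := diagLength_le_add_one hanti hdiag (-p - m) (-(p + 1) - m) (by omega) (by omega)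
  omega

theorem Mmult_le_add_one_add_one (hanti : Antitone lam) (hdiag : (diagram lam).Finite)
    (hp : 1 ≤ p) (hpm : p + 1 ≤ m) : Mmult lam m p ≤ Mmult lam m (p + 1) + 1 := by
  rw [Mmult_natCast_add_one hdiag, Mmult_natCast hdiag m hp]
  have := diagLength_le_of_le_of_nonpos hdiag (p - m) (p + 1 - m) (by omega) (by omega)
  have := diagLength_le_add_one hanti hdiag (-p - m) (-(p + 1) - m) (by omega) (by omega)
  omega

theorem Mmult_add_one_le_add_one (hanti : Antitone lam) (hdiag : (diagram lam).Finite)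
    (hp : 1 ≤ p) : Mmult lam m (p + 1) ≤ Mmult lam m p + 1 := by
  rw [Mmult_natCast_add_one hdiag, Mmult_natCast hdiag m hp]
  have := diagLength_le_add_one hanti hdiag (p + 1 - m) (p - m) (by omega) (by omega)
  have := diagLength_le_of_le_of_nonpos hdiag (-(p + 1) - m) (-p - m) (by omega) (by omega)
  omega

theorem Mmult_zero_eq_half (hanti : Antitone lam) (hdiag : (diagram lam).Finite) (hm : 1 ≤ m) :
    Mmult lam m 0 = Mmult lam m 1 / 2 ∨ Mmult lam m 0 = (Mmult lam m 1 + 1) / 2 := by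
  rw [Mmult_zero, Mmult_one hdiag]
  have := diagLength_le_of_le_of_nonpos hdiag (-m) (1 - m) (by omega) (by omega)
  have := diagLength_le_add_one hanti hdiag (1 - m) (-m) (by omega) (by omega)
  have := diagLength_le_of_le_of_nonpos hdiag (-1 - m) (-m) (by omega) (by omega)
  have := diagLength_le_add_one hanti hdiag (-m) (-1 - m) (by omega) (by omega)
  omega

theorem Mmult_zero_zero_eq_half (hanti : Antitone lam) (hdiag : (diagram lam).Finite) :
    Mmult lam 0 0 = (Mmult lam 0 1 + 1) / 2 ∨ Mmult lam 0 0 = (Mmult lam 0 1 + 2) / 2 := by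
  have h₀ := Mmult_zero (lam := lam) 0
  have h₁ := Mmult_one hdiag 0
  simp only [Nat.cast_zero, neg_zero, sub_zero] at h₀ h₁
  rw [h₀, h₁]
  have := diagLength_le_of_nonneg_of_le hanti hdiag 0 1 le_rfl zero_le_one
  have := diagLength_le_add_one hanti hdiag 0 1 (by omega) (by omega)
  have := diagLength_le_of_le_of_nonpos hdiag (-1) 0 (by omega) le_rfl
  have := diagLength_le_add_one hanti hdiag 0 (-1) (by omega) (by omega)
  omega

end MTableau

open MTableau

/-- for a nonnegative integer `m` and any partition `lam`
(a weakly decreasing, eventually-zero function recording the parts), the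
multiplicities `M_l` of the entries of the `m`-tableau satisfy:
(i) `M_p - M_{p+1} ∈ {0,1,2}` for integers `p ≥ m`, `p ≥ 1`;
(ii) `M_p - M_{p+1} ∈ {-1,0,1}` for integers `1 ≤ p ≤ m-1`;
(iii) if `m ≥ 1` then `M_0 ∈ {⌊M_1/2⌋, ⌈M_1/2⌉}`;
(iv) if `m = 0` then `M_0 ∈ {⌊(M_1+1)/2⌋, ⌈(M_1+1)/2⌉}`. -/
theorem stmt0 (m : ℕ) (lam : ℕ → ℕ)
    (hanti : Antitone lam) (hfin : ∃ N, ∀ i, N ≤ i → lam i = 0) :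
    (∀ p : ℕ, m ≤ p → 1 ≤ p →
      Mmult lam m ((p : ℝ) + 1) ≤ Mmult lam m (p : ℝ) ∧
      Mmult lam m (p : ℝ) ≤ Mmult lam m ((p : ℝ) + 1) + 2) ∧
    (∀ p : ℕ, 1 ≤ p → p + 1 ≤ m →
      Mmult lam m (p : ℝ) ≤ Mmult lam m ((p : ℝ) + 1) + 1 ∧
      Mmult lam m ((p : ℝ) + 1) ≤ Mmult lam m (p : ℝ) + 1) ∧
    (1 ≤ m →
      (Mmult lam m 0 = Mmult lam m 1 / 2 ∨
       Mmult lam m 0 = (Mmult lam m 1 + 1) / 2)) ∧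
    (m = 0 →
      (Mmult lam m 0 = (Mmult lam m 1 + 1) / 2 ∨
       Mmult lam m 0 = (Mmult lam m 1 + 2) / 2)) := by
  have hdiag := diagram_finite hanti hfin
  refine ⟨fun p hmp hp => ⟨Mmult_add_one_le hanti hdiag hp hmp,
      Mmult_le_add_one_add_two hanti hdiag hp⟩,
    fun p hp hpm => ⟨Mmult_le_add_one_add_one hanti hdiag hp hpm,
      Mmult_add_one_le_add_one hanti hdiag hp⟩,
    Mmult_zero_eq_half hanti hdiag, ?_⟩
  rintro rfl
  rw [Nat.cast_zero]
  exact Mmult_zero_zero_eq_half hanti hdiag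
end

section
/- Let m be a positive half-integer (m ∈ ℤ + 1/2, m > 0) and let λ be any partition. All entries of the m-tableau T_m(λ) lie in ℤ_{≥0} + 1/2, and writing M_l for the number of boxes of T_m(λ) with entry l, the following hold: (i) M_p − M_{p+1} ∈ {0, 1, 2} for every p ∈ ℤ + 1/2 with p ≥ m; (ii) M_p − M_{p+1} ∈ {−1, 0, 1} for every p ∈ ℤ + 1/2 with 1/2 ≤ p ≤ m − 1. -/
/-!
With `m = k + 1/2`, the box `(i, j)` has entry `|i - j + k + 1/2|`, so the entry `a + 1/2` occurs
exactly on the diagonals of contents `j - i = k - a` and `j - i = k + a + 1`. Writing `d c` for the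
number of boxes of content `c` and `r c` for the number of rows `i` with `λ_i > i + c`, one has
`d c + max 0 (-c) = r c`, and `r` decreases by at most one per step because `λ_i - i` is strictly
decreasing. Hence `d` changes by at most one per step, decreasing away from the main diagonal,
which gives (i) and (ii); the entries are half-integers since `|t + 1/2| ∈ ℕ + 1/2` for
`t ∈ ℤ`.
-/

open scoped Classical

theorem abs_int_add_half_eq_iff (t a : ℤ) (ha : 0 ≤ a) :
    |(t : ℝ) + 1/2| = a + 1/2 ↔ t = a ∨ t = -a - 1 := by
  have ha' : (0 : ℝ) ≤ a := by exact_mod_cast ha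
  rw [abs_eq (by linarith)]
  refine or_congr ⟨fun h => ?_, fun h => by rw [h]⟩
    ⟨fun h => ?_, fun h => by rw [h]; push_cast; ring⟩
  · exact_mod_cast add_right_cancel h
  · exact_mod_cast (by linarith : (t : ℝ) = -a - 1)

theorem exists_abs_int_add_half_eq (t : ℤ) : ∃ a : ℕ, |(t : ℝ) + 1/2| = a + 1/2 := by
  refine ⟨(max t (-t - 1)).toNat, ?_⟩
  rw [← Int.cast_natCast, Int.toNat_of_nonneg (by omega),
    abs_int_add_half_eq_iff _ _ (by omega)]
  omega

section

variable {lam : ℕ → ℕ}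

def rowsBeyond (lam : ℕ → ℕ) (c : ℤ) : Set ℕ := {i | (i : ℤ) + c < lam i}

def diag (lam : ℕ → ℕ) (c : ℤ) : Set (ℕ × ℕ) := {p | p.2 < lam p.1 ∧ (p.2 : ℤ) - p.1 = c}

theorem rowsBeyond_finite (hlam : Antitone lam) (c : ℤ) : (rowsBeyond lam c).Finite :=
  (Set.finite_Iio (lam 0 - c).toNat).subset fun i (hi : (i : ℤ) + c < lam i) => by
    have := hlam (Nat.zero_le i)
    simp only [Set.mem_Iio]
    omega

theorem rowsBeyond_succ_subset (c : ℤ) : rowsBeyond lam (c + 1) ⊆ rowsBeyond lam c :=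
  fun i (hi : (i : ℤ) + (c + 1) < lam i) => show (i : ℤ) + c < lam i by omega

theorem rowsBeyond_sdiff_succ_subsingleton (hlam : Antitone lam) (c : ℤ) :
    (rowsBeyond lam c \ rowsBeyond lam (c + 1)).Subsingleton := by
  rintro i ⟨hi, hi'⟩ j ⟨hj, hj'⟩
  simp only [rowsBeyond, Set.mem_ofPred_eq, not_lt] at hi hi' hj hj'
  rcases lt_trichotomy i j with h | h | h
  · have := hlam h.le; omega
  · exact h
  · have := hlam h.le; omega

theorem ncard_rowsBeyond_le_succ_add_one (hlam : Antitone lam) (c : ℤ) :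
    (rowsBeyond lam c).ncard ≤ (rowsBeyond lam (c + 1)).ncard + 1 := by
  have hdiff := rowsBeyond_sdiff_succ_subsingleton hlam c
  have := (Set.ncard_le_one hdiff.finite).2 hdiff
  have := Set.ncard_le_ncard_sdiff_add_ncard (rowsBeyond lam c) _ (rowsBeyond_finite hlam (c + 1))
  omega

theorem fst_injOn_diag (c : ℤ) : Set.InjOn Prod.fst (diag lam c) := by
  rintro ⟨i, j⟩ ⟨-, hj : (j : ℤ) - i = c⟩ ⟨i', j'⟩ ⟨-, hj' : (j' : ℤ) - i' = c⟩
    (rfl : i = i')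
  congr 1
  omega

theorem fst_image_diag (c : ℤ) :
    Prod.fst '' diag lam c = rowsBeyond lam c \ Set.Iio (-c).toNat := by
  ext i
  simp only [diag, rowsBeyond, Set.mem_image, Set.mem_ofPred_eq, Set.mem_sdiff, Set.mem_Iio,
    Prod.exists, exists_and_right, exists_eq_right, not_lt]
  constructor
  · rintro ⟨j, hj, hc⟩
    omega
  · rintro ⟨hi, hc⟩
    exact ⟨(i + c).toNat, by omega, by omega⟩

theorem ncard_diag_add_toNat (hlam : Antitone lam) (c : ℤ) :
    (diag lam c).ncard + (-c).toNat = (rowsBeyond lam c).ncard := by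
  -- the rows `i < -c` are counted by `rowsBeyond` but contain no box of content `c`
  have hsub : Set.Iio (-c).toNat ⊆ rowsBeyond lam c := fun i (hi : i < (-c).toNat) =>
    show (i : ℤ) + c < lam i by omega
  have := Set.ncard_sdiff_add_ncard_of_subset hsub (rowsBeyond_finite hlam c)
  rwa [Set.ncard_Iio_nat, ← fst_image_diag, (fst_injOn_diag c).ncard_image] at this

theorem diag_finite (hlam : Antitone lam) (c : ℤ) : (diag lam c).Finite :=
  Set.Finite.of_finite_image (fst_image_diag c ▸ (rowsBeyond_finite hlam c).sdiff)
    (fst_injOn_diag c)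

theorem ncard_diag_succ_of_nonneg (hlam : Antitone lam) {c : ℤ} (hc : 0 ≤ c) :
    (diag lam (c + 1)).ncard ≤ (diag lam c).ncard ∧
      (diag lam c).ncard ≤ (diag lam (c + 1)).ncard + 1 := by
  have := ncard_diag_add_toNat hlam c
  have := ncard_diag_add_toNat hlam (c + 1)
  have := Set.ncard_le_ncard (rowsBeyond_succ_subset c) (rowsBeyond_finite hlam c)
  have := ncard_rowsBeyond_le_succ_add_one hlam c
  omega

theorem ncard_diag_succ_of_neg (hlam : Antitone lam) {c : ℤ} (hc : c < 0) :
    (diag lam c).ncard ≤ (diag lam (c + 1)).ncard ∧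
      (diag lam (c + 1)).ncard ≤ (diag lam c).ncard + 1 := by
  have := ncard_diag_add_toNat hlam c
  have := ncard_diag_add_toNat hlam (c + 1)
  have := Set.ncard_le_ncard (rowsBeyond_succ_subset c) (rowsBeyond_finite hlam c)
  have := ncard_rowsBeyond_le_succ_add_one hlam c
  omega

theorem Mmult_add_half (hlam : Antitone lam) (k a : ℤ) (ha : 0 ≤ a) :
    Mmult lam (k + 1/2) (a + 1/2) = (diag lam (k - a)).ncard + (diag lam (k + a + 1)).ncard := by
  have hdisj : Disjoint (diag lam (k - a)) (diag lam (k + a + 1)) :=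
    Set.disjoint_left.2 fun p h h' => by have := h.2; have := h'.2; omega
  rw [Mmult, ← Set.ncard_union_eq hdisj (diag_finite hlam _) (diag_finite hlam _)]
  congr 1
  ext ⟨i, j⟩
  rw [Set.mem_ofPred_eq,
    show (i : ℝ) - j + (k + 1/2) = ((i - j + k : ℤ) : ℝ) + 1/2 by push_cast; ring,
    abs_int_add_half_eq_iff _ _ ha]
  simp only [diag, Set.mem_union, Set.mem_ofPred_eq]
  omega

end

theorem stmt1_general (k : ℕ) (m : ℝ) (hm : m = (k : ℝ) + 1/2)
    (lam : ℕ → ℕ) (hanti : Antitone lam) :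
    (∀ i j : ℕ, j < lam i → ∃ a : ℕ, |(i : ℝ) - (j : ℝ) + m| = (a : ℝ) + 1/2) ∧
    (∀ p : ℝ, (∃ a : ℤ, p = (a : ℝ) + 1/2) → m ≤ p →
      Mmult lam m (p + 1) ≤ Mmult lam m p ∧
      Mmult lam m p ≤ Mmult lam m (p + 1) + 2) ∧
    (∀ p : ℝ, (∃ a : ℤ, p = (a : ℝ) + 1/2) → 1/2 ≤ p → p ≤ m - 1 →
      Mmult lam m p ≤ Mmult lam m (p + 1) + 1 ∧
      Mmult lam m (p + 1) ≤ Mmult lam m p + 1) := by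
  subst hm
  have hM (a : ℤ) (ha : 0 ≤ a) := Mmult_add_half hanti k a ha
  have hM' (a : ℤ) (ha : 0 ≤ a) := Mmult_add_half hanti k (a + 1) (by omega)
  simp only [Int.cast_natCast, Int.cast_add, Int.cast_one, add_right_comm _ (1 : ℝ)] at hM hM'
  refine ⟨fun i j _ => ?_, ?_, ?_⟩
  · obtain ⟨a, ha⟩ := exists_abs_int_add_half_eq (i - j + k)
    exact ⟨a, by rw [← ha]; push_cast; ring_nf⟩
  · rintro p ⟨a, rfl⟩ hp
    have hka : (k : ℤ) ≤ a := by exact_mod_cast (by linarith : (k : ℝ) ≤ a)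
    rw [hM a (by omega), hM' a (by omega)]
    have h₁ := ncard_diag_succ_of_neg hanti (c := k - (a + 1)) (by omega)
    have h₂ := ncard_diag_succ_of_nonneg hanti (c := k + a + 1) (by omega)
    rw [show (k : ℤ) - (a + 1) + 1 = k - a by ring] at h₁
    rw [show (k : ℤ) + a + 1 + 1 = k + (a + 1) + 1 by ring] at h₂
    omega
  · rintro p ⟨a, rfl⟩ hp hpm
    have ha : 0 ≤ a := by exact_mod_cast (by linarith : (0 : ℝ) ≤ a)
    have hak : a + 1 ≤ (k : ℤ) := by exact_mod_cast (by linarith : (a : ℝ) + 1 ≤ k)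
    rw [hM a ha, hM' a ha]
    have h₁ := ncard_diag_succ_of_nonneg hanti (c := k - (a + 1)) (by omega)
    have h₂ := ncard_diag_succ_of_nonneg hanti (c := k + a + 1) (by omega)
    rw [show (k : ℤ) - (a + 1) + 1 = k - a by ring] at h₁
    rw [show (k : ℤ) + a + 1 + 1 = k + (a + 1) + 1 by ring] at h₂
    omega

/-- for a positive half-integer `m = k + 1/2` and any partition
`lam`, all entries of `T_m(λ)` lie in `ℤ_{≥0} + 1/2`, and the multiplicities
`M_l` satisfy: (i) `M_p - M_{p+1} ∈ {0,1,2}` for `p ∈ ℤ + 1/2`, `p ≥ m`;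
(ii) `M_p - M_{p+1} ∈ {-1,0,1}` for `p ∈ ℤ + 1/2` with `1/2 ≤ p ≤ m - 1`. -/
theorem stmt1 (k : ℕ) (m : ℝ) (hm : m = (k : ℝ) + 1/2)
    (lam : ℕ → ℕ) (hanti : Antitone lam) (hfin : ∃ N, ∀ i, N ≤ i → lam i = 0) :
    (∀ i j : ℕ, j < lam i → ∃ a : ℕ, |(i : ℝ) - (j : ℝ) + m| = (a : ℝ) + 1/2) ∧
    (∀ p : ℝ, (∃ a : ℤ, p = (a : ℝ) + 1/2) → m ≤ p →
      Mmult lam m (p + 1) ≤ Mmult lam m p ∧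
      Mmult lam m p ≤ Mmult lam m (p + 1) + 2) ∧
    (∀ p : ℝ, (∃ a : ℤ, p = (a : ℝ) + 1/2) → 1/2 ≤ p → p ≤ m - 1 →
      Mmult lam m p ≤ Mmult lam m (p + 1) + 1 ∧
      Mmult lam m (p + 1) ≤ Mmult lam m p + 1) :=
  stmt1_general k m hm lam hanti
end

section
/- Let m ≥ 0 with 2m ∈ ℤ and let λ be a nonempty partition of n whose m-tableau T_m(λ) is residual. Then the number of positive jumps is: |J⁺| = M_1 + m − 1 if m is an integer with m ≥ 1; |J⁺| = M_{1/2} + m − 1/2 if m is a half-integer; and |J⁺| = M_1 if m = 0. -/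
open scoped Classical

/-- `lam` is a partition of `n`: a weakly decreasing, eventually-zero function
`ℕ → ℕ` recording the parts (0-indexed), whose sum of parts is `n`. -/
def IsPartitionOf (lam : ℕ → ℕ) (n : ℕ) : Prop :=
  Antitone lam ∧ ∃ N, (∀ i, N ≤ i → lam i = 0) ∧ ∑ i ∈ Finset.range N, lam i = n

/-- The `m`-tableau of `lam` is residual.  The entry values range over `m + ℤ`
(that is, over `ℤ` when `m ∈ ℤ` and over `ℤ + 1/2` when `m` is a half-integer):
(i) `M_l - M_{l+1} ∈ {0,1}` for all entry-values `l > 0` with `l ≥ m`;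
(ii) `M_{l+1} - M_l ∈ {0,1}` for all entry-values `l` with `0 < l ≤ m - 1`;
(iii) when `m` is an integer, `M_0 = ⌊M_1/2⌋` if `m ≥ 1` and
`M_0 = ⌊(M_1+1)/2⌋` if `m = 0`. -/
def Residual (lam : ℕ → ℕ) (m : ℝ) : Prop :=
  (∀ l : ℝ, (∃ c : ℤ, l = m + c) → 0 < l → m ≤ l →
      Mmult lam m (l + 1) ≤ Mmult lam m l ∧
      Mmult lam m l ≤ Mmult lam m (l + 1) + 1) ∧
  (∀ l : ℝ, (∃ c : ℤ, l = m + c) → 0 < l → l ≤ m - 1 →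
      Mmult lam m l ≤ Mmult lam m (l + 1) ∧
      Mmult lam m (l + 1) ≤ Mmult lam m l + 1) ∧
  ((∃ c : ℤ, m = (c : ℝ)) →
      (m = 0 → Mmult lam m 0 = (Mmult lam m 1 + 1) / 2) ∧
      (m ≠ 0 → Mmult lam m 0 = Mmult lam m 1 / 2))

/-- The set `J⁺` of positive jumps of a residual `m`-tableau. -/
def Jpos (lam : ℕ → ℕ) (m : ℝ) : Set ℝ :=
  {l : ℝ | (∃ c : ℤ, l = m + c) ∧ 0 < l ∧
    ((m ≤ l ∧ Mmult lam m l = Mmult lam m (l + 1) + 1) ∨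
     (l ≤ m - 1 ∧ Mmult lam m l = Mmult lam m (l + 1)))}


lemma aux_drop_key (f : ℕ → ℕ) (h : ∀ k, f (k+1) ≤ f k ∧ f k ≤ f (k+1) + 1) :
    ∀ L, f 0 = ((Finset.range L).filter (fun k => f k = f (k+1) + 1)).card + f L := by
  intro L
  induction L with
  | zero => simp
  | succ L ih =>
    rw [Finset.range_add_one, Finset.filter_insert]
    by_cases hc : f L = f (L+1) + 1
    · rw [if_pos hc, Finset.card_insert_of_notMem (by simp)]
      omega
    · rw [if_neg hc]
      have := h L
      omega

lemma aux_anti (f : ℕ → ℕ) (h : ∀ k, f (k+1) ≤ f k ∧ f k ≤ f (k+1) + 1) :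
    ∀ j k, j ≤ k → f k ≤ f j := by
  intro j k hjk
  induction k with
  | zero =>
    have : j = 0 := Nat.le_zero.mp hjk
    rw [this]
  | succ k ih =>
    rcases Nat.lt_or_ge j (k+1) with h1 | h1
    · exact le_trans (h k).1 (ih (Nat.lt_succ_iff.mp h1))
    · have : j = k + 1 := le_antisymm hjk h1
      rw [this]

lemma aux_drop_set (f : ℕ → ℕ) (h : ∀ k, f (k+1) ≤ f k ∧ f k ≤ f (k+1) + 1)
    (K : ℕ) (hK : f K = 0) :
    {k : ℕ | f k = f (k+1) + 1} =
      ↑((Finset.range K).filter (fun k => f k = f (k+1) + 1)) := by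
  ext k
  simp only [Finset.coe_filter, Finset.mem_range, Set.mem_setOf_eq]
  constructor
  · intro hk
    refine ⟨?_, hk⟩
    by_contra hge
    push_neg at hge
    have h1 : f k ≤ f K := aux_anti f h K k hge
    omega
  · exact fun h => h.2

lemma aux_flat_key (f : ℕ → ℕ) (T : ℕ)
    (h : ∀ k, k < T → f k ≤ f (k+1) ∧ f (k+1) ≤ f k + 1) :
    ∀ L, L ≤ T → f L + ((Finset.range L).filter (fun k => f k = f (k+1))).card = L + f 0 := by
  intro L
  induction L with
  | zero => simp
  | succ L ih =>
    intro hL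
    have ih' := ih (by omega)
    rw [Finset.range_add_one, Finset.filter_insert]
    by_cases hc : f L = f (L+1)
    · rw [if_pos hc, Finset.card_insert_of_notMem (by simp)]
      omega
    · rw [if_neg hc]
      have := h L (by omega)
      omega

lemma Mmult_vanish (lam : ℕ → ℕ) (n : ℕ) (hlam : IsPartitionOf lam n) (m : ℝ)
    (hm0 : 0 ≤ m) : ∃ B : ℕ, ∀ l : ℝ, (B : ℝ) < l → Mmult lam m l = 0 := by
  obtain ⟨hmono, N, hN, -⟩ := hlam
  refine ⟨N + lam 0 + ⌈m⌉₊, fun l hl => ?_⟩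
  have hempty : {p : ℕ × ℕ | p.2 < lam p.1 ∧ |(p.1 : ℝ) - (p.2 : ℝ) + m| = l} = ∅ := by
    ext ⟨i, j⟩
    simp only [Set.mem_setOf_eq, Set.mem_empty_iff_false, iff_false, not_and]
    intro hij habs
    have hiN : i < N := by
      by_contra hge
      push_neg at hge
      rw [hN i hge] at hij
      omega
    have hjl : j < lam 0 := lt_of_lt_of_le hij (hmono (Nat.zero_le i))
    have hi' : (i : ℝ) + 1 ≤ N := by exact_mod_cast hiN
    have hj' : (j : ℝ) + 1 ≤ lam 0 := by exact_mod_cast hjl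
    have hm' : m ≤ (⌈m⌉₊ : ℝ) := Nat.le_ceil m
    have hiR : (0:ℝ) ≤ (i:ℝ) := Nat.cast_nonneg i
    have hjR : (0:ℝ) ≤ (j:ℝ) := Nat.cast_nonneg j
    have h1 : |(i : ℝ) - (j : ℝ) + m| ≤ (i : ℝ) + j + m := by
      rw [abs_le]
      constructor <;> linarith
    push_cast at hl
    linarith [habs ▸ h1]
  unfold Mmult
  rw [hempty, Set.ncard_empty]

lemma tail_ncard (lam : ℕ → ℕ) (m s : ℝ)
    (hstep : ∀ k : ℕ, Mmult lam m (s + k + 1) ≤ Mmult lam m (s + k) ∧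
      Mmult lam m (s + k) ≤ Mmult lam m (s + k + 1) + 1)
    (K : ℕ) (hK : Mmult lam m (s + K) = 0) :
    {l : ℝ | (∃ k : ℕ, l = s + k) ∧ Mmult lam m l = Mmult lam m (l + 1) + 1}.ncard
        = Mmult lam m s ∧
      {l : ℝ | (∃ k : ℕ, l = s + k) ∧ Mmult lam m l = Mmult lam m (l + 1) + 1}.Finite := by
  set f : ℕ → ℕ := fun k => Mmult lam m (s + k) with hf
  have hf1 : ∀ k : ℕ, f (k + 1) = Mmult lam m (s + k + 1) := by
    intro k
    simp only [hf]
    congr 1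
    push_cast
    ring
  have hstep' : ∀ k, f (k+1) ≤ f k ∧ f k ≤ f (k+1) + 1 := by
    intro k
    rw [hf1]
    exact hstep k
  have hK' : f K = 0 := hK
  have hseteq : {l : ℝ | (∃ k : ℕ, l = s + k) ∧ Mmult lam m l = Mmult lam m (l + 1) + 1}
      = (fun k : ℕ => s + (k : ℝ)) '' {k : ℕ | f k = f (k+1) + 1} := by
    ext l
    simp only [Set.mem_setOf_eq, Set.mem_image]
    constructor
    · rintro ⟨⟨k, rfl⟩, hdrop⟩
      exact ⟨k, by rw [hf1]; exact hdrop, rfl⟩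
    · rintro ⟨k, hk, rfl⟩
      rw [hf1] at hk
      exact ⟨⟨k, rfl⟩, hk⟩
  have hinj : Function.Injective (fun k : ℕ => s + (k : ℝ)) := by
    intro a b hab
    simp only at hab
    exact_mod_cast (by linarith : (a : ℝ) = b)
  have hset2 := aux_drop_set f hstep' K hK'
  have hkey := aux_drop_key f hstep' K
  have hf0 : f 0 = Mmult lam m s := by simp [hf]
  constructor
  · rw [hseteq, Set.ncard_image_of_injective _ hinj, hset2, Set.ncard_coe_finset]
    omega
  · rw [hseteq, hset2]
    exact Set.Finite.image _ (Finset.finite_toSet _)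

lemma front_ncard (lam : ℕ → ℕ) (m s0 : ℝ) (t : ℕ)
    (hstep : ∀ k : ℕ, k < t → Mmult lam m (s0 + k) ≤ Mmult lam m (s0 + k + 1) ∧
      Mmult lam m (s0 + k + 1) ≤ Mmult lam m (s0 + k) + 1) :
    Mmult lam m (s0 + t) +
        {l : ℝ | (∃ k : ℕ, k < t ∧ l = s0 + k) ∧
          Mmult lam m l = Mmult lam m (l + 1)}.ncard = t + Mmult lam m s0 ∧
      {l : ℝ | (∃ k : ℕ, k < t ∧ l = s0 + k) ∧
        Mmult lam m l = Mmult lam m (l + 1)}.Finite := by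
  set f : ℕ → ℕ := fun k => Mmult lam m (s0 + k) with hf
  have hf1 : ∀ k : ℕ, f (k + 1) = Mmult lam m (s0 + k + 1) := by
    intro k
    simp only [hf]
    congr 1
    push_cast
    ring
  have hstep' : ∀ k, k < t → f k ≤ f (k+1) ∧ f (k+1) ≤ f k + 1 := by
    intro k hk
    rw [hf1]
    exact hstep k hk
  have hseteq : {l : ℝ | (∃ k : ℕ, k < t ∧ l = s0 + k) ∧
        Mmult lam m l = Mmult lam m (l + 1)}
      = (fun k : ℕ => s0 + (k : ℝ)) '' ↑((Finset.range t).filter (fun k => f k = f (k+1))) := by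
    ext l
    simp only [Set.mem_setOf_eq, Set.mem_image, Finset.coe_filter, Finset.mem_range]
    constructor
    · rintro ⟨⟨k, hkt, rfl⟩, hflat⟩
      exact ⟨k, ⟨hkt, by rw [hf1]; exact hflat⟩, rfl⟩
    · rintro ⟨k, ⟨hkt, hk⟩, rfl⟩
      rw [hf1] at hk
      exact ⟨⟨k, hkt, rfl⟩, hk⟩
  have hinj : Function.Injective (fun k : ℕ => s0 + (k : ℝ)) := by
    intro a b hab
    simp only at hab
    exact_mod_cast (by linarith : (a : ℝ) = b)
  have hkey := aux_flat_key f t hstep' t le_rfl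
  have hf0 : f 0 = Mmult lam m s0 := by simp [hf]
  have hft : f t = Mmult lam m (s0 + t) := rfl
  constructor
  · rw [hseteq, Set.ncard_image_of_injective _ hinj, Set.ncard_coe_finset]
    omega
  · rw [hseteq]
    exact Set.Finite.image _ (Finset.finite_toSet _)

/-- for `m ≥ 0` with `2m ∈ ℤ` and a nonempty partition `lam` of `n`
whose `m`-tableau is residual, the number of positive jumps is
`M_1 + m - 1` if `m` is an integer `≥ 1`, `M_{1/2} + m - 1/2` if `m` is a
half-integer, and `M_1` if `m = 0`. -/
theorem stmt2 (n : ℕ) (hn : 1 ≤ n) (m : ℝ) (hm0 : 0 ≤ m)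
    (h2m : ∃ c : ℤ, 2 * m = (c : ℝ))
    (lam : ℕ → ℕ) (hlam : IsPartitionOf lam n) (hres : Residual lam m) :
    ((∃ c : ℤ, m = (c : ℝ)) → 1 ≤ m →
      (Set.ncard (Jpos lam m) : ℝ) = (Mmult lam m 1 : ℝ) + m - 1) ∧
    ((¬ ∃ c : ℤ, m = (c : ℝ)) →
      (Set.ncard (Jpos lam m) : ℝ) = (Mmult lam m (1/2) : ℝ) + m - 1/2) ∧
    (m = 0 → Set.ncard (Jpos lam m) = Mmult lam m 1) := by
  obtain ⟨B, hB⟩ := Mmult_vanish lam n hlam m hm0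
  refine ⟨?_, ?_, ?_⟩
  · -- integer case, m ≥ 1
    intro hint h1m
    obtain ⟨c, hc⟩ := hint
    have hc1 : 1 ≤ c := by
      have h1 : (1:ℝ) ≤ (c:ℝ) := by rw [← hc]; exact h1m
      exact_mod_cast h1
    set cm := c.toNat with hcmdef
    have hcm : ((cm : ℕ) : ℝ) = m := by
      rw [hc, hcmdef]
      exact_mod_cast Int.toNat_of_nonneg (by omega : (0:ℤ) ≤ c)
    have hcm1 : 1 ≤ cm := by omega
    -- tail
    have hstepT : ∀ k : ℕ, Mmult lam m (m + k + 1) ≤ Mmult lam m (m + k) ∧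
        Mmult lam m (m + k) ≤ Mmult lam m (m + k + 1) + 1 := by
      intro k
      have hk0 : (0:ℝ) ≤ (k:ℝ) := Nat.cast_nonneg k
      exact hres.1 (m + k) ⟨(k:ℤ), by push_cast; ring⟩ (by linarith) (by linarith)
    have hvanT : Mmult lam m (m + ((B+1 : ℕ) : ℝ)) = 0 := by
      apply hB
      push_cast
      linarith
    obtain ⟨htailcard, htailfin⟩ := tail_ncard lam m m hstepT (B+1) hvanT
    -- front
    have hstepF : ∀ k : ℕ, k < cm - 1 →
        Mmult lam m ((1:ℝ) + k) ≤ Mmult lam m ((1:ℝ) + k + 1) ∧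
        Mmult lam m ((1:ℝ) + k + 1) ≤ Mmult lam m ((1:ℝ) + k) + 1 := by
      intro k hk
      have hk0 : (0:ℝ) ≤ (k:ℝ) := Nat.cast_nonneg k
      have h2 : k + 2 ≤ cm := by omega
      have h2' : (k:ℝ) + 2 ≤ (cm:ℝ) := by exact_mod_cast h2
      exact hres.2.1 (1 + k) ⟨(k:ℤ) + 1 - c, by rw [hc]; push_cast; ring⟩
        (by linarith) (by linarith [hcm])
    obtain ⟨hfrontcard, hfrontfin⟩ := front_ncard lam m 1 (cm - 1) hstepF
    have hargF : (1:ℝ) + ((cm - 1 : ℕ) : ℝ) = m := by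
      rw [Nat.cast_sub hcm1]
      push_cast
      linarith [hcm]
    rw [hargF] at hfrontcard
    -- decomposition
    have hJ : Jpos lam m =
        {l : ℝ | (∃ k : ℕ, l = m + k) ∧ Mmult lam m l = Mmult lam m (l + 1) + 1} ∪
        {l : ℝ | (∃ k : ℕ, k < cm - 1 ∧ l = 1 + k) ∧
          Mmult lam m l = Mmult lam m (l + 1)} := by
      ext l
      simp only [Jpos, Set.mem_setOf_eq, Set.mem_union]
      constructor
      · rintro ⟨⟨c', hc'⟩, hl0, hcase⟩
        rcases hcase with ⟨hml, hdrop⟩ | ⟨hlm, hflat⟩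
        · left
          have hc'0 : 0 ≤ c' := by
            have h1 : (0:ℝ) ≤ (c':ℝ) := by rw [hc'] at hml; linarith
            exact_mod_cast h1
          refine ⟨⟨c'.toNat, ?_⟩, hdrop⟩
          rw [hc']
          congr 1
          exact_mod_cast (Int.toNat_of_nonneg hc'0).symm
        · right
          have hcR : (c':ℝ) ≤ -1 := by rw [hc'] at hlm; linarith
          have hc'le : c' ≤ -1 := by exact_mod_cast hcR
          have hlR : l = (c:ℝ) + c' := by rw [hc', hc]
          have hpos0 : 0 < c + c' := by
            have h1 : (0:ℝ) < ((c + c' : ℤ) : ℝ) := by push_cast; rw [← hlR]; exact hl0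
            exact_mod_cast h1
          refine ⟨⟨(c + c' - 1).toNat, by omega, ?_⟩, hflat⟩
          have hkZ : (((c + c' - 1).toNat : ℤ)) = c + c' - 1 :=
            Int.toNat_of_nonneg (by omega)
          have hkR : (((c + c' - 1).toNat : ℕ) : ℝ) = (c:ℝ) + c' - 1 := by
            exact_mod_cast hkZ
          rw [hlR, hkR]
          ring
      · rintro (⟨⟨k, rfl⟩, hdrop⟩ | ⟨⟨k, hk, rfl⟩, hflat⟩)
        · have hk0 : (0:ℝ) ≤ (k:ℝ) := Nat.cast_nonneg k
          exact ⟨⟨(k:ℤ), by push_cast; ring⟩, by linarith, Or.inl ⟨by linarith, hdrop⟩⟩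
        · have hk0 : (0:ℝ) ≤ (k:ℝ) := Nat.cast_nonneg k
          have h2 : k + 2 ≤ cm := by omega
          have h2' : (k:ℝ) + 2 ≤ (cm:ℝ) := by exact_mod_cast h2
          exact ⟨⟨(k:ℤ) + 1 - c, by rw [hc]; push_cast; ring⟩, by linarith,
            Or.inr ⟨by linarith [hcm], hflat⟩⟩
    have hdisj : Disjoint
        {l : ℝ | (∃ k : ℕ, l = m + k) ∧ Mmult lam m l = Mmult lam m (l + 1) + 1}
        {l : ℝ | (∃ k : ℕ, k < cm - 1 ∧ l = 1 + k) ∧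
          Mmult lam m l = Mmult lam m (l + 1)} := by
      rw [Set.disjoint_left]
      rintro l ⟨⟨k, rfl⟩, -⟩ ⟨⟨k', hk', hkeq⟩, -⟩
      have hk0 : (0:ℝ) ≤ (k:ℝ) := Nat.cast_nonneg k
      have h2 : k' + 2 ≤ cm := by omega
      have h2' : (k':ℝ) + 2 ≤ (cm:ℝ) := by exact_mod_cast h2
      linarith [hcm, hkeq, hk0]
    have hcard : (Jpos lam m).ncard = (cm - 1) + Mmult lam m 1 := by
      rw [hJ, Set.ncard_union_eq hdisj htailfin hfrontfin, htailcard]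
      omega
    rw [hcard, Nat.cast_add, Nat.cast_sub hcm1, Nat.cast_one, hcm]
    ring
  · -- half-integer case
    intro hnot
    obtain ⟨c2, hc2⟩ := h2m
    rcases Int.even_or_odd c2 with ⟨d, hd⟩ | ⟨d, hd⟩
    · exfalso
      apply hnot
      refine ⟨d, ?_⟩
      have hdR : (c2:ℝ) = (d:ℝ) + d := by exact_mod_cast congrArg (Int.cast : ℤ → ℝ) hd
      linarith [hc2]
    · have hdR : 2 * m = 2 * (d:ℝ) + 1 := by
        rw [hc2]
        exact_mod_cast congrArg (Int.cast : ℤ → ℝ) hd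
      have hmt : m = (d:ℝ) + 1/2 := by linarith
      have hd0 : 0 ≤ d := by
        by_contra hneg
        push_neg at hneg
        have h1 : d ≤ -1 := by omega
        have h1' : (d:ℝ) ≤ -1 := by exact_mod_cast h1
        linarith
      set t := d.toNat with htdef
      have htR : ((t:ℕ) : ℝ) = (d:ℝ) := by
        rw [htdef]
        exact_mod_cast Int.toNat_of_nonneg hd0
      have hmt' : m = (t:ℝ) + 1/2 := by rw [htR]; exact hmt
      have hm2 : (0:ℝ) < m := by rw [hmt']; positivity
      -- tail
      have hstepT : ∀ k : ℕ, Mmult lam m (m + k + 1) ≤ Mmult lam m (m + k) ∧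
          Mmult lam m (m + k) ≤ Mmult lam m (m + k + 1) + 1 := by
        intro k
        have hk0 : (0:ℝ) ≤ (k:ℝ) := Nat.cast_nonneg k
        exact hres.1 (m + k) ⟨(k:ℤ), by push_cast; ring⟩ (by linarith) (by linarith)
      have hvanT : Mmult lam m (m + ((B+1 : ℕ) : ℝ)) = 0 := by
        apply hB
        push_cast
        linarith
      obtain ⟨htailcard, htailfin⟩ := tail_ncard lam m m hstepT (B+1) hvanT
      -- front
      have hstepF : ∀ k : ℕ, k < t →
          Mmult lam m ((1/2:ℝ) + k) ≤ Mmult lam m ((1/2:ℝ) + k + 1) ∧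
          Mmult lam m ((1/2:ℝ) + k + 1) ≤ Mmult lam m ((1/2:ℝ) + k) + 1 := by
        intro k hk
        have hk0 : (0:ℝ) ≤ (k:ℝ) := Nat.cast_nonneg k
        have h2 : k + 1 ≤ t := by omega
        have h2' : (k:ℝ) + 1 ≤ (t:ℝ) := by exact_mod_cast h2
        exact hres.2.1 (1/2 + k) ⟨(k:ℤ) - d, by rw [hmt]; push_cast; ring⟩
          (by linarith) (by rw [hmt']; linarith)
      obtain ⟨hfrontcard, hfrontfin⟩ := front_ncard lam m (1/2) t hstepF
      have hargF : (1/2:ℝ) + ((t:ℕ) : ℝ) = m := by rw [hmt']; ring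
      rw [hargF] at hfrontcard
      -- decomposition
      have hJ : Jpos lam m =
          {l : ℝ | (∃ k : ℕ, l = m + k) ∧ Mmult lam m l = Mmult lam m (l + 1) + 1} ∪
          {l : ℝ | (∃ k : ℕ, k < t ∧ l = 1/2 + k) ∧
            Mmult lam m l = Mmult lam m (l + 1)} := by
        ext l
        simp only [Jpos, Set.mem_setOf_eq, Set.mem_union]
        constructor
        · rintro ⟨⟨c', hc'⟩, hl0, hcase⟩
          rcases hcase with ⟨hml, hdrop⟩ | ⟨hlm, hflat⟩
          · left
            have hc'0 : 0 ≤ c' := by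
              have h1 : (0:ℝ) ≤ (c':ℝ) := by rw [hc'] at hml; linarith
              exact_mod_cast h1
            refine ⟨⟨c'.toNat, ?_⟩, hdrop⟩
            rw [hc']
            congr 1
            exact_mod_cast (Int.toNat_of_nonneg hc'0).symm
          · right
            have hcR : (c':ℝ) ≤ -1 := by rw [hc'] at hlm; linarith
            have hc'le : c' ≤ -1 := by exact_mod_cast hcR
            have hlR : l = (d:ℝ) + c' + 1/2 := by rw [hc', hmt]; ring
            have hpos0 : 0 ≤ d + c' := by
              by_contra hzn
              push_neg at hzn
              have h1 : d + c' ≤ -1 := by omega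
              have h1' : ((d + c' : ℤ):ℝ) ≤ -1 := by exact_mod_cast h1
              push_cast at h1'
              linarith
            refine ⟨⟨(d + c').toNat, by omega, ?_⟩, hflat⟩
            have hkZ : (((d + c').toNat : ℤ)) = d + c' := Int.toNat_of_nonneg hpos0
            have hkR : (((d + c').toNat : ℕ) : ℝ) = (d:ℝ) + c' := by exact_mod_cast hkZ
            rw [hlR, hkR]
            ring
        · rintro (⟨⟨k, rfl⟩, hdrop⟩ | ⟨⟨k, hk, rfl⟩, hflat⟩)
          · have hk0 : (0:ℝ) ≤ (k:ℝ) := Nat.cast_nonneg k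
            exact ⟨⟨(k:ℤ), by push_cast; ring⟩, by linarith, Or.inl ⟨by linarith, hdrop⟩⟩
          · have hk0 : (0:ℝ) ≤ (k:ℝ) := Nat.cast_nonneg k
            have h2 : k + 1 ≤ t := by omega
            have h2' : (k:ℝ) + 1 ≤ (t:ℝ) := by exact_mod_cast h2
            exact ⟨⟨(k:ℤ) - d, by rw [hmt]; push_cast; ring⟩, by linarith,
              Or.inr ⟨by rw [hmt']; linarith, hflat⟩⟩
      have hdisj : Disjoint
          {l : ℝ | (∃ k : ℕ, l = m + k) ∧ Mmult lam m l = Mmult lam m (l + 1) + 1}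
          {l : ℝ | (∃ k : ℕ, k < t ∧ l = 1/2 + k) ∧
            Mmult lam m l = Mmult lam m (l + 1)} := by
        rw [Set.disjoint_left]
        rintro l ⟨⟨k, rfl⟩, -⟩ ⟨⟨k', hk', hkeq⟩, -⟩
        have hk0 : (0:ℝ) ≤ (k:ℝ) := Nat.cast_nonneg k
        have h2 : k' + 1 ≤ t := by omega
        have h2' : (k':ℝ) + 1 ≤ (t:ℝ) := by exact_mod_cast h2
        rw [hmt'] at hkeq
        linarith [hkeq]
      have hcard : (Jpos lam m).ncard = t + Mmult lam m (1/2) := by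
        rw [hJ, Set.ncard_union_eq hdisj htailfin hfrontfin, htailcard]
        omega
      rw [hcard, Nat.cast_add, hmt']
      ring
  · -- m = 0 case
    intro hm
    subst hm
    have hstepT : ∀ k : ℕ, Mmult lam 0 ((1:ℝ) + k + 1) ≤ Mmult lam 0 ((1:ℝ) + k) ∧
        Mmult lam 0 ((1:ℝ) + k) ≤ Mmult lam 0 ((1:ℝ) + k + 1) + 1 := by
      intro k
      have hk0 : (0:ℝ) ≤ (k:ℝ) := Nat.cast_nonneg k
      exact hres.1 (1 + k) ⟨(k:ℤ) + 1, by push_cast; ring⟩ (by linarith) (by linarith)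
    have hvanT : Mmult lam 0 ((1:ℝ) + ((B : ℕ) : ℝ)) = 0 := by
      apply hB
      linarith
    obtain ⟨htailcard, htailfin⟩ := tail_ncard lam 0 1 hstepT B hvanT
    have hJ : Jpos lam 0 =
        {l : ℝ | (∃ k : ℕ, l = 1 + k) ∧ Mmult lam 0 l = Mmult lam 0 (l + 1) + 1} := by
      ext l
      simp only [Jpos, Set.mem_setOf_eq]
      constructor
      · rintro ⟨⟨c', hc'⟩, hl0, hcase⟩
        rcases hcase with ⟨-, hdrop⟩ | ⟨hlm, -⟩
        · have hlR : l = (c':ℝ) := by rw [hc']; ring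
          have h1c : 1 ≤ c' := by
            have h1 : (0:ℝ) < (c':ℝ) := by rw [← hlR]; exact hl0
            have h2 : 0 < c' := by exact_mod_cast h1
            omega
          refine ⟨⟨(c' - 1).toNat, ?_⟩, hdrop⟩
          have hkZ : (((c' - 1).toNat : ℤ)) = c' - 1 := Int.toNat_of_nonneg (by omega)
          have hkR : (((c' - 1).toNat : ℕ) : ℝ) = (c':ℝ) - 1 := by exact_mod_cast hkZ
          rw [hlR, hkR]
          ring
        · exfalso
          linarith
      · rintro ⟨⟨k, rfl⟩, hdrop⟩
        have hk0 : (0:ℝ) ≤ (k:ℝ) := Nat.cast_nonneg k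
        exact ⟨⟨(k:ℤ) + 1, by push_cast; ring⟩, by linarith, Or.inl ⟨by linarith, hdrop⟩⟩
    rw [hJ]
    exact htailcard
end

section
/- Let m ≥ 0 with 2m ∈ ℤ and let λ be a nonempty partition of n whose m-tableau T_m(λ) is residual. Then for every value x occurring as an entry of T_m(λ): x belongs to the full jump set J if and only if x occurs in the multiset of extremities of T_m(λ). -/
open scoped Classical

/-- The full jump set `J`: the positive jumps together with one extra element
(`0` when `m ∈ ℤ`, `-1/2` otherwise, i.e. `m - ⌈m⌉`), added exactly when
`|J⁺| ≢ ⌈m⌉ (mod 2)`. -/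
noncomputable def Jfull (lam : ℕ → ℕ) (m : ℝ) : Set ℝ :=
  if (Set.ncard (Jpos lam m) : ℤ) % 2 = ⌈m⌉ % 2 then Jpos lam m
  else insert (m - (⌈m⌉ : ℝ)) (Jpos lam m)

/-- The conjugate partition: `conj lam j` is the number of rows `i` with
`lam i ≥ j`, i.e. the length of the (1-indexed) `j`-th column. -/
noncomputable def conj (lam : ℕ → ℕ) (j : ℕ) : ℕ :=
  Set.ncard {i : ℕ | j ≤ lam i}

/-- The multiplicity of the value `x` in the multiset of extremities of
`T_m(λ)`: each nonempty (1-indexed) row `i` with `i - λ_i + m ≤ 0` contributes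
the entry `λ_i - i - m` of its last box, and each nonempty (1-indexed) column
`j` with `λ'_j - j + m ≥ 0` contributes the entry `λ'_j - j + m` of its last
box.  (Rows/columns are 0-indexed here, whence the `+ 1`'s.) -/
noncomputable def extMult (lam : ℕ → ℕ) (m : ℝ) (x : ℝ) : ℕ :=
  Set.ncard {i : ℕ | 0 < lam i ∧ ((i : ℝ) + 1) - lam i + m ≤ 0 ∧
      (lam i : ℝ) - ((i : ℝ) + 1) - m = x} +
  Set.ncard {j : ℕ | 0 < conj lam (j + 1) ∧
      0 ≤ (conj lam (j + 1) : ℝ) - ((j : ℝ) + 1) + m ∧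
      (conj lam (j + 1) : ℝ) - ((j : ℝ) + 1) + m = x}

set_option linter.unusedSectionVars false
set_option linter.unusedVariables false
set_option linter.unusedTactic false
set_option linter.unreachableTactic false
set_option maxHeartbeats 1000000

namespace S3

/-- membership in a finite downward-closed subset of ℕ -/
lemma mem_iff_lt_ncard {S : Set ℕ} (hfin : S.Finite)
    (hdc : ∀ a b : ℕ, a ≤ b → b ∈ S → a ∈ S) (i : ℕ) : i ∈ S ↔ i < S.ncard := by
  constructor
  · intro hi
    have hsub : Set.Iic i ⊆ S := fun a ha => hdc a i ha hi
    have : (Set.Iic i).ncard ≤ S.ncard := Set.ncard_le_ncard hsub hfin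
    have hIic : (Set.Iic i).ncard = i + 1 := by
      rw [← Nat.card_coe_set_eq, Nat.card_eq_card_toFinset]
      simp [Set.toFinset_Iic]
    omega
  · intro hi
    by_contra hns
    have hsub : S ⊆ Set.Iio i := by
      intro b hb
      by_contra hbi
      exact hns (hdc i b (le_of_not_gt (by simpa using hbi)) hb)
    have : S.ncard ≤ (Set.Iio i).ncard := Set.ncard_le_ncard hsub (Set.finite_Iio i)
    have hIio : (Set.Iio i).ncard = i := by
      rw [← Nat.card_coe_set_eq, Nat.card_eq_card_toFinset]
      simp [Set.toFinset_Iio]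
    omega

end S3
namespace S3

def F (lam : ℕ → ℕ) (i : ℕ) : ℤ := (lam i : ℤ) - i

noncomputable def G (lam : ℕ → ℕ) (j : ℕ) : ℤ := (conj lam (j+1) : ℤ) - j

noncomputable def NN (lam : ℕ → ℕ) (c : ℤ) : ℕ :=
  Set.ncard {p : ℕ × ℕ | p.2 < lam p.1 ∧ (p.2 : ℤ) - (p.1 : ℤ) = c}

section Part

variable {lam : ℕ → ℕ} {N₀ : ℕ}
variable (hA : Antitone lam) (hN₀ : ∀ i, N₀ ≤ i → lam i = 0)

include hA hN₀ in
lemma lt_conj_iff (j i : ℕ) : i < conj lam (j+1) ↔ j + 1 ≤ lam i := by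
  have hfin : ({i : ℕ | j + 1 ≤ lam i}).Finite := by
    apply Set.Finite.subset (Set.finite_Iio N₀)
    intro a ha
    simp only [Set.mem_setOf_eq] at ha
    simp only [Set.mem_Iio]
    by_contra h
    have := hN₀ a (le_of_not_gt h)
    omega
  have hdc : ∀ a b : ℕ, a ≤ b → b ∈ {i : ℕ | j + 1 ≤ lam i} → a ∈ {i : ℕ | j + 1 ≤ lam i} := by
    intro a b hab hb
    simp only [Set.mem_setOf_eq] at *
    exact le_trans hb (hA hab)
  have := mem_iff_lt_ncard hfin hdc i
  simp only [Set.mem_setOf_eq] at this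
  rw [conj]
  omega

lemma F_strictAnti (hA : Antitone lam) : StrictAnti (F lam) := by
  apply strictAnti_nat_of_succ_lt
  intro i
  have : lam (i+1) ≤ lam i := hA (Nat.le_succ i)
  simp only [F]
  push_cast
  omega

include hA hN₀ in
lemma G_strictAnti : StrictAnti (G lam) := by
  apply strictAnti_nat_of_succ_lt
  intro j
  have h1 : conj lam (j+2) ≤ conj lam (j+1) := by
    by_contra h
    push_neg at h
    have h2 : conj lam (j+1) < conj lam (j+2) := h
    have := (lt_conj_iff hA hN₀ (j+1) (conj lam (j+1))).mp h2
    have := (lt_conj_iff hA hN₀ j (conj lam (j+1))).not.mp (lt_irrefl _)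
    omega
  simp only [G]
  have : (j:ℕ) + 1 + 1 = j + 2 := rfl
  rw [this]
  push_cast
  omega

include hN₀ in
lemma finite_F {c : ℤ} (hc : 0 ≤ c) : ({i : ℕ | c < F lam i}).Finite := by
  apply Set.Finite.subset (Set.finite_Iio N₀)
  intro a ha
  simp only [Set.mem_setOf_eq, F] at ha
  simp only [Set.mem_Iio]
  by_contra h
  have := hN₀ a (le_of_not_gt h)
  omega

include hA hN₀ in
lemma finite_G {k : ℤ} (hk : 0 ≤ k) : ({j : ℕ | k < G lam j}).Finite := by
  apply Set.Finite.subset (Set.finite_Iio (lam 0))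
  intro a ha
  simp only [Set.mem_setOf_eq, G] at ha
  simp only [Set.mem_Iio]
  have h1 : 0 < conj lam (a+1) := by omega
  have h2 := (lt_conj_iff hA hN₀ a 0).mp h1
  omega

include hA hN₀ in
lemma NN_eq_F {c : ℤ} (hc : 0 ≤ c) : NN lam c = Set.ncard {i : ℕ | c < F lam i} := by
  have himg : {p : ℕ × ℕ | p.2 < lam p.1 ∧ (p.2 : ℤ) - (p.1 : ℤ) = c}
      = (fun i : ℕ => (i, (c + (i:ℤ)).toNat)) '' {i : ℕ | c < F lam i} := by
    ext ⟨i, j⟩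
    simp only [Set.mem_setOf_eq, Set.mem_image, F, Prod.mk.injEq]
    constructor
    · rintro ⟨h1, h2⟩
      exact ⟨i, by omega, rfl, by omega⟩
    · rintro ⟨a, ha, rfl, rfl⟩
      constructor
      · omega
      · omega
  rw [NN, himg, Set.ncard_image_of_injective]
  intro a b hab
  exact (Prod.mk.injEq _ _ _ _).mp hab |>.1

include hA hN₀ in
lemma NN_eq_G {c : ℤ} (hc : c ≤ 0) : NN lam c = Set.ncard {j : ℕ | -c < G lam j} := by
  have himg : {p : ℕ × ℕ | p.2 < lam p.1 ∧ (p.2 : ℤ) - (p.1 : ℤ) = c}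
      = (fun j : ℕ => (((j : ℤ) - c).toNat, j)) '' {j : ℕ | -c < G lam j} := by
    ext ⟨i, j⟩
    simp only [Set.mem_setOf_eq, Set.mem_image, G, Prod.mk.injEq]
    constructor
    · rintro ⟨h1, h2⟩
      refine ⟨j, ?_, by omega, rfl⟩
      have := (lt_conj_iff hA hN₀ j i).mpr h1
      omega
    · rintro ⟨a, ha, rfl, rfl⟩
      have hia : ((a : ℤ) - c).toNat < conj lam (a+1) := by omega
      have := (lt_conj_iff hA hN₀ a (((a : ℤ) - c).toNat)).mp hia
      constructor
      · omega
      · omega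
  rw [NN, himg, Set.ncard_image_of_injective]
  intro a b hab
  exact (Prod.mk.injEq _ _ _ _).mp hab |>.2

def E (lam : ℕ → ℕ) (c : ℤ) : Prop := ∃ i, F lam i = c

noncomputable def D (lam : ℕ → ℕ) (k : ℤ) : Prop := ∃ j, G lam j = k

include hA hN₀ in
lemma NN_step_F {c : ℤ} (hc : 1 ≤ c) :
    NN lam (c-1) = NN lam c + (if E lam c then 1 else 0) := by
  classical
  rw [NN_eq_F hA hN₀ (by omega : (0:ℤ) ≤ c - 1), NN_eq_F hA hN₀ (by omega : (0:ℤ) ≤ c)]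
  have hsplit : {i : ℕ | c - 1 < F lam i} = {i : ℕ | c < F lam i} ∪ {i : ℕ | F lam i = c} := by
    ext i; simp only [Set.mem_setOf_eq, Set.mem_union]; omega
  have hdisj : Disjoint {i : ℕ | c < F lam i} {i : ℕ | F lam i = c} := by
    rw [Set.disjoint_left]; intro a ha hb
    simp only [Set.mem_setOf_eq] at *; omega
  have hfin1 : ({i : ℕ | c < F lam i}).Finite := finite_F hN₀ (by omega)
  have hfin2 : ({i : ℕ | F lam i = c}).Finite := by
    apply Set.Finite.subset (finite_F hN₀ (c := c - 1) (by omega))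
    intro a ha; simp only [Set.mem_setOf_eq] at *; omega
  rw [hsplit, Set.ncard_union_eq hdisj hfin1 hfin2]
  congr 1
  by_cases hE : E lam c
  · obtain ⟨i₀, hi₀⟩ := hE
    have : {i : ℕ | F lam i = c} = {i₀} := by
      ext a; simp only [Set.mem_setOf_eq, Set.mem_singleton_iff]
      constructor
      · intro ha; exact (F_strictAnti hA).injective (by rw [ha, hi₀])
      · intro ha; rw [ha, hi₀]
    rw [this, Set.ncard_singleton, if_pos]
    exact ⟨i₀, hi₀⟩
  · have : {i : ℕ | F lam i = c} = ∅ := by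
      ext a; simp only [Set.mem_setOf_eq, Set.mem_empty_iff_false, iff_false]
      intro ha; exact hE ⟨a, ha⟩
    simp [this, hE]

include hA hN₀ in
lemma NN_step_G {c : ℤ} (hc : c ≤ 0) :
    NN lam c = NN lam (c-1) + (if D lam (1-c) then 1 else 0) := by
  classical
  rw [NN_eq_G hA hN₀ hc, NN_eq_G hA hN₀ (by omega : c - 1 ≤ 0)]
  have hsplit : {j : ℕ | -c < G lam j} = {j : ℕ | -(c-1) < G lam j} ∪ {j : ℕ | G lam j = 1 - c} := by
    ext j; simp only [Set.mem_setOf_eq, Set.mem_union]; omega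
  have hdisj : Disjoint {j : ℕ | -(c-1) < G lam j} {j : ℕ | G lam j = 1 - c} := by
    rw [Set.disjoint_left]; intro a ha hb
    simp only [Set.mem_setOf_eq] at *; omega
  have hfin1 : ({j : ℕ | -(c-1) < G lam j}).Finite := finite_G hA hN₀ (by omega)
  have hfin2 : ({j : ℕ | G lam j = 1 - c}).Finite := by
    apply Set.Finite.subset (finite_G hA hN₀ (k := -c) (by omega))
    intro a ha; simp only [Set.mem_setOf_eq] at *; omega
  rw [hsplit, Set.ncard_union_eq hdisj hfin1 hfin2]
  congr 1
  by_cases hD : D lam (1-c)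
  · obtain ⟨j₀, hj₀⟩ := hD
    have : {j : ℕ | G lam j = 1-c} = {j₀} := by
      ext a; simp only [Set.mem_setOf_eq, Set.mem_singleton_iff]
      constructor
      · intro ha; exact (G_strictAnti hA hN₀).injective (by rw [ha, hj₀])
      · intro ha; rw [ha, hj₀]
    rw [this, Set.ncard_singleton, if_pos]
    exact ⟨j₀, hj₀⟩
  · have : {j : ℕ | G lam j = 1-c} = ∅ := by
      ext a; simp only [Set.mem_setOf_eq, Set.mem_empty_iff_false, iff_false]
      intro ha; exact hD ⟨a, ha⟩
    simp [this, hD]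

include hA hN₀ in
lemma NN_anti {a b : ℤ} (ha : 0 ≤ a) (hab : a ≤ b) : NN lam b ≤ NN lam a := by
  rw [NN_eq_F hA hN₀ ha, NN_eq_F hA hN₀ (le_trans ha hab)]
  apply Set.ncard_le_ncard _ (finite_F hN₀ ha)
  intro i hi; simp only [Set.mem_setOf_eq] at *; omega

include hA hN₀ in
lemma F_mem_iff {c : ℤ} (hc : 0 ≤ c) (i : ℕ) : c < F lam i ↔ i < NN lam c := by
  rw [NN_eq_F hA hN₀ hc]
  have hdc : ∀ a b : ℕ, a ≤ b → b ∈ {i : ℕ | c < F lam i} → a ∈ {i : ℕ | c < F lam i} := by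
    intro a b hab hb
    simp only [Set.mem_setOf_eq] at *
    exact lt_of_lt_of_le hb ((F_strictAnti hA).antitone hab)
  have := mem_iff_lt_ncard (finite_F hN₀ hc) hdc i
  simpa using this

include hA hN₀ in
lemma notE_of_eq {c : ℤ} (hc : 1 ≤ c) (heq : NN lam (c-1) = NN lam c) : ¬ E lam c := by
  have := NN_step_F hA hN₀ hc
  by_cases hE : E lam c
  · rw [if_pos hE] at this; omega
  · exact hE

include hA hN₀ in
lemma eq_of_notE {c : ℤ} (hc : 1 ≤ c) (hE : ¬ E lam c) : NN lam (c-1) = NN lam c := by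
  have := NN_step_F hA hN₀ hc
  rw [if_neg hE] at this; omega

include hA hN₀ in
lemma succ_of_E {c : ℤ} (hc : 1 ≤ c) (hE : E lam c) : NN lam (c-1) = NN lam c + 1 := by
  have := NN_step_F hA hN₀ hc
  rw [if_pos hE] at this; omega

include hA hN₀ in
lemma eqG_of_notD {c : ℤ} (hc : c ≤ 0) (hD : ¬ D lam (1-c)) : NN lam c = NN lam (c-1) := by
  have := NN_step_G hA hN₀ hc
  rw [if_neg hD] at this; omega

include hA hN₀ in
lemma succG_of_D {c : ℤ} (hc : c ≤ 0) (hD : D lam (1-c)) : NN lam c = NN lam (c-1) + 1 := by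
  have := NN_step_G hA hN₀ hc
  rw [if_pos hD] at this; omega

include hA hN₀ in
lemma colEnd_iff {c : ℤ} (hc : 1 ≤ c) (hNN : 1 ≤ NN lam c) :
    (∃ j, 1 ≤ conj lam (j+1) ∧ G lam j = 1 - c) ↔ NN lam (c-1) = NN lam c := by
  constructor
  · rintro ⟨j, h1, h2⟩
    set q := conj lam (j+1) with hq
    have hqj : (q : ℤ) = 1 - c + j := by simp only [G] at h2; omega
    have hjc : c ≤ (j : ℤ) := by omega
    have hlam1 : j + 1 ≤ lam (q-1) := (lt_conj_iff hA hN₀ j (q-1)).mp (by omega)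
    have hlam2 : lam q ≤ j := by
      have := (lt_conj_iff hA hN₀ j q).not.mp (lt_irrefl q)
      omega
    have hF1 : c < F lam (q-1) := by
      simp only [F]
      have : ((q:ℤ) - 1).toNat = q - 1 := by omega
      push_cast
      omega
    have hF2 : F lam q ≤ c - 1 := by simp only [F]; omega
    have hNNq : NN lam c = q := by
      have ha := (F_mem_iff hA hN₀ (by omega : (0:ℤ) ≤ c) (q-1)).mp hF1
      have hb := (F_mem_iff hA hN₀ (by omega : (0:ℤ) ≤ c) q).not.mp (by omega)
      omega
    apply eq_of_notE hA hN₀ hc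
    rintro ⟨i, hi⟩
    have hiq : q - 1 < i := by
      by_contra h
      have := (F_strictAnti hA).antitone (le_of_not_gt h : i ≤ q - 1)
      omega
    have : F lam i ≤ F lam q := (F_strictAnti hA).antitone (by omega)
    omega
  · intro heq
    have hnE : ¬ E lam c := notE_of_eq hA hN₀ hc heq
    set r := NN lam c with hr
    have hF1 : c < F lam (r-1) := (F_mem_iff hA hN₀ (by omega) (r-1)).mpr (by omega)
    have hF2 : F lam r ≤ c := by
      have := (F_mem_iff hA hN₀ (by omega : (0:ℤ) ≤ c) r).not.mpr (by omega)
      omega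
    have hF2' : F lam r ≤ c - 1 := by
      rcases lt_or_eq_of_le hF2 with h | h
      · omega
      · exact absurd ⟨r, h⟩ hnE
    refine ⟨r - 1 + c.toNat, ?_, ?_⟩
    · have hconj : r - 1 < conj lam (r - 1 + c.toNat + 1) := by
        apply (lt_conj_iff hA hN₀ _ _).mpr
        simp only [F] at hF1
        omega
      omega
    · have hconj1 : r - 1 < conj lam (r - 1 + c.toNat + 1) := by
        apply (lt_conj_iff hA hN₀ _ _).mpr
        simp only [F] at hF1
        omega
      have hconj2 : conj lam (r - 1 + c.toNat + 1) ≤ r := by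
        by_contra h
        push_neg at h
        have := (lt_conj_iff hA hN₀ (r - 1 + c.toNat) r).mp h
        simp only [F] at hF2'
        omega
      simp only [G]
      omega

include hA hN₀ in
lemma finite_sub_box {S : Set (ℕ × ℕ)} (h : ∀ p ∈ S, p.2 < lam p.1) : S.Finite := by
  apply Set.Finite.subset ((Set.finite_Iio N₀).prod (Set.finite_Iio (lam 0)))
  intro p hp
  have h1 := h p hp
  constructor
  · simp only [Set.mem_Iio]
    by_contra hc
    have := hN₀ p.1 (le_of_not_gt hc)
    omega
  · simp only [Set.mem_Iio]
    have := hA (Nat.zero_le p.1)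
    omega

variable {m : ℝ}

include hA hN₀ in
lemma Mmult_split {x : ℝ} (hx : 0 < x) {a b : ℤ} (haa : (a:ℝ) = m - x) (hbb : (b:ℝ) = m + x) :
    Mmult lam m x = NN lam a + NN lam b := by
  have hab : a ≠ b := by
    intro h
    rw [h] at haa
    rw [haa] at hbb
    linarith
  have hsplit : {p : ℕ × ℕ | p.2 < lam p.1 ∧ |(p.1 : ℝ) - (p.2 : ℝ) + m| = x}
      = {p : ℕ × ℕ | p.2 < lam p.1 ∧ (p.2 : ℤ) - (p.1 : ℤ) = a}
        ∪ {p : ℕ × ℕ | p.2 < lam p.1 ∧ (p.2 : ℤ) - (p.1 : ℤ) = b} := by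
    ext ⟨i, j⟩
    simp only [Set.mem_setOf_eq, Set.mem_union]
    constructor
    · rintro ⟨h1, h2⟩
      rcases (abs_eq (le_of_lt hx)).mp h2 with h3 | h3
      · left
        refine ⟨h1, ?_⟩
        have : ((j : ℤ) - (i : ℤ) : ℝ) = (a : ℝ) := by push_cast; linarith
        exact_mod_cast this
      · right
        refine ⟨h1, ?_⟩
        have : ((j : ℤ) - (i : ℤ) : ℝ) = (b : ℝ) := by push_cast; linarith
        exact_mod_cast this
    · rintro (⟨h1, h2⟩ | ⟨h1, h2⟩)
      · refine ⟨h1, ?_⟩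
        have : ((j : ℤ) - (i : ℤ) : ℝ) = (a : ℝ) := by exact_mod_cast congrArg (Int.cast : ℤ → ℝ) h2
        rw [abs_eq (le_of_lt hx)]
        left
        push_cast at this
        linarith
      · refine ⟨h1, ?_⟩
        have : ((j : ℤ) - (i : ℤ) : ℝ) = (b : ℝ) := by exact_mod_cast congrArg (Int.cast : ℤ → ℝ) h2
        rw [abs_eq (le_of_lt hx)]
        right
        push_cast at this
        linarith
  have hdisj : Disjoint {p : ℕ × ℕ | p.2 < lam p.1 ∧ (p.2 : ℤ) - (p.1 : ℤ) = a}
      {p : ℕ × ℕ | p.2 < lam p.1 ∧ (p.2 : ℤ) - (p.1 : ℤ) = b} := by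
    rw [Set.disjoint_left]
    rintro p ⟨_, h1⟩ ⟨_, h2⟩
    exact hab (h1 ▸ h2 ▸ rfl)
  rw [Mmult, hsplit, Set.ncard_union_eq hdisj
    (finite_sub_box hA hN₀ (fun p hp => hp.1)) (finite_sub_box hA hN₀ (fun p hp => hp.1))]
  rfl

include hA hN₀ in
lemma Mmult_zero {mi : ℤ} (hmi : (mi:ℝ) = m) : Mmult lam m 0 = NN lam mi := by
  rw [Mmult, NN]
  congr 1
  ext ⟨i, j⟩
  simp only [Set.mem_setOf_eq, abs_eq_zero]
  constructor
  · rintro ⟨h1, h2⟩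
    refine ⟨h1, ?_⟩
    have : ((j : ℤ) - (i : ℤ) : ℝ) = (mi : ℝ) := by push_cast; linarith
    exact_mod_cast this
  · rintro ⟨h1, h2⟩
    refine ⟨h1, ?_⟩
    have : ((j : ℤ) - (i : ℤ) : ℝ) = (mi : ℝ) := by exact_mod_cast congrArg (Int.cast : ℤ → ℝ) h2
    push_cast at this
    linarith

include hA hN₀ in
lemma ext_iff {x : ℝ} (hx : 0 ≤ x) (hm0 : 0 ≤ m) {k k' : ℤ}
    (hk : (k:ℝ) = x + m + 1) (hk' : (k':ℝ) = x - m + 1) :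
    (1 ≤ extMult lam m x ↔ E lam k ∨ (∃ j, 1 ≤ conj lam (j+1) ∧ G lam j = k')) := by
  have hk1 : 1 ≤ k := by
    have : (1:ℝ) ≤ (k:ℝ) := by rw [hk]; linarith
    exact_mod_cast this
  have hS1 : {i : ℕ | 0 < lam i ∧ ((i : ℝ) + 1) - lam i + m ≤ 0 ∧
      (lam i : ℝ) - ((i : ℝ) + 1) - m = x} = {i : ℕ | F lam i = k} := by
    ext i
    simp only [Set.mem_setOf_eq]
    constructor
    · rintro ⟨h1, h2, h3⟩
      have : ((F lam i : ℤ) : ℝ) = (k : ℝ) := by simp only [F]; push_cast; linarith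
      exact_mod_cast this
    · intro h
      have hcast : ((F lam i : ℤ) : ℝ) = (k : ℝ) := by exact_mod_cast congrArg (Int.cast : ℤ → ℝ) h
      simp only [F] at hcast h
      push_cast at hcast
      have hl : 0 < lam i := by
        have : (1:ℤ) ≤ (lam i : ℤ) - i := by omega
        omega
      refine ⟨hl, by linarith, by linarith⟩
  have hS2 : {j : ℕ | 0 < conj lam (j + 1) ∧
      0 ≤ (conj lam (j + 1) : ℝ) - ((j : ℝ) + 1) + m ∧
      (conj lam (j + 1) : ℝ) - ((j : ℝ) + 1) + m = x}
      = {j : ℕ | 1 ≤ conj lam (j+1) ∧ G lam j = k'} := by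
    ext j
    simp only [Set.mem_setOf_eq]
    constructor
    · rintro ⟨h1, h2, h3⟩
      refine ⟨h1, ?_⟩
      have : ((G lam j : ℤ) : ℝ) = (k' : ℝ) := by simp only [G]; push_cast; linarith
      exact_mod_cast this
    · rintro ⟨h1, h2⟩
      have hcast : ((G lam j : ℤ) : ℝ) = (k' : ℝ) := by exact_mod_cast congrArg (Int.cast : ℤ → ℝ) h2
      simp only [G] at hcast
      push_cast at hcast
      exact ⟨h1, by linarith, by linarith⟩
  rw [extMult, hS1, hS2]
  have hfin1 : ({i : ℕ | F lam i = k}).Finite := by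
    apply Set.Finite.subset (finite_F hN₀ (c := k - 1) (by omega))
    intro a ha
    simp only [Set.mem_setOf_eq] at *
    omega
  have hfin2 : ({j : ℕ | 1 ≤ conj lam (j+1) ∧ G lam j = k'}).Finite := by
    apply Set.Finite.subset (Set.finite_Iio (lam 0))
    rintro a ⟨ha, _⟩
    simp only [Set.mem_Iio]
    have := (lt_conj_iff hA hN₀ a 0).mp ha
    omega
  constructor
  · intro h
    rcases Nat.lt_or_ge 0 ({i : ℕ | F lam i = k}).ncard with h1 | h1
    · left
      obtain ⟨i, hi⟩ := Set.nonempty_of_ncard_ne_zero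
        (s := {i : ℕ | F lam i = k}) (by omega)
      exact ⟨i, hi⟩
    · right
      have h2 : 0 < ({j : ℕ | 1 ≤ conj lam (j+1) ∧ G lam j = k'}).ncard := by omega
      obtain ⟨j, hj⟩ := Set.nonempty_of_ncard_ne_zero
        (s := {j : ℕ | 1 ≤ conj lam (j+1) ∧ G lam j = k'}) (by omega)
      exact ⟨j, hj.1, hj.2⟩
  · rintro (⟨i, hi⟩ | ⟨j, hj1, hj2⟩)
    · have : 0 < ({i : ℕ | F lam i = k}).ncard :=
        (Set.ncard_pos hfin1).mpr ⟨i, hi⟩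
      omega
    · have : 0 < ({j : ℕ | 1 ≤ conj lam (j+1) ∧ G lam j = k'}).ncard :=
        (Set.ncard_pos hfin2).mpr ⟨j, hj1, hj2⟩
      omega

variable (hm0 : 0 ≤ m) {c₀ : ℤ} (hc₀ : 2 * m = (c₀ : ℝ)) (hres : Residual lam m)

include hA hN₀ hm0 hc₀ in
lemma M_formula (d : ℤ) (hx : 0 < m + (d:ℝ)) :
    Mmult lam m (m + (d:ℝ)) = NN lam (-d) + NN lam (c₀ + d) := by
  apply Mmult_split hA hN₀ hx
  · push_cast; linarith
  · push_cast; linarith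

include hA hN₀ hm0 hc₀ hres in
lemma highIff (d : ℤ) (hd : 0 ≤ d) (hx : 0 < m + (d:ℝ)) :
    (Mmult lam m (m + (d:ℝ)) = Mmult lam m ((m + (d:ℝ)) + 1) + 1)
      ↔ 1 ≤ extMult lam m (m + (d:ℝ)) := by
  classical
  have hc₀0 : 0 ≤ c₀ := by
    have : (0:ℝ) ≤ (c₀:ℝ) := by linarith
    exact_mod_cast this
  have hdr : (0:ℝ) ≤ (d:ℝ) := by exact_mod_cast hd
  have h1 : Mmult lam m (m + (d:ℝ)) = NN lam (-d) + NN lam (c₀ + d) :=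
    M_formula hA hN₀ hm0 hc₀ d hx
  have heq : (m + (d:ℝ)) + 1 = m + ((d+1 : ℤ):ℝ) := by push_cast; ring
  have h2 : Mmult lam m ((m + (d:ℝ)) + 1) = NN lam (-(d+1)) + NN lam (c₀ + (d+1)) := by
    rw [heq]; exact M_formula hA hN₀ hm0 hc₀ (d+1) (by push_cast; linarith)
  have hsF : NN lam (c₀ + d) = NN lam (c₀ + d + 1) + (if E lam (c₀ + d + 1) then 1 else 0) := by
    have := NN_step_F hA hN₀ (c := c₀ + d + 1) (by omega)
    simpa using this
  have hsG : NN lam (-d) = NN lam (-d - 1) + (if D lam (d + 1) then 1 else 0) := by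
    have := NN_step_G hA hN₀ (c := -d) (by omega)
    have h11 : (1:ℤ) - -d = d + 1 := by ring
    rw [h11] at this
    exact this
  have hres1 := (hres.1 (m + (d:ℝ)) ⟨d, rfl⟩ hx (by linarith)).2
  have hext := ext_iff hA hN₀ (x := m + (d:ℝ)) (by linarith) hm0
    (k := c₀ + d + 1) (k' := d + 1) (by push_cast; linarith) (by push_cast; linarith)
  rw [hext]
  have hD : (∃ j, 1 ≤ conj lam (j+1) ∧ G lam j = d + 1) ↔ D lam (d + 1) := by
    constructor
    · rintro ⟨j, _, hj⟩; exact ⟨j, hj⟩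
    · rintro ⟨j, hj⟩
      refine ⟨j, ?_, hj⟩
      simp only [G] at hj
      omega
  rw [hD]
  have hmm : NN lam (-(d+1)) = NN lam (-d-1) := by congr 1; ring
  have hmm2 : NN lam (c₀ + (d+1)) = NN lam (c₀ + d + 1) := by congr 1; ring
  rw [h1, h2, hmm, hmm2] at hres1 ⊢
  by_cases hE : E lam (c₀ + d + 1) <;> by_cases hDD : D lam (d + 1) <;>
    simp only [hE, hDD, if_true, if_false, iff_true, iff_false] at hsF hsG ⊢ <;>
    first
      | (simp only [hE, hDD, or_true, true_or, iff_true]; omega)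
      | (simp only [hE, hDD, or_false, false_or]; omega)
      | (simp only [hE, hDD, or_self, iff_false]; omega)

include hA hN₀ hm0 hc₀ hres in
lemma lowIff (d : ℤ) (hd : d ≤ -1) (hx : 0 < m + (d:ℝ))
    (hM1 : 1 ≤ Mmult lam m (m + (d:ℝ))) :
    (Mmult lam m (m + (d:ℝ)) = Mmult lam m ((m + (d:ℝ)) + 1))
      ↔ 1 ≤ extMult lam m (m + (d:ℝ)) := by
  classical
  have hcd : 1 ≤ c₀ + d := by
    have : (0:ℝ) < ((c₀ + d : ℤ):ℝ) := by push_cast; linarith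
    have := (by exact_mod_cast this : (0:ℤ) < c₀ + d)
    omega
  have h1 : Mmult lam m (m + (d:ℝ)) = NN lam (-d) + NN lam (c₀ + d) :=
    M_formula hA hN₀ hm0 hc₀ d hx
  have heq : (m + (d:ℝ)) + 1 = m + ((d+1 : ℤ):ℝ) := by push_cast; ring
  have h2 : Mmult lam m ((m + (d:ℝ)) + 1) = NN lam (-(d+1)) + NN lam (c₀ + (d+1)) := by
    rw [heq]; exact M_formula hA hN₀ hm0 hc₀ (d+1) (by push_cast; linarith)
  have hc2d : 0 ≤ c₀ + 2*d := by
    have : (0:ℝ) < ((c₀ + 2*d : ℤ):ℝ) := by push_cast; linarith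
    have := (by exact_mod_cast this : (0:ℤ) < c₀ + 2*d)
    omega
  have hNNpos : 1 ≤ NN lam (-d) := by
    have hle : NN lam (c₀ + d) ≤ NN lam (-d) := NN_anti hA hN₀ (by omega) (by omega)
    omega
  have hsF1 : NN lam (-d - 1) = NN lam (-d) + (if E lam (-d) then 1 else 0) := by
    have := NN_step_F hA hN₀ (c := -d) (by omega)
    simpa using this
  have hsF2 : NN lam (c₀ + d) = NN lam (c₀ + d + 1) + (if E lam (c₀ + d + 1) then 1 else 0) := by
    have := NN_step_F hA hN₀ (c := c₀ + d + 1) (by omega)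
    simpa using this
  have hres2 := (hres.2.1 (m + (d:ℝ)) ⟨d, rfl⟩ hx (by
    have : ((d:ℝ)) ≤ -1 := by exact_mod_cast hd
    linarith)).1
  have hext := ext_iff hA hN₀ (x := m + (d:ℝ)) (by linarith) hm0
    (k := c₀ + d + 1) (k' := d + 1) (by push_cast; linarith) (by push_cast; linarith)
  rw [hext]
  have hcol : (∃ j, 1 ≤ conj lam (j+1) ∧ G lam j = d + 1) ↔ NN lam (-d - 1) = NN lam (-d) := by
    have := colEnd_iff hA hN₀ (c := -d) (by omega) hNNpos
    have h11 : (1:ℤ) - -d = d + 1 := by ring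
    rw [h11] at this
    exact this
  rw [hcol]
  have hmm : NN lam (-(d+1)) = NN lam (-d-1) := by congr 1; ring
  have hmm2 : NN lam (c₀ + (d+1)) = NN lam (c₀ + d + 1) := by congr 1; ring
  rw [h1, h2, hmm, hmm2] at hres2 ⊢
  by_cases hE1 : E lam (-d) <;> by_cases hE2 : E lam (c₀ + d + 1) <;>
    simp only [hE1, hE2, if_true, if_false] at hsF1 hsF2 <;>
    constructor <;> intro h <;> first
      | omega
      | (left; exact hE2)
      | (right; omega)
      | (rcases h with h | h; · omega
         · omega)
      | (rcases h with h | h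
         · exact absurd h hE2
         · omega)

include hA hN₀ hm0 hc₀ hres in
lemma highJump (d : ℤ) (hd : 0 ≤ d) (hx : 0 < m + (d:ℝ)) :
    ((Mmult lam m (m + (d:ℝ)) = Mmult lam m ((m + (d:ℝ)) + 1) + 1)
      ↔ (E lam (c₀ + d + 1) ∨ D lam (d + 1)))
    ∧ ¬ (E lam (c₀ + d + 1) ∧ D lam (d + 1)) := by
  classical
  have hc₀0 : 0 ≤ c₀ := by
    have : (0:ℝ) ≤ (c₀:ℝ) := by linarith
    exact_mod_cast this
  have hdr : (0:ℝ) ≤ (d:ℝ) := by exact_mod_cast hd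
  have h1 : Mmult lam m (m + (d:ℝ)) = NN lam (-d) + NN lam (c₀ + d) :=
    M_formula hA hN₀ hm0 hc₀ d hx
  have heq : (m + (d:ℝ)) + 1 = m + ((d+1 : ℤ):ℝ) := by push_cast; ring
  have h2 : Mmult lam m ((m + (d:ℝ)) + 1) = NN lam (-(d+1)) + NN lam (c₀ + (d+1)) := by
    rw [heq]; exact M_formula hA hN₀ hm0 hc₀ (d+1) (by push_cast; linarith)
  have hsF : NN lam (c₀ + d) = NN lam (c₀ + d + 1) + (if E lam (c₀ + d + 1) then 1 else 0) := by
    have := NN_step_F hA hN₀ (c := c₀ + d + 1) (by omega)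
    simpa using this
  have hsG : NN lam (-d) = NN lam (-d - 1) + (if D lam (d + 1) then 1 else 0) := by
    have := NN_step_G hA hN₀ (c := -d) (by omega)
    have h11 : (1:ℤ) - -d = d + 1 := by ring
    rw [h11] at this
    exact this
  have hres1 := (hres.1 (m + (d:ℝ)) ⟨d, rfl⟩ hx (by linarith)).2
  have hmm : NN lam (-(d+1)) = NN lam (-d-1) := by congr 1; ring
  have hmm2 : NN lam (c₀ + (d+1)) = NN lam (c₀ + d + 1) := by congr 1; ring
  rw [h1, h2, hmm, hmm2] at hres1 ⊢
  by_cases hE : E lam (c₀ + d + 1) <;> by_cases hDD : D lam (d + 1) <;>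
    simp only [hE, hDD, if_true, if_false, iff_true, iff_false, or_true, true_or,
      or_self, not_and, and_imp, true_and, and_true, not_true, not_false_iff,
      true_implies, false_implies, and_self, iff_false, false_or] at hsF hsG ⊢ <;>
    try constructor <;> try omega
  all_goals omega

include hA hN₀ hm0 hc₀ hres in
lemma lowJump (d : ℤ) (hd : d ≤ -1) (hx : 0 < m + (d:ℝ)) :
    ((Mmult lam m (m + (d:ℝ)) = Mmult lam m ((m + (d:ℝ)) + 1))
      ↔ (E lam (-d) ↔ E lam (c₀ + d + 1)))
    ∧ (E lam (c₀ + d + 1) → E lam (-d)) := by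
  classical
  have hcd : 1 ≤ c₀ + d := by
    have : (0:ℝ) < ((c₀ + d : ℤ):ℝ) := by push_cast; linarith
    have := (by exact_mod_cast this : (0:ℤ) < c₀ + d)
    omega
  have h1 : Mmult lam m (m + (d:ℝ)) = NN lam (-d) + NN lam (c₀ + d) :=
    M_formula hA hN₀ hm0 hc₀ d hx
  have heq : (m + (d:ℝ)) + 1 = m + ((d+1 : ℤ):ℝ) := by push_cast; ring
  have h2 : Mmult lam m ((m + (d:ℝ)) + 1) = NN lam (-(d+1)) + NN lam (c₀ + (d+1)) := by
    rw [heq]; exact M_formula hA hN₀ hm0 hc₀ (d+1) (by push_cast; linarith)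
  have hsF1 : NN lam (-d - 1) = NN lam (-d) + (if E lam (-d) then 1 else 0) := by
    have := NN_step_F hA hN₀ (c := -d) (by omega)
    simpa using this
  have hsF2 : NN lam (c₀ + d) = NN lam (c₀ + d + 1) + (if E lam (c₀ + d + 1) then 1 else 0) := by
    have := NN_step_F hA hN₀ (c := c₀ + d + 1) (by omega)
    simpa using this
  have hres2 := (hres.2.1 (m + (d:ℝ)) ⟨d, rfl⟩ hx (by
    have : ((d:ℝ)) ≤ -1 := by exact_mod_cast hd
    linarith)).1
  have hmm : NN lam (-(d+1)) = NN lam (-d-1) := by congr 1; ring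
  have hmm2 : NN lam (c₀ + (d+1)) = NN lam (c₀ + d + 1) := by congr 1; ring
  rw [h1, h2, hmm, hmm2] at hres2 ⊢
  by_cases hE1 : E lam (-d) <;> by_cases hE2 : E lam (c₀ + d + 1) <;>
    simp only [hE1, hE2, if_true, if_false, iff_true, iff_false, not_true, not_false_iff,
      true_iff, false_iff, true_implies, false_implies, iff_self, and_true, true_and] at hsF1 hsF2 ⊢ <;>
    try constructor <;> try omega
  all_goals
    first
      | omega
      | (constructor
         · omega
         · intro h; exact absurd h hE2)
      | (refine ⟨?_, fun h => absurd h hE2⟩; omega)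

include hA hN₀ in
lemma cntE_fin {a : ℤ} (ha : 1 ≤ a) :
    ({c : ℤ | a ≤ c ∧ E lam c}).ncard = NN lam (a-1) ∧ ({c : ℤ | a ≤ c ∧ E lam c}).Finite := by
  have himg : {c : ℤ | a ≤ c ∧ E lam c} = F lam '' {i : ℕ | a - 1 < F lam i} := by
    ext c
    simp only [Set.mem_setOf_eq, Set.mem_image, E]
    constructor
    · rintro ⟨hac, i, hi⟩
      exact ⟨i, by omega, hi⟩
    · rintro ⟨i, hi, rfl⟩
      exact ⟨by omega, i, rfl⟩
  rw [himg, Set.ncard_image_of_injective _ (F_strictAnti hA).injective,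
    ← NN_eq_F hA hN₀ (by omega)]
  exact ⟨rfl, Set.Finite.image _ (finite_F hN₀ (by omega))⟩

include hA hN₀ in
lemma cntD_fin {b : ℤ} (hb : 1 ≤ b) :
    ({k : ℤ | b ≤ k ∧ D lam k}).ncard = NN lam (1-b) ∧ ({k : ℤ | b ≤ k ∧ D lam k}).Finite := by
  have himg : {k : ℤ | b ≤ k ∧ D lam k} = G lam '' {j : ℕ | b - 1 < G lam j} := by
    ext k
    simp only [Set.mem_setOf_eq, Set.mem_image, D]
    constructor
    · rintro ⟨hbk, j, hj⟩
      exact ⟨j, by omega, hj⟩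
    · rintro ⟨j, hj, rfl⟩
      exact ⟨by omega, j, rfl⟩
  have hset : {j : ℕ | -(1-b) < G lam j} = {j : ℕ | b - 1 < G lam j} := by
    ext j; simp only [Set.mem_setOf_eq]; omega
  rw [himg, Set.ncard_image_of_injective _ (G_strictAnti hA hN₀).injective,
    ← hset, ← NN_eq_G hA hN₀ (by omega)]
  refine ⟨rfl, Set.Finite.image _ ?_⟩
  rw [hset]
  exact finite_G hA hN₀ (by omega)

include hA hN₀ in
lemma cntE_interval {a b : ℤ} (ha : 1 ≤ a) (hab : a ≤ b + 1) :
    ({c : ℤ | a ≤ c ∧ c ≤ b ∧ E lam c}).ncard + NN lam b = NN lam (a-1)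
      ∧ ({c : ℤ | a ≤ c ∧ c ≤ b ∧ E lam c}).Finite := by
  have hsplit : {c : ℤ | a ≤ c ∧ E lam c}
      = {c : ℤ | a ≤ c ∧ c ≤ b ∧ E lam c} ∪ {c : ℤ | b + 1 ≤ c ∧ E lam c} := by
    ext c
    simp only [Set.mem_setOf_eq, Set.mem_union]
    constructor
    · rintro ⟨h1, h2⟩
      rcases le_or_gt c b with h | h
      · exact Or.inl ⟨h1, h, h2⟩
      · exact Or.inr ⟨by omega, h2⟩
    · rintro (⟨h1, _, h2⟩ | ⟨h1, h2⟩) <;> exact ⟨by omega, h2⟩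
  have hdisj : Disjoint {c : ℤ | a ≤ c ∧ c ≤ b ∧ E lam c} {c : ℤ | b + 1 ≤ c ∧ E lam c} := by
    rw [Set.disjoint_left]
    rintro c ⟨_, h1, _⟩ ⟨h2, _⟩
    omega
  have h1 := cntE_fin hA hN₀ ha
  have h2 := cntE_fin hA hN₀ (a := b + 1) (by omega)
  have hfin : ({c : ℤ | a ≤ c ∧ c ≤ b ∧ E lam c}).Finite := by
    apply Set.Finite.subset h1.2
    rintro c ⟨hc1, _, hc2⟩
    exact ⟨hc1, hc2⟩
  have := h1.1
  rw [hsplit, Set.ncard_union_eq hdisj hfin h2.2] at this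
  have h21 : ({c : ℤ | b + 1 ≤ c ∧ E lam c}).ncard = NN lam b := by
    have := h2.1
    simpa using this
  rw [h21] at this
  exact ⟨this, hfin⟩

lemma ncard_Icc_int (a b : ℤ) : (Set.Icc a b).ncard = (b + 1 - a).toNat := by
  rw [← Finset.coe_Icc, Set.ncard_coe_finset, Int.card_Icc]

include hA hN₀ hm0 hres in
lemma memJint_high (mi : ℤ) (hmi : (mi:ℝ) = m) (l : ℤ) (hl : mi ≤ l) (hl1 : 1 ≤ l) :
    ((l:ℝ) ∈ Jpos lam m ↔ (E lam (mi + l + 1) ∨ D lam (l - mi + 1)))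
    ∧ ¬(E lam (mi + l + 1) ∧ D lam (l - mi + 1)) := by
  have hc2 : 2 * m = ((2*mi : ℤ):ℝ) := by push_cast; linarith
  have hx : 0 < m + ((l - mi : ℤ):ℝ) := by
    push_cast
    have : (1:ℝ) ≤ (l:ℝ) := by exact_mod_cast hl1
    linarith
  have hHJ := highJump hA hN₀ hm0 hc2 hres (l - mi) (by omega) hx
  have hidx : 2*mi + (l - mi) + 1 = mi + l + 1 := by ring
  rw [hidx] at hHJ
  have hlr : (l:ℝ) = m + ((l - mi : ℤ):ℝ) := by push_cast; linarith
  rw [← hlr] at hHJ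
  have hml : m ≤ (l:ℝ) := by
    have : (mi:ℝ) ≤ (l:ℝ) := by exact_mod_cast hl
    linarith
  refine ⟨?_, hHJ.2⟩
  rw [Jpos, Set.mem_setOf_eq]
  constructor
  · rintro ⟨_, _, (⟨_, hj⟩ | ⟨hle, _⟩)⟩
    · exact hHJ.1.mp hj
    · exfalso
      have : (l:ℝ) ≤ (mi:ℝ) - 1 := by linarith
      have : l ≤ mi - 1 := by exact_mod_cast (by push_cast; linarith : (l:ℝ) ≤ ((mi - 1 : ℤ):ℝ))
      omega
  · intro h
    refine ⟨⟨l - mi, hlr⟩, ?_, Or.inl ⟨hml, hHJ.1.mpr h⟩⟩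
    have : (1:ℝ) ≤ (l:ℝ) := by exact_mod_cast hl1
    linarith

include hA hN₀ hm0 hres in
lemma memJint_low (mi : ℤ) (hmi : (mi:ℝ) = m) (l : ℤ) (hl1 : 1 ≤ l) (hl : l ≤ mi - 1) :
    ((l:ℝ) ∈ Jpos lam m ↔ (E lam (mi - l) ↔ E lam (mi + l + 1)))
    ∧ (E lam (mi + l + 1) → E lam (mi - l)) := by
  have hc2 : 2 * m = ((2*mi : ℤ):ℝ) := by push_cast; linarith
  have hx : 0 < m + ((l - mi : ℤ):ℝ) := by
    push_cast
    have : (1:ℝ) ≤ (l:ℝ) := by exact_mod_cast hl1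
    linarith
  have hLJ := lowJump hA hN₀ hm0 hc2 hres (l - mi) (by omega) hx
  have hidx : 2*mi + (l - mi) + 1 = mi + l + 1 := by ring
  have hidx2 : -(l - mi) = mi - l := by ring
  rw [hidx, hidx2] at hLJ
  have hlr : (l:ℝ) = m + ((l - mi : ℤ):ℝ) := by push_cast; linarith
  rw [← hlr] at hLJ
  have hml : (l:ℝ) ≤ m - 1 := by
    have : (l:ℝ) ≤ ((mi - 1 : ℤ):ℝ) := by exact_mod_cast hl
    push_cast at this
    linarith
  refine ⟨?_, hLJ.2⟩
  rw [Jpos, Set.mem_setOf_eq]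
  constructor
  · rintro ⟨_, _, (⟨hge, _⟩ | ⟨_, hj⟩)⟩
    · exfalso
      have h1 : (mi:ℝ) ≤ (l:ℝ) := by linarith
      have : mi ≤ l := by exact_mod_cast h1
      omega
    · exact hLJ.1.mp hj
  · intro h
    refine ⟨⟨l - mi, hlr⟩, ?_, Or.inr ⟨hml, hLJ.1.mpr h⟩⟩
    have : (1:ℝ) ≤ (l:ℝ) := by exact_mod_cast hl1
    linarith

include hA hN₀ hm0 hres in
lemma zeroCase (mi : ℤ) (hmi : (mi:ℝ) = m) (hmi0 : 0 ≤ mi) (hM0 : 1 ≤ Mmult lam m 0) :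
    ((Set.ncard (Jpos lam m) : ℤ) % 2 = mi % 2 ↔ ¬ (1 ≤ extMult lam m 0)) := by
  classical
  have hc2 : 2 * m = ((2*mi : ℤ):ℝ) := by push_cast; linarith
  have hM0' : Mmult lam m 0 = NN lam mi := Mmult_zero hA hN₀ hmi
  have hNmi : 1 ≤ NN lam mi := by omega
  set Jint : Set ℤ := {l : ℤ | (l:ℝ) ∈ Jpos lam m} with hJint
  have hJposEq : Jpos lam m = (fun l : ℤ => (l:ℝ)) '' Jint := by
    ext x
    constructor
    · intro hx
      obtain ⟨⟨c, hc⟩, hx0, hcond⟩ := hx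
      refine ⟨mi + c, ?_, ?_⟩
      · have hxx : ((mi + c : ℤ):ℝ) = x := by push_cast; linarith
        show ((mi + c : ℤ):ℝ) ∈ Jpos lam m
        rw [hxx]
        exact ⟨⟨c, hc⟩, hx0, hcond⟩
      · push_cast; linarith
    · rintro ⟨l, hl, rfl⟩
      exact hl
  have hcard : Set.ncard (Jpos lam m) = Set.ncard Jint := by
    rw [hJposEq, Set.ncard_image_of_injective _ (fun a b h => by exact_mod_cast h)]
  set mx := max mi 1 with hmx
  set JhE : Set ℤ := {l | mx ≤ l ∧ E lam (mi + l + 1)} with hJhE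
  set JhD : Set ℤ := {l | mx ≤ l ∧ D lam (l - mi + 1)} with hJhD
  set Jl2 : Set ℤ := {l | 1 ≤ l ∧ l ≤ mi - 1 ∧ E lam (mi + l + 1)} with hJl2
  set Jl0 : Set ℤ := {l | 1 ≤ l ∧ l ≤ mi - 1 ∧ ¬ E lam (mi - l)} with hJl0
  have hdecomp : Jint = (JhE ∪ JhD) ∪ (Jl2 ∪ Jl0) := by
    ext l
    simp only [hJint, hJhE, hJhD, hJl2, hJl0, Set.mem_setOf_eq, Set.mem_union]
    constructor
    · intro hl
      have hl1 : 1 ≤ l := by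
        have h0 : (0:ℝ) < (l:ℝ) := hl.2.1
        have : (0:ℤ) < l := by exact_mod_cast h0
        omega
      rcases le_or_gt mi l with hge | hlt
      · rcases (memJint_high hA hN₀ hm0 hres mi hmi l hge hl1).1.mp hl with h | h
        · exact Or.inl (Or.inl ⟨by omega, h⟩)
        · exact Or.inl (Or.inr ⟨by omega, h⟩)
      · have hml := memJint_low hA hN₀ hm0 hres mi hmi l hl1 (by omega)
        have hiff := hml.1.mp hl
        by_cases hE2 : E lam (mi + l + 1)
        · exact Or.inr (Or.inl ⟨hl1, by omega, hE2⟩)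
        · exact Or.inr (Or.inr ⟨hl1, by omega, fun hE1 => hE2 (hiff.mp hE1)⟩)
    · intro hl
      rcases hl with (⟨h1, h2⟩ | ⟨h1, h2⟩) | (⟨h1, h2, h3⟩ | ⟨h1, h2, h3⟩)
      · exact (memJint_high hA hN₀ hm0 hres mi hmi l (by omega) (by omega)).1.mpr (Or.inl h2)
      · exact (memJint_high hA hN₀ hm0 hres mi hmi l (by omega) (by omega)).1.mpr (Or.inr h2)
      · have hml := memJint_low hA hN₀ hm0 hres mi hmi l h1 h2
        exact hml.1.mpr ⟨fun _ => h3, fun _ => hml.2 h3⟩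
      · have hml := memJint_low hA hN₀ hm0 hres mi hmi l h1 h2
        exact hml.1.mpr ⟨fun hE1 => absurd hE1 h3, fun hE2 => absurd (hml.2 hE2) h3⟩
  -- cardinalities of the four pieces
  have hinj1 : Function.Injective (fun l : ℤ => mi + l + 1) := fun a b h => by
    simp only at h; omega
  have hinj2 : Function.Injective (fun l : ℤ => l - mi + 1) := fun a b h => by
    simp only at h; omega
  have hinj3 : Function.Injective (fun l : ℤ => mi - l) := fun a b h => by
    simp only at h; omega
  have hiJhE : (fun l : ℤ => mi + l + 1) '' JhE = {c : ℤ | mi + mx + 1 ≤ c ∧ E lam c} := by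
    ext c
    simp only [Set.mem_image, hJhE, Set.mem_setOf_eq]
    constructor
    · rintro ⟨l, ⟨ha, hb⟩, rfl⟩
      exact ⟨by omega, hb⟩
    · rintro ⟨ha, hb⟩
      refine ⟨c - mi - 1, ⟨by omega, ?_⟩, by ring⟩
      rw [show mi + (c - mi - 1) + 1 = c by ring]
      exact hb
  have hcJhE : JhE.ncard = NN lam (mi + mx) := by
    have h0 := Set.ncard_image_of_injective JhE hinj1
    rw [hiJhE] at h0
    have h2 := (cntE_fin hA hN₀ (a := mi + mx + 1) (by omega)).1
    rw [show mi + mx + 1 - 1 = mi + mx by ring] at h2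
    omega
  have hfJhE : JhE.Finite := by
    have := (cntE_fin hA hN₀ (a := mi + mx + 1) (by omega)).2
    rw [← hiJhE] at this
    exact Set.Finite.of_finite_image this (Function.Injective.injOn hinj1)
  have hiJhD : (fun l : ℤ => l - mi + 1) '' JhD = {k : ℤ | mx - mi + 1 ≤ k ∧ D lam k} := by
    ext c
    simp only [Set.mem_image, hJhD, Set.mem_setOf_eq]
    constructor
    · rintro ⟨l, ⟨ha, hb⟩, rfl⟩
      exact ⟨by omega, hb⟩
    · rintro ⟨ha, hb⟩
      refine ⟨c + mi - 1, ⟨by omega, ?_⟩, by ring⟩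
      rw [show c + mi - 1 - mi + 1 = c by ring]
      exact hb
  have hcJhD : JhD.ncard = NN lam (mi - mx) := by
    have h0 := Set.ncard_image_of_injective JhD hinj2
    rw [hiJhD] at h0
    have h2 := (cntD_fin hA hN₀ (b := mx - mi + 1) (by omega)).1
    rw [show 1 - (mx - mi + 1) = mi - mx by ring] at h2
    omega
  have hfJhD : JhD.Finite := by
    have := (cntD_fin hA hN₀ (b := mx - mi + 1) (by omega)).2
    rw [← hiJhD] at this
    exact Set.Finite.of_finite_image this (Function.Injective.injOn hinj2)
  have hfJl2 : Jl2.Finite := by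
    apply Set.Finite.subset (Set.finite_Icc (1:ℤ) (mi - 1))
    rintro l ⟨ha, hb, _⟩
    exact Set.mem_Icc.mpr ⟨ha, hb⟩
  have hfJl0 : Jl0.Finite := by
    apply Set.Finite.subset (Set.finite_Icc (1:ℤ) (mi - 1))
    rintro l ⟨ha, hb, _⟩
    exact Set.mem_Icc.mpr ⟨ha, hb⟩
  -- disjointness
  have hd1 : Disjoint JhE JhD := by
    rw [Set.disjoint_left]
    rintro l ⟨ha, hb⟩ ⟨hc, hd⟩
    exact (memJint_high hA hN₀ hm0 hres mi hmi l (by omega) (by omega)).2 ⟨hb, hd⟩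
  have hd2 : Disjoint Jl2 Jl0 := by
    rw [Set.disjoint_left]
    rintro l ⟨ha, hb, hc⟩ ⟨hd, he, hf⟩
    exact hf ((memJint_low hA hN₀ hm0 hres mi hmi l ha hb).2 hc)
  have hd3 : Disjoint (JhE ∪ JhD) (Jl2 ∪ Jl0) := by
    rw [Set.disjoint_left]
    rintro l hl1 hl2
    have ha : mx ≤ l := by rcases hl1 with ⟨h, _⟩ | ⟨h, _⟩ <;> exact h
    have hb : l ≤ mi - 1 := by rcases hl2 with ⟨_, h, _⟩ | ⟨_, h, _⟩ <;> exact h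
    omega
  have hTot : Jint.ncard = JhE.ncard + JhD.ncard + (Jl2.ncard + Jl0.ncard) := by
    rw [hdecomp, Set.ncard_union_eq hd3 (Set.Finite.union hfJhE hfJhD) (Set.Finite.union hfJl2 hfJl0),
      Set.ncard_union_eq hd1 hfJhE hfJhD, Set.ncard_union_eq hd2 hfJl2 hfJl0]
  clear_value Jint mx JhE JhD Jl2 Jl0
  rcases eq_or_lt_of_le hmi0 with heq | hpos
  · -- mi = 0
    subst heq
    have hm00 : m = 0 := by rw [← hmi]; norm_num
    have hmx0 : mx = 1 := by simp [hmx]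
    rw [hmx0] at hcJhE hcJhD
    rw [show (0:ℤ) + 1 = 1 by norm_num] at hcJhE
    rw [show (0:ℤ) - 1 = -1 by norm_num] at hcJhD
    have hext := ext_iff hA hN₀ (x := (0:ℝ)) le_rfl hm0 (k := 1) (k' := 1)
      (by push_cast; linarith) (by push_cast; linarith)
    have hJl2e : Jl2 = ∅ := by
      ext l; simp only [hJl2, Set.mem_setOf_eq, Set.mem_empty_iff_false, iff_false, not_and]
      intro h1 h2; omega
    have hJl0e : Jl0 = ∅ := by
      ext l; simp only [hJl0, Set.mem_setOf_eq, Set.mem_empty_iff_false, iff_false, not_and]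
      intro h1 h2; omega
    have hsF : NN lam 0 = NN lam 1 + (if E lam 1 then 1 else 0) := by
      have := NN_step_F hA hN₀ (c := 1) (by omega)
      simpa using this
    have hsG : NN lam 0 = NN lam (-1) + (if D lam 1 then 1 else 0) := by
      have := NN_step_G hA hN₀ (c := 0) (by omega)
      simpa using this
    have hM1 : Mmult lam m 1 = NN lam (-1) + NN lam 1 := by
      have harg : m + ((1 : ℤ):ℝ) = 1 := by push_cast; linarith
      have h5 := M_formula hA hN₀ hm0 hc2 1 (by rw [harg]; norm_num)
      rw [harg] at h5
      rw [h5, show -(1:ℤ) = -1 by norm_num, show 2*(0:ℤ) + 1 = 1 by norm_num]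
    have hiii := (hres.2.2 ⟨0, hmi.symm⟩).1 hm00
    rw [hM0', hM1] at hiii
    have hDiff : (∃ j, 1 ≤ conj lam (j+1) ∧ G lam j = 1) ↔ D lam 1 := by
      constructor
      · rintro ⟨j, _, hj⟩; exact ⟨j, hj⟩
      · rintro ⟨j, hj⟩
        refine ⟨j, ?_, hj⟩
        simp only [G] at hj
        omega
    rw [hext, hDiff]
    rw [hcard, hTot, hcJhE, hcJhD, hJl2e, hJl0e, Set.ncard_empty]
    clear hM0 hM0' hM1 hcard hTot hdecomp hJposEq hiJhE hiJhD hd1 hd2 hd3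
    revert hsF hsG hiii hNmi
    generalize NN lam 1 = A
    generalize NN lam (-1) = Bm
    generalize NN lam 0 = B
    intro hNmi hsF hsG hiii
    by_cases hE1 : E lam 1 <;> by_cases hD1 : D lam 1 <;>
      simp only [hE1, hD1, if_true, if_false, or_true, true_or, or_self, iff_true,
        iff_false, not_true, not_false_iff, or_false, false_or] at hsF hsG ⊢ <;>
      omega
  · -- mi ≥ 1
    have hmi1 : 1 ≤ mi := hpos
    have hmxe : mx = mi := by rw [hmx]; omega
    have hext := ext_iff hA hN₀ (x := (0:ℝ)) le_rfl hm0 (k := mi + 1) (k' := 1 - mi)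
      (by push_cast; linarith) (by push_cast; linarith)
    have hm0ne : m ≠ 0 := by
      have : (1:ℝ) ≤ (mi:ℝ) := by exact_mod_cast hmi1
      intro h; rw [h] at hmi; linarith
    -- Jl2 count
    have hiJl2 : (fun l : ℤ => mi + l + 1) '' Jl2 = {c : ℤ | mi + 2 ≤ c ∧ c ≤ 2*mi ∧ E lam c} := by
      ext c
      simp only [Set.mem_image, hJl2, Set.mem_setOf_eq]
      constructor
      · rintro ⟨l, ⟨ha, hb, hcc⟩, rfl⟩
        exact ⟨by omega, by omega, hcc⟩
      · rintro ⟨ha, hb, hcc⟩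
        refine ⟨c - mi - 1, ⟨by omega, by omega, ?_⟩, by ring⟩
        rw [show mi + (c - mi - 1) + 1 = c by ring]
        exact hcc
    have hcJl2 : Jl2.ncard + NN lam (2*mi) = NN lam (mi + 1) := by
      have h0 := Set.ncard_image_of_injective Jl2 hinj1
      rw [hiJl2] at h0
      have h2 := (cntE_interval hA hN₀ (a := mi + 2) (b := 2*mi) (by omega) (by omega)).1
      rw [show mi + 2 - 1 = mi + 1 by ring] at h2
      omega
    -- P count
    set P : Set ℤ := {l | 1 ≤ l ∧ l ≤ mi - 1 ∧ E lam (mi - l)} with hP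
    have hiP : (fun l : ℤ => mi - l) '' P = {c : ℤ | 1 ≤ c ∧ c ≤ mi - 1 ∧ E lam c} := by
      ext c
      simp only [Set.mem_image, hP, Set.mem_setOf_eq]
      constructor
      · rintro ⟨l, ⟨ha, hb, hcc⟩, rfl⟩
        exact ⟨by omega, by omega, hcc⟩
      · rintro ⟨ha, hb, hcc⟩
        refine ⟨mi - c, ⟨by omega, by omega, ?_⟩, by ring⟩
        rw [show mi - (mi - c) = c by ring]
        exact hcc
    have hcP : P.ncard + NN lam (mi - 1) = NN lam 0 := by
      have h0 := Set.ncard_image_of_injective P hinj3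
      rw [hiP] at h0
      have h2 := (cntE_interval hA hN₀ (a := 1) (b := mi - 1) (by omega) (by omega)).1
      rw [show (1:ℤ) - 1 = 0 by ring] at h2
      omega
    have hfP : P.Finite := by
      apply Set.Finite.subset (Set.finite_Icc (1:ℤ) (mi - 1))
      rintro l ⟨ha, hb, _⟩
      exact Set.mem_Icc.mpr ⟨ha, hb⟩
    have hIccSplit : Set.Icc (1:ℤ) (mi - 1) = P ∪ Jl0 := by
      ext l
      simp only [Set.mem_Icc, Set.mem_union, hP, hJl0, Set.mem_setOf_eq]
      constructor
      · rintro ⟨ha, hb⟩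
        by_cases hE : E lam (mi - l)
        · exact Or.inl ⟨ha, hb, hE⟩
        · exact Or.inr ⟨ha, hb, hE⟩
      · rintro (⟨ha, hb, _⟩ | ⟨ha, hb, _⟩) <;> exact ⟨ha, hb⟩
    have hdP : Disjoint P Jl0 := by
      rw [Set.disjoint_left, hP, hJl0]
      rintro l ⟨_, _, h1⟩ ⟨_, _, h2⟩
      exact h2 h1
    have hcIcc : P.ncard + Jl0.ncard = (mi - 1).toNat := by
      have := ncard_Icc_int 1 (mi - 1)
      rw [hIccSplit, Set.ncard_union_eq hdP hfP hfJl0] at this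
      omega
    clear_value P
    -- steps and residual (iii)
    have hs1 : NN lam (mi - 1) = NN lam mi + (if E lam mi then 1 else 0) := by
      have := NN_step_F hA hN₀ (c := mi) (by omega)
      simpa using this
    have hs2 : NN lam mi = NN lam (mi + 1) + (if E lam (mi + 1) then 1 else 0) := by
      have := NN_step_F hA hN₀ (c := mi + 1) (by omega)
      simpa using this
    have hM1 : Mmult lam m 1 = NN lam (mi - 1) + NN lam (mi + 1) := by
      have harg : m + ((1 - mi : ℤ):ℝ) = 1 := by push_cast; linarith
      have := M_formula hA hN₀ hm0 hc2 (1 - mi) (by rw [harg]; norm_num)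
      rw [harg] at this
      rw [this, show -(1 - mi) = mi - 1 by ring, show 2*mi + (1 - mi) = mi + 1 by ring]
    have hiii := (hres.2.2 ⟨mi, hmi.symm⟩).2 hm0ne
    rw [hM0', hM1] at hiii
    have hcol : (∃ j, 1 ≤ conj lam (j+1) ∧ G lam j = 1 - mi) ↔ NN lam (mi - 1) = NN lam mi :=
      colEnd_iff hA hN₀ hmi1 hNmi
    rw [hext, hcol]
    rw [hcard, hTot, hcJhE, hcJhD, hmxe,
      show mi + mi = 2*mi by ring, show mi - mi = 0 by ring]
    clear hM0 hM0' hM1 hcard hTot hdecomp hJposEq hiJhE hiJhD hiJl2 hiP hIccSplit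
      hd1 hd2 hd3 hdP hfP
    revert hcJl2 hcP hcIcc hs1 hs2 hiii hNmi
    generalize NN lam (2*mi) = A
    generalize NN lam (mi + 1) = C
    generalize NN lam (mi - 1) = Dn
    generalize NN lam mi = Mn
    generalize NN lam 0 = B
    generalize Jl2.ncard = p
    generalize Jl0.ncard = q
    generalize P.ncard = r
    intro hNmi hcJl2 hcP hcIcc hs1 hs2 hiii
    by_cases hE1 : E lam mi <;> by_cases hE2 : E lam (mi + 1) <;>
      simp only [hE1, hE2, if_true, if_false, or_true, true_or, or_self, iff_true,
        iff_false, not_true, not_false_iff, true_and, and_true, or_false, false_or,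
        not_or] at hs1 hs2 ⊢ <;>
      omega

end Part
end S3

/-- for `m ≥ 0` with `2m ∈ ℤ` and a nonempty partition `lam` of
`n` whose `m`-tableau is residual, a value `x` occurring as an entry of
`T_m(λ)` belongs to the full jump set `J` if and only if it occurs among the
extremities of `T_m(λ)`. -/
theorem stmt3 (n : ℕ) (hn : 1 ≤ n) (m : ℝ) (hm0 : 0 ≤ m)
    (h2m : ∃ c : ℤ, 2 * m = (c : ℝ))
    (lam : ℕ → ℕ) (hlam : IsPartitionOf lam n) (hres : Residual lam m) :
    ∀ x : ℝ, 1 ≤ Mmult lam m x →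
      (x ∈ Jfull lam m ↔ 1 ≤ extMult lam m x) := by
  classical
  obtain ⟨hA, N₀, hN₀, hsum⟩ := hlam
  obtain ⟨c₀, hc₀⟩ := h2m
  intro x hMx
  obtain ⟨⟨i, j⟩, hbox⟩ := Set.nonempty_of_ncard_ne_zero
    (s := {p : ℕ × ℕ | p.2 < lam p.1 ∧ |(p.1 : ℝ) - (p.2 : ℝ) + m| = x}) (by
      rw [Mmult] at hMx
      omega)
  obtain ⟨hbox1, hbox2⟩ := hbox
  have hx0 : 0 ≤ x := by rw [← hbox2]; exact abs_nonneg _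
  rcases eq_or_lt_of_le hx0 with hx | hx
  · -- x = 0
    subst hx
    have hm : m = (j:ℝ) - (i:ℝ) := by
      have := abs_eq_zero.mp hbox2
      linarith
    obtain ⟨mi, hmi⟩ : ∃ mi : ℤ, (mi:ℝ) = m :=
      ⟨(j:ℤ) - (i:ℤ), by push_cast; linarith⟩
    have hmi0 : 0 ≤ mi := by
      have : (0:ℝ) ≤ (mi:ℝ) := by rw [hmi]; exact hm0
      exact_mod_cast this
    have hzero := S3.zeroCase hA hN₀ hm0 hres mi hmi hmi0 hMx
    have hceil : ⌈m⌉ = mi := by rw [← hmi]; exact Int.ceil_intCast mi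
    rw [Jfull, hceil]
    by_cases hpar : ((Jpos lam m).ncard : ℤ) % 2 = mi % 2
    · rw [if_pos hpar]
      have hnotext := hzero.mp hpar
      constructor
      · intro h0
        exact absurd (by norm_num : ¬ ((0:ℝ) < 0)) (fun _ => (h0.2.1).ne rfl)
      · intro h
        exact absurd h hnotext
    · rw [if_neg hpar]
      have hext : 1 ≤ extMult lam m 0 := by
        by_contra hne
        exact hpar (hzero.mpr hne)
      constructor
      · intro _; exact hext
      · intro _
        apply Set.mem_insert_iff.mpr
        left
        rw [← hmi]
        ring
  · -- x > 0
    have hd : ∃ d : ℤ, x = m + (d:ℝ) := by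
      rcases abs_cases ((i:ℝ) - (j:ℝ) + m) with ⟨h1, _⟩ | ⟨h1, _⟩
      · refine ⟨(i:ℤ) - (j:ℤ), ?_⟩
        rw [← hbox2, h1]
        push_cast
        ring
      · refine ⟨(j:ℤ) - (i:ℤ) - c₀, ?_⟩
        rw [← hbox2, h1]
        push_cast
        linarith
    obtain ⟨d, hdx⟩ := hd
    have hJfullIff : (x ∈ Jfull lam m ↔ x ∈ Jpos lam m) := by
      rw [Jfull]
      split_ifs with h
      · exact Iff.rfl
      · rw [Set.mem_insert_iff]
        constructor
        · rintro (h1 | h1)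
          · exfalso
            have : m - (⌈m⌉:ℝ) ≤ 0 := by
              have := Int.le_ceil m
              linarith
            rw [h1] at hx
            linarith
          · exact h1
        · intro h1; exact Or.inr h1
    rw [hJfullIff]
    subst hdx
    rcases le_or_gt 0 d with hd0 | hd1
    · -- high case
      rw [show ((m + (d:ℝ)) ∈ Jpos lam m) ↔
          (Mmult lam m (m + (d:ℝ)) = Mmult lam m ((m + (d:ℝ)) + 1) + 1) from ?_]
      · exact S3.highIff hA hN₀ hm0 hc₀ hres d hd0 hx
      · constructor
        · rintro ⟨_, _, (⟨_, h⟩ | ⟨hle, _⟩)⟩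
          · exact h
          · exfalso
            have hdr : (0:ℝ) ≤ (d:ℝ) := by exact_mod_cast hd0
            linarith
        · intro h
          refine ⟨⟨d, rfl⟩, hx, Or.inl ⟨by
            have hdr : (0:ℝ) ≤ (d:ℝ) := by exact_mod_cast hd0
            linarith, h⟩⟩
    · -- low case
      have hd1' : d ≤ -1 := by omega
      rw [show ((m + (d:ℝ)) ∈ Jpos lam m) ↔
          (Mmult lam m (m + (d:ℝ)) = Mmult lam m ((m + (d:ℝ)) + 1)) from ?_]
      · exact S3.lowIff hA hN₀ hm0 hc₀ hres d hd1' hx hMx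
      · have hdr : (d:ℝ) ≤ -1 := by exact_mod_cast hd1'
        constructor
        · rintro ⟨_, _, (⟨hle, _⟩ | ⟨_, h⟩)⟩
          · exfalso; linarith
          · exact h
        · intro h
          exact ⟨⟨d, rfl⟩, hx, Or.inr ⟨by linarith, h⟩⟩
end

section
/- Let m ≥ 0 with 2m ∈ ℤ and let λ be a partition of n. Then T_m(λ) is residual if and only if the multiset of extremities of T_m(λ) has no repeated element (the extremities are pairwise distinct). -/
open scoped Classical

namespace Stmt4Aux

variable (lam : ℕ → ℕ)

/-- `Bset lam k` : some (0-indexed) row `i` has content `lam i - i = k`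
(this includes the infinitely many empty rows). -/
def Bset (k : ℤ) : Prop := ∃ i : ℕ, (lam i : ℤ) - i = k

/-- number of boxes on the diagonal `i - j = d ≥ 0` (0-indexed). -/
noncomputable def K1 (d : ℕ) : ℕ := sInf {j | lam (j + d) ≤ j}

/-- number of boxes on the diagonal `j - i = e ≥ 0` (0-indexed). -/
noncomputable def K2 (e : ℕ) : ℕ := sInf {i | lam i ≤ i + e}

/-- the length of the (0-indexed) column `j`. -/
noncomputable def CF (j : ℕ) : ℕ := sInf {i | lam i ≤ j}

variable {lam}

lemma mem_iff_sInf_le {s : Set ℕ} (hne : s.Nonempty)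
    (hup : ∀ a b, a ≤ b → a ∈ s → b ∈ s) {j : ℕ} : j ∈ s ↔ sInf s ≤ j := by
  constructor
  · exact fun h => Nat.sInf_le h
  · exact fun h => hup _ _ h (Nat.sInf_mem hne)

lemma K1_le_iff (hA : Antitone lam) {N : ℕ} (hN0 : ∀ i, N ≤ i → lam i = 0)
    (d : ℕ) : ∀ j, lam (j + d) ≤ j ↔ K1 lam d ≤ j := by
  have hne : {j : ℕ | lam (j + d) ≤ j}.Nonempty := by
    refine ⟨N, ?_⟩
    simp only [Set.mem_setOf_eq, hN0 (N + d) (by omega)]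
    omega
  intro j
  refine mem_iff_sInf_le hne (fun a b hab ha => ?_)
  simp only [Set.mem_setOf_eq] at ha ⊢
  have := hA (show a + d ≤ b + d by omega); omega

lemma K2_le_iff (hA : Antitone lam) {N : ℕ} (hN0 : ∀ i, N ≤ i → lam i = 0)
    (e : ℕ) : ∀ i, lam i ≤ i + e ↔ K2 lam e ≤ i := by
  have hne : {i : ℕ | lam i ≤ i + e}.Nonempty := by
    refine ⟨N, ?_⟩
    simp only [Set.mem_setOf_eq, hN0 N le_rfl]
    omega
  intro i
  refine mem_iff_sInf_le hne (fun a b hab ha => ?_)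
  simp only [Set.mem_setOf_eq] at ha ⊢
  have := hA hab; omega

lemma CF_le_iff (hA : Antitone lam) {N : ℕ} (hN0 : ∀ i, N ≤ i → lam i = 0)
    (j : ℕ) : ∀ i, lam i ≤ j ↔ CF lam j ≤ i := by
  have hne : {i : ℕ | lam i ≤ j}.Nonempty := by
    refine ⟨N, ?_⟩
    simp only [Set.mem_setOf_eq, hN0 N le_rfl]
    omega
  intro i
  refine mem_iff_sInf_le hne (fun a b hab ha => ?_)
  simp only [Set.mem_setOf_eq] at ha ⊢
  have := hA hab; omega

lemma content_inj (hA : Antitone lam) {i i' : ℕ}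
    (h : (lam i : ℤ) - i = (lam i' : ℤ) - i') : i = i' := by
  rcases lt_trichotomy i i' with h' | h' | h'
  · have := hA h'.le; omega
  · exact h'
  · have := hA h'.le; omega

lemma K1_zero : K1 lam 0 = K2 lam 0 := by
  simp [K1, K2]

lemma step1 (hA : Antitone lam) {N : ℕ} (hN0 : ∀ i, N ≤ i → lam i = 0) (d : ℕ) :
    K1 lam d = K1 lam (d+1) + (if Bset lam (-(d:ℤ)) then 0 else 1) := by
  have h1 := K1_le_iff hA hN0 d
  have h2 := K1_le_iff hA hN0 (d+1)
  set j1 := K1 lam (d+1) with hj1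
  have hf1 : lam (j1 + (d+1)) ≤ j1 := (h2 j1).mpr le_rfl
  have hub : K1 lam d ≤ j1 + 1 := by
    rw [← h1]
    have : lam (j1 + 1 + d) ≤ j1 := by
      have : j1 + 1 + d = j1 + (d+1) := by omega
      rw [this]; exact hf1
    omega
  have hlb : j1 ≤ K1 lam d := by
    rw [← h2]
    have hK : lam (K1 lam d + d) ≤ K1 lam d := (h1 _).mpr le_rfl
    have : lam (K1 lam d + (d+1)) ≤ lam (K1 lam d + d) := hA (by omega)
    omega
  by_cases hb : Bset lam (-(d:ℤ))
  · rw [if_pos hb]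
    obtain ⟨i, hi⟩ := hb
    have hi' : i = lam i + d := by omega
    set j := lam i with hj
    have hKle : K1 lam d ≤ j := by
      rw [← h1]
      have : j + d = i := by omega
      rw [this]
    rcases Nat.eq_zero_or_pos j with hj0 | hj0
    · omega
    · have : ¬ (j1 ≤ j - 1) := by
        rw [← h2]
        have e : j - 1 + (d + 1) = j + d := by omega
        rw [e]
        have : j + d = i := by omega
        rw [this]; omega
      omega
  · rw [if_neg hb]
    rcases Nat.lt_or_ge (K1 lam d) (j1 + 1) with hlt | hge
    · exfalso
      have hKd : K1 lam d = j1 := by omega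
      have hle : lam (j1 + d) ≤ j1 := by rw [h1]; omega
      rcases Nat.eq_zero_or_pos j1 with h0 | h0
      · apply hb
        refine ⟨d, ?_⟩
        have h' : lam (0 + d) ≤ 0 := by rw [h1]; omega
        have h'' : lam d ≤ 0 := by simpa using h'
        omega
      · have : ¬ (lam (j1 - 1 + (d+1)) ≤ j1 - 1) := by rw [h2]; omega
        have e : j1 - 1 + (d+1) = j1 + d := by omega
        rw [e] at this
        apply hb
        refine ⟨j1 + d, ?_⟩
        omega
    · omega

lemma step2 (hA : Antitone lam) {N : ℕ} (hN0 : ∀ i, N ≤ i → lam i = 0) (e : ℕ) :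
    K2 lam e = K2 lam (e+1) + (if Bset lam ((e:ℤ)+1) then 1 else 0) := by
  have h1 := K2_le_iff hA hN0 e
  have h2 := K2_le_iff hA hN0 (e+1)
  set i1 := K2 lam (e+1) with hi1
  have hf1 : lam i1 ≤ i1 + (e+1) := (h2 i1).mpr le_rfl
  have hub : K2 lam e ≤ i1 + 1 := by
    rw [← h1]
    have := hA (show i1 ≤ i1 + 1 by omega)
    omega
  have hlb : i1 ≤ K2 lam e := by
    rw [← h2]
    have : lam (K2 lam e) ≤ K2 lam e + e := (h1 _).mpr le_rfl
    omega
  by_cases hb : Bset lam ((e:ℤ)+1)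
  · rw [if_pos hb]
    obtain ⟨i, hi⟩ := hb
    have hieq : lam i = i + e + 1 := by omega
    have hle1 : i1 ≤ i := by rw [← h2]; omega
    have hgt : ¬ (K2 lam e ≤ i) := by rw [← h1]; omega
    omega
  · rw [if_neg hb]
    have : lam i1 ≤ i1 + e := by
      rcases Nat.lt_or_ge (i1 + e) (lam i1) with hlt | hge
      · exfalso; exact hb ⟨i1, by omega⟩
      · exact hge
    have : K2 lam e ≤ i1 := by rw [← h1]; omega
    omega

lemma Iio_ncard (n : ℕ) : (Set.Iio n).ncard = n := by
  rw [← Finset.coe_range, Set.ncard_coe_finset, Finset.card_range]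

lemma diag_card_pos (hA : Antitone lam) {N : ℕ} (hN0 : ∀ i, N ≤ i → lam i = 0)
    (c : ℤ) (hc : 0 ≤ c) :
    {p : ℕ × ℕ | p.2 < lam p.1 ∧ (p.1 : ℤ) - p.2 = c}.ncard = K1 lam c.toNat := by
  have h1 := K1_le_iff hA hN0 c.toNat
  have hset : {p : ℕ × ℕ | p.2 < lam p.1 ∧ (p.1 : ℤ) - p.2 = c}
      = (fun j => (j + c.toNat, j)) '' (Set.Iio (K1 lam c.toNat)) := by
    ext p
    simp only [Set.mem_setOf_eq, Set.mem_image, Set.mem_Iio]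
    constructor
    · rintro ⟨hb, hd⟩
      refine ⟨p.2, ?_, ?_⟩
      · have hp1 : p.1 = p.2 + c.toNat := by omega
        rw [hp1] at hb
        have : ¬ (K1 lam c.toNat ≤ p.2) := by rw [← h1 p.2]; omega
        omega
      · have hp1 : p.1 = p.2 + c.toNat := by omega
        rw [Prod.ext_iff]; exact ⟨hp1.symm, rfl⟩
    · rintro ⟨j, hj, rfl⟩
      constructor
      · have : ¬ (lam (j + c.toNat) ≤ j) := by rw [h1 j]; omega
        simpa using this
      · simp; omega
  rw [hset, Set.ncard_image_of_injective _ (fun a b hab => by simpa using congrArg Prod.snd hab),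
    Iio_ncard]

lemma diag_card_neg (hA : Antitone lam) {N : ℕ} (hN0 : ∀ i, N ≤ i → lam i = 0)
    (c : ℤ) (hc : c ≤ 0) :
    {p : ℕ × ℕ | p.2 < lam p.1 ∧ (p.1 : ℤ) - p.2 = c}.ncard = K2 lam (-c).toNat := by
  have h1 := K2_le_iff hA hN0 (-c).toNat
  have hset : {p : ℕ × ℕ | p.2 < lam p.1 ∧ (p.1 : ℤ) - p.2 = c}
      = (fun i => (i, i + (-c).toNat)) '' (Set.Iio (K2 lam (-c).toNat)) := by
    ext p
    simp only [Set.mem_setOf_eq, Set.mem_image, Set.mem_Iio]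
    constructor
    · rintro ⟨hb, hd⟩
      refine ⟨p.1, ?_, ?_⟩
      · have hp2 : p.2 = p.1 + (-c).toNat := by omega
        have : ¬ (lam p.1 ≤ p.1 + (-c).toNat) := by omega
        have : ¬ (K2 lam (-c).toNat ≤ p.1) := by rw [← h1 p.1]; omega
        omega
      · have hp2 : p.2 = p.1 + (-c).toNat := by omega
        rw [Prod.ext_iff]; exact ⟨rfl, hp2.symm⟩
    · rintro ⟨i, hi, rfl⟩
      constructor
      · have : ¬ (lam i ≤ i + (-c).toNat) := by rw [h1 i]; omega
        simpa using this
      · simp; omega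
  rw [hset, Set.ncard_image_of_injective _ (fun a b hab => by simpa using congrArg Prod.fst hab),
    Iio_ncard]

lemma sub_finite (hA : Antitone lam) {N : ℕ} (hN0 : ∀ i, N ≤ i → lam i = 0)
    {S : Set (ℕ × ℕ)} (hS : ∀ p ∈ S, p.2 < lam p.1) : S.Finite := by
  apply Set.Finite.subset ((Finset.range N ×ˢ Finset.range (lam 0)).finite_toSet)
  intro p hp
  have h1 := hS p hp
  simp only [Finset.coe_product, Set.mem_prod, Finset.mem_coe, Finset.mem_range]
  constructor
  · by_contra h
    have := hN0 p.1 (by omega)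
    omega
  · have := hA (show 0 ≤ p.1 by omega)
    omega

lemma Mcomp (hA : Antitone lam) {N : ℕ} (hN0 : ∀ i, N ≤ i → lam i = 0)
    {m : ℝ} (hm : 0 ≤ m) {g : ℕ} (hg : (g : ℝ) = 2 * m) (c : ℤ)
    (hpos : 0 < m + (c : ℝ)) :
    Mmult lam m (m + (c : ℝ)) =
      (if 0 ≤ c then K1 lam c.toNat else K2 lam (-c).toNat) + K2 lam ((g : ℤ) + c).toNat := by
  have hgcR : (0 : ℝ) < ((g : ℤ) + c : ℤ) := by push_cast [hg]; linarith
  have hgc : (0 : ℤ) < (g : ℤ) + c := by exact_mod_cast hgcR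
  have hsplit : {p : ℕ × ℕ | p.2 < lam p.1 ∧ |(p.1 : ℝ) - (p.2 : ℝ) + m| = m + (c : ℝ)}
      = {p : ℕ × ℕ | p.2 < lam p.1 ∧ (p.1 : ℤ) - p.2 = c}
        ∪ {p : ℕ × ℕ | p.2 < lam p.1 ∧ (p.1 : ℤ) - p.2 = -((g : ℤ) + c)} := by
    ext p
    simp only [Set.mem_setOf_eq, Set.mem_union]
    constructor
    · rintro ⟨hb, habs⟩
      rcases (abs_eq (le_of_lt hpos)).mp habs with h | h
      · left
        refine ⟨hb, ?_⟩
        have : (p.1 : ℝ) - p.2 = (c : ℝ) := by linarith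
        exact_mod_cast this
      · right
        refine ⟨hb, ?_⟩
        have : (p.1 : ℝ) - p.2 = -(((g : ℤ) + c : ℤ) : ℝ) := by push_cast [hg] at *; linarith
        exact_mod_cast this
    · rintro (⟨hb, h⟩ | ⟨hb, h⟩) <;> refine ⟨hb, ?_⟩
      · have h' : (p.1 : ℝ) - p.2 = (c : ℝ) := by exact_mod_cast h
        rw [show (p.1 : ℝ) - p.2 + m = m + c by linarith]
        exact abs_of_pos hpos
      · have h' : (p.1 : ℝ) - p.2 = -(((g : ℤ) + c : ℤ) : ℝ) := by exact_mod_cast h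
        push_cast [hg] at h'
        rw [show (p.1 : ℝ) - p.2 + m = -(m + c) by linarith]
        rw [abs_neg]
        exact abs_of_pos hpos
  have hdisj : Disjoint {p : ℕ × ℕ | p.2 < lam p.1 ∧ (p.1 : ℤ) - p.2 = c}
      {p : ℕ × ℕ | p.2 < lam p.1 ∧ (p.1 : ℤ) - p.2 = -((g : ℤ) + c)} := by
    rw [Set.disjoint_left]
    rintro p ⟨_, h1⟩ ⟨_, h2⟩
    have hmc : (0:ℝ) < 2 * m + 2 * c := by linarith
    have : (0:ℝ) < ((g:ℤ):ℝ) + 2 * c := by push_cast [hg]; linarith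
    have : (0:ℤ) < (g:ℤ) + 2 * c := by exact_mod_cast this
    omega
  unfold Mmult
  rw [hsplit, Set.ncard_union_eq hdisj
    (sub_finite hA hN0 (fun p hp => hp.1)) (sub_finite hA hN0 (fun p hp => hp.1))]
  congr 1
  · by_cases hc : 0 ≤ c
    · rw [if_pos hc, diag_card_pos hA hN0 c hc]
    · rw [if_neg hc, diag_card_neg hA hN0 c (by omega)]
  · rw [diag_card_neg hA hN0 _ (by omega)]
    congr 1
    omega

lemma Mzero (hA : Antitone lam) {N : ℕ} (hN0 : ∀ i, N ≤ i → lam i = 0)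
    {m : ℝ} {m' : ℕ} (hm' : (m' : ℝ) = m) :
    Mmult lam m 0 = K2 lam m' := by
  have hset : {p : ℕ × ℕ | p.2 < lam p.1 ∧ |(p.1 : ℝ) - (p.2 : ℝ) + m| = 0}
      = {p : ℕ × ℕ | p.2 < lam p.1 ∧ (p.1 : ℤ) - p.2 = -(m' : ℤ)} := by
    ext p
    simp only [Set.mem_setOf_eq, abs_eq_zero]
    constructor
    · rintro ⟨hb, h⟩
      refine ⟨hb, ?_⟩
      have : (p.1 : ℝ) - p.2 = -((m' : ℤ) : ℝ) := by push_cast [hm']; linarith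
      exact_mod_cast this
    · rintro ⟨hb, h⟩
      refine ⟨hb, ?_⟩
      have h' : (p.1 : ℝ) - p.2 = -((m' : ℤ) : ℝ) := by exact_mod_cast h
      push_cast [hm'] at h'
      linarith
  unfold Mmult
  rw [hset, diag_card_neg hA hN0 _ (by omega)]
  congr 1
  omega

/-- The symmetry condition on contents. -/
def SYM (lam : ℕ → ℕ) (m : ℝ) (g : ℕ) : Prop :=
  ∀ k : ℤ, m + 1 ≤ (k : ℝ) → Bset lam k → Bset lam ((g : ℤ) + 1 - k)

lemma clause1_iff (hA : Antitone lam) {N : ℕ} (hN0 : ∀ i, N ≤ i → lam i = 0)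
    {m : ℝ} (hm : 0 ≤ m) {g : ℕ} (hg : (g : ℝ) = 2 * m) (c : ℤ) (hc : 0 ≤ c)
    (hpos : 0 < m + (c : ℝ)) :
    (Mmult lam m ((m + (c : ℝ)) + 1) ≤ Mmult lam m (m + (c : ℝ)) ∧
      Mmult lam m (m + (c : ℝ)) ≤ Mmult lam m ((m + (c : ℝ)) + 1) + 1)
    ↔ (Bset lam ((g : ℤ) + c + 1) → Bset lam (-c)) := by
  have e1 : (m + (c : ℝ)) + 1 = m + ((c + 1 : ℤ) : ℝ) := by push_cast; ring
  have hpos1 : 0 < m + ((c + 1 : ℤ) : ℝ) := by push_cast; push_cast at hpos; linarith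
  rw [e1, Mcomp hA hN0 hm hg c hpos, Mcomp hA hN0 hm hg (c + 1) hpos1,
    if_pos hc, if_pos (by omega : (0:ℤ) ≤ c + 1)]
  have hgcR : (0 : ℝ) < ((g : ℤ) + c : ℤ) := by push_cast [hg]; linarith
  have hgc : (0 : ℤ) < (g : ℤ) + c := by exact_mod_cast hgcR
  have t1 : (c + 1).toNat = c.toNat + 1 := by omega
  have t2 : ((g : ℤ) + (c + 1)).toNat = ((g : ℤ) + c).toNat + 1 := by omega
  rw [t1, t2]
  have s1 := step1 hA hN0 c.toNat
  have s2 := step2 hA hN0 ((g : ℤ) + c).toNat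
  rw [show (-(c.toNat : ℤ)) = -c by omega] at s1
  rw [show ((((g : ℤ) + c).toNat : ℤ) + 1) = (g : ℤ) + c + 1 by omega] at s2
  by_cases b1 : Bset lam (-c) <;> by_cases b2 : Bset lam ((g : ℤ) + c + 1) <;>
    simp only [b1, b2, if_true, if_false, iff_true, iff_false, Classical.not_imp,
      imp_iff_right, true_implies, false_implies, iff_true] at s1 s2 ⊢ <;>
    omega

lemma clause2_iff (hA : Antitone lam) {N : ℕ} (hN0 : ∀ i, N ≤ i → lam i = 0)
    {m : ℝ} (hm : 0 ≤ m) {g : ℕ} (hg : (g : ℝ) = 2 * m) (c : ℤ) (hc : c < 0)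
    (hpos : 0 < m + (c : ℝ)) :
    (Mmult lam m (m + (c : ℝ)) ≤ Mmult lam m ((m + (c : ℝ)) + 1) ∧
      Mmult lam m ((m + (c : ℝ)) + 1) ≤ Mmult lam m (m + (c : ℝ)) + 1)
    ↔ (Bset lam ((g : ℤ) + c + 1) → Bset lam (-c)) := by
  have e1 : (m + (c : ℝ)) + 1 = m + ((c + 1 : ℤ) : ℝ) := by push_cast; ring
  have hpos1 : 0 < m + ((c + 1 : ℤ) : ℝ) := by push_cast; push_cast at hpos; linarith
  have hgcR : (0 : ℝ) < ((g : ℤ) + c : ℤ) := by push_cast [hg]; linarith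
  have hgc : (0 : ℤ) < (g : ℤ) + c := by exact_mod_cast hgcR
  have hM1 : Mmult lam m ((m + (c : ℝ)) + 1)
      = K2 lam (-(c + 1)).toNat + K2 lam ((g : ℤ) + c + 1).toNat := by
    rw [e1, Mcomp hA hN0 hm hg (c + 1) hpos1,
      show ((g : ℤ) + (c + 1)).toNat = ((g : ℤ) + c + 1).toNat by omega]
    congr 1
    rcases eq_or_lt_of_le (by omega : c + 1 ≤ 0) with h0 | h0
    · rw [if_pos (by omega : (0:ℤ) ≤ c + 1),
        show (c + 1).toNat = 0 by omega, show (-(c+1)).toNat = 0 by omega]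
      exact K1_zero
    · rw [if_neg (by omega)]
  rw [hM1, Mcomp hA hN0 hm hg c hpos, if_neg (by omega)]
  have s1 := step2 hA hN0 (-(c + 1)).toNat
  have s2 := step2 hA hN0 ((g : ℤ) + c).toNat
  rw [show ((-(c + 1)).toNat : ℤ) + 1 = -c by omega,
    show (-(c + 1)).toNat + 1 = (-c).toNat by omega] at s1
  rw [show ((((g : ℤ) + c).toNat : ℤ) + 1) = (g : ℤ) + c + 1 by omega,
    show (((g : ℤ) + c).toNat + 1) = ((g : ℤ) + c + 1).toNat by omega] at s2
  by_cases b1 : Bset lam (-c) <;> by_cases b2 : Bset lam ((g : ℤ) + c + 1) <;>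
    simp only [b1, b2, if_true, if_false, iff_true, iff_false, Classical.not_imp,
      imp_iff_right, true_implies, false_implies, iff_true] at s1 s2 ⊢ <;>
    omega

lemma clause3_iff (hA : Antitone lam) {N : ℕ} (hN0 : ∀ i, N ≤ i → lam i = 0)
    {m : ℝ} (hm : 0 ≤ m) (m' : ℕ) (hm' : (m' : ℝ) = m) :
    ((m = 0 → Mmult lam m 0 = (Mmult lam m 1 + 1) / 2) ∧
      (m ≠ 0 → Mmult lam m 0 = Mmult lam m 1 / 2))
    ↔ (Bset lam ((m' : ℤ) + 1) → Bset lam (m' : ℤ)) := by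
  have hg : ((2 * m' : ℕ) : ℝ) = 2 * m := by push_cast [hm']; ring
  have h0 : Mmult lam m 0 = K2 lam m' := Mzero hA hN0 hm'
  have e1 : (1 : ℝ) = m + ((1 - (m' : ℤ) : ℤ) : ℝ) := by push_cast [← hm']; ring
  have h1 : Mmult lam m 1 =
      (if 0 ≤ 1 - (m' : ℤ) then K1 lam (1 - (m' : ℤ)).toNat
        else K2 lam (-(1 - (m' : ℤ))).toNat) + K2 lam (m' + 1) := by
    rw [e1, Mcomp hA hN0 hm hg (1 - (m' : ℤ)) (by rw [← e1]; norm_num),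
      show (((2 * m' : ℕ) : ℤ) + (1 - (m' : ℤ))).toNat = m' + 1 by omega]
  rcases Nat.eq_zero_or_pos m' with hz | hpos'
  · subst hz
    have hm0 : m = 0 := by rw [← hm']; norm_num
    rw [hm0] at h0 h1
    simp only [hm0, ne_eq, not_true_eq_false, false_implies, and_true, true_implies]
    rw [h0, h1, if_pos (by omega)]
    have s1 := step1 hA hN0 0
    have s2 := step2 hA hN0 0
    rw [show (-((0:ℕ) : ℤ)) = ((0:ℕ):ℤ) by omega] at s1
    rw [show (((0:ℕ) : ℤ) + 1) = ((0:ℕ):ℤ) + 1 by omega] at s2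
    have hK10 : K1 lam 0 = K2 lam 0 := K1_zero
    norm_num at s1 s2 ⊢
    by_cases b1 : Bset lam 0 <;> by_cases b2 : Bset lam 1 <;>
      simp only [b1, b2, if_true, if_false, iff_true, iff_false, Classical.not_imp,
        true_implies, false_implies, iff_true] at s1 s2 ⊢ <;>
      omega
  · have hmne : m ≠ 0 := by
      rw [← hm']
      have : (1:ℝ) ≤ (m' : ℝ) := by exact_mod_cast hpos'
      linarith
    have h1' : Mmult lam m 1 = K2 lam (m' - 1) + K2 lam (m' + 1) := by
      rw [h1]
      congr 1
      rcases eq_or_lt_of_le (show 1 ≤ m' from hpos') with h2' | h2'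
      · rw [if_pos (by omega), show (1 - (m':ℤ)).toNat = 0 by omega,
          show m' - 1 = 0 by omega]
        exact K1_zero
      · rw [if_neg (by omega), show (-(1 - (m':ℤ))).toNat = m' - 1 by omega]
    simp only [hmne, ne_eq, not_false_eq_true, true_implies, false_implies, true_and]
    rw [h0, h1']
    have s1 := step2 hA hN0 (m' - 1)
    have s2 := step2 hA hN0 m'
    rw [show (m' - 1) + 1 = m' by omega,
      show (((m' - 1 : ℕ) : ℤ)) + 1 = (m' : ℤ) by omega] at s1
    by_cases b1 : Bset lam (m' : ℤ) <;> by_cases b2 : Bset lam ((m' : ℤ) + 1) <;>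
      simp only [b1, b2, if_true, if_false, iff_true, iff_false, Classical.not_imp,
        true_implies, false_implies, iff_true] at s1 s2 ⊢ <;>
      omega

lemma Residual_def {m : ℝ} :
    Residual lam m ↔
    ((∀ l : ℝ, (∃ c : ℤ, l = m + c) → 0 < l → m ≤ l →
      Mmult lam m (l + 1) ≤ Mmult lam m l ∧
      Mmult lam m l ≤ Mmult lam m (l + 1) + 1) ∧
    (∀ l : ℝ, (∃ c : ℤ, l = m + c) → 0 < l → l ≤ m - 1 →
      Mmult lam m l ≤ Mmult lam m (l + 1) ∧
      Mmult lam m (l + 1) ≤ Mmult lam m l + 1) ∧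
    ((∃ c : ℤ, m = (c : ℝ)) →
      (m = 0 → Mmult lam m 0 = (Mmult lam m 1 + 1) / 2) ∧
      (m ≠ 0 → Mmult lam m 0 = Mmult lam m 1 / 2))) := Iff.rfl

lemma resid_iff (hA : Antitone lam) {N : ℕ} (hN0 : ∀ i, N ≤ i → lam i = 0)
    {m : ℝ} (hm : 0 ≤ m) {g : ℕ} (hg : (g : ℝ) = 2 * m) :
    Residual lam m ↔ SYM lam m g := by
  rw [Residual_def]
  constructor
  · rintro ⟨h1, h2, h3⟩ k hk hBk
    set c : ℤ := k - 1 - (g : ℤ) with hcdef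
    have hck : (g : ℤ) + c + 1 = k := by omega
    have hkR : ((k : ℤ) : ℝ) = (k : ℝ) := by norm_num
    have hmc0 : 0 ≤ m + (c : ℝ) := by
      have : (c : ℝ) = (k : ℝ) - 1 - (g : ℝ) := by push_cast [hcdef]; ring
      rw [this, hg]; linarith
    have hgoal : Bset lam ((g : ℤ) + 1 - k) = Bset lam (-c) := by
      congr 1; omega
    rw [hgoal]
    have hBk' : Bset lam ((g : ℤ) + c + 1) := by rwa [hck]
    rcases lt_or_eq_of_le hmc0 with hpos | heq
    · rcases le_or_gt 0 c with hc0 | hc0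
      · have hml : m ≤ m + (c : ℝ) := by
          have : (0:ℝ) ≤ (c : ℝ) := by exact_mod_cast hc0
          linarith
        have := h1 (m + (c : ℝ)) ⟨c, rfl⟩ hpos hml
        exact (clause1_iff hA hN0 hm hg c hc0 hpos).mp this hBk'
      · have hml : m + (c : ℝ) ≤ m - 1 := by
          have : (c : ℝ) ≤ -1 := by exact_mod_cast (show c ≤ -1 by omega)
          linarith
        have := h2 (m + (c : ℝ)) ⟨c, rfl⟩ hpos hml
        exact (clause2_iff hA hN0 hm hg c hc0 hpos).mp this hBk'
    · -- m + c = 0, so m is the integer -c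
      have hmc : m = ((-c : ℤ) : ℝ) := by push_cast; linarith
      have hcneg : 0 ≤ -c := by
        have : (0:ℝ) ≤ ((-c : ℤ) : ℝ) := by rw [← hmc]; exact hm
        exact_mod_cast this
      set m' : ℕ := (-c).toNat with hm'def
      have hm' : (m' : ℝ) = m := by
        rw [hmc]; norm_cast; omega
      have := h3 ⟨(m' : ℤ), by rw [← hm']; norm_num⟩
      have himp := (clause3_iff hA hN0 hm m' hm').mp this
      have e1 : ((m' : ℤ) + 1) = (g : ℤ) + c + 1 := by
        have : ((g:ℤ):ℝ) = 2 * ((m':ℤ):ℝ) := by push_cast [hg, hm']; push_cast; ring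
        have hg2 : (g : ℤ) = 2 * (m' : ℤ) := by exact_mod_cast this
        omega
      have e2 : ((m' : ℤ)) = -c := by omega
      rw [e1, e2] at himp
      exact himp hBk'
  · intro hS
    have key : ∀ c : ℤ, 0 < m + (c : ℝ) → (Bset lam ((g:ℤ) + c + 1) → Bset lam (-c)) := by
      intro c hpos hB
      have hk : m + 1 ≤ (((g:ℤ) + c + 1 : ℤ) : ℝ) := by push_cast [hg]; linarith
      have := hS ((g:ℤ) + c + 1) hk hB
      rwa [show (g:ℤ) + 1 - ((g:ℤ) + c + 1) = -c by ring] at this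
    refine ⟨?_, ?_, ?_⟩
    · rintro l ⟨c, rfl⟩ hpos hml
      have hc0 : 0 ≤ c := by
        have : (0:ℝ) ≤ (c:ℝ) := by linarith
        exact_mod_cast this
      exact (clause1_iff hA hN0 hm hg c hc0 hpos).mpr (key c hpos)
    · rintro l ⟨c, rfl⟩ hpos hml
      have hc0 : c < 0 := by
        have : (c:ℝ) ≤ -1 := by linarith
        have : (c:ℝ) < 0 := by linarith
        exact_mod_cast this
      exact (clause2_iff hA hN0 hm hg c hc0 hpos).mpr (key c hpos)
    · rintro ⟨c0, hc0⟩
      have hc0n : 0 ≤ c0 := by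
        have : (0:ℝ) ≤ (c0:ℝ) := by rw [← hc0]; exact hm
        exact_mod_cast this
      set m' : ℕ := c0.toNat with hm'def
      have hm' : (m' : ℝ) = m := by rw [hc0]; norm_cast; omega
      refine (clause3_iff hA hN0 hm m' hm').mpr ?_
      intro hB
      have hg2 : (g : ℤ) = 2 * (m' : ℤ) := by
        have : ((g:ℤ):ℝ) = ((2 * (m':ℤ) : ℤ):ℝ) := by push_cast [hg, hm']; push_cast; ring
        exact_mod_cast this
      have hk : m + 1 ≤ (((m':ℤ) + 1 : ℤ) : ℝ) := by push_cast [hm']; linarith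
      have := hS ((m':ℤ) + 1) hk hB
      rwa [show (g:ℤ) + 1 - ((m':ℤ) + 1) = (m':ℤ) by omega] at this

lemma conj_eq (hA : Antitone lam) {N : ℕ} (hN0 : ∀ i, N ≤ i → lam i = 0)
    (j : ℕ) : conj lam (j + 1) = CF lam j := by
  have h := CF_le_iff hA hN0 j
  have hset : {i : ℕ | j + 1 ≤ lam i} = Set.Iio (CF lam j) := by
    ext i
    simp only [Set.mem_setOf_eq, Set.mem_Iio]
    constructor
    · intro hi
      by_contra hc
      have : lam i ≤ j := by rw [h i]; omega
      omega
    · intro hi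
      have : ¬ (lam i ≤ j) := by rw [h i]; omega
      omega
  rw [conj, hset, Iio_ncard]

lemma CF_antitone (hA : Antitone lam) {N : ℕ} (hN0 : ∀ i, N ≤ i → lam i = 0)
    {j j' : ℕ} (hj : j ≤ j') : CF lam j' ≤ CF lam j := by
  rw [← CF_le_iff hA hN0 j']
  have : lam (CF lam j) ≤ j := (CF_le_iff hA hN0 j (CF lam j)).mpr le_rfl
  omega

/-- The duality between columns ending on a given diagonal and contents. -/
lemma dual (hA : Antitone lam) {N : ℕ} (hN0 : ∀ i, N ≤ i → lam i = 0) (d : ℤ) :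
    (∃ j : ℕ, 1 ≤ CF lam j ∧ (CF lam j : ℤ) = (j : ℤ) + 1 + d)
    ↔ (¬ Bset lam (-d) ∧ (0 < -d → -d ≤ (lam 0 : ℤ))) := by
  have hCF := CF_le_iff hA hN0
  constructor
  · rintro ⟨j, h1, h2⟩
    have hlam0 : ¬ (lam 0 ≤ j) := by rw [hCF j 0]; omega
    constructor
    · rintro ⟨i, hi⟩
      have hc1 : lam (CF lam j) ≤ j := (hCF j _).mpr le_rfl
      rcases le_or_gt (CF lam j) i with hord | hord
      · have := hA hord
        omega
      · have : ¬ (lam i ≤ j) := by rw [hCF j i]; omega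
        omega
    · intro hd
      omega
  · rintro ⟨hnb, hcav⟩
    -- least index i0 with lam i0 ≤ i0 - d  (as integers)
    set S : Set ℕ := {i : ℕ | (lam i : ℤ) ≤ (i : ℤ) - d} with hS
    have hSne : S.Nonempty := by
      refine ⟨N + d.toNat, ?_⟩
      simp only [hS, Set.mem_setOf_eq, hN0 (N + d.toNat) (by omega)]
      push_cast
      omega
    have hSup : ∀ a b : ℕ, a ≤ b → a ∈ S → b ∈ S := by
      intro a b hab ha
      simp only [hS, Set.mem_setOf_eq] at ha ⊢
      have := hA hab
      omega
    set i0 := sInf S with hi0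
    have hmem : ∀ i : ℕ, i ∈ S ↔ i0 ≤ i := fun i => mem_iff_sInf_le hSne hSup
    have hi0S : (lam i0 : ℤ) ≤ (i0 : ℤ) - d := by
      have : i0 ∈ S := (hmem i0).mpr le_rfl
      simpa [hS] using this
    have hi0pos : 1 ≤ i0 := by
      by_contra hc
      have h00 : (0:ℕ) ∈ S := by rw [hmem]; omega
      simp only [hS, Set.mem_setOf_eq] at h00
      rcases lt_trichotomy (-d) 0 with hd | hd | hd
      · omega
      · exact hnb ⟨0, by push_cast; omega⟩
      · have := hcav hd
        exact hnb ⟨0, by push_cast; omega⟩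
    have hi0d : (d : ℤ) + 1 ≤ (i0 : ℤ) := by
      rcases le_or_gt d 0 with hd | hd
      · omega
      · by_contra hc
        have hdS : d.toNat ∈ S := by
          rw [hmem]; omega
        simp only [hS, Set.mem_setOf_eq] at hdS
        have : lam d.toNat = 0 := by omega
        exact hnb ⟨d.toNat, by omega⟩
    set j : ℕ := ((i0 : ℤ) - 1 - d).toNat with hjdef
    have hjZ : (j : ℤ) = (i0 : ℤ) - 1 - d := by omega
    have hup : CF lam j ≤ i0 := by
      rw [← hCF j i0]
      have hne : (lam i0 : ℤ) ≠ (i0 : ℤ) - d := fun hc => hnb ⟨i0, by omega⟩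
      omega
    have hdown : ¬ (CF lam j ≤ i0 - 1) := by
      rw [← hCF j (i0 - 1)]
      have : ¬ ((i0 - 1 : ℕ) ∈ S) := by rw [hmem]; omega
      simp only [hS, Set.mem_setOf_eq] at this
      omega
    exact ⟨j, by omega, by omega⟩

lemma subsing_ncard_le_one {α : Type*} {s : Set α} (hs : s.Subsingleton) :
    s.ncard ≤ 1 := by
  rcases hs.eq_empty_or_singleton with rfl | ⟨a, rfl⟩ <;> simp

lemma ext_iff_sym (hA : Antitone lam) {N : ℕ} (hN0 : ∀ i, N ≤ i → lam i = 0)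
    {m : ℝ} (hm : 0 ≤ m) {g : ℕ} (hg : (g : ℝ) = 2 * m) :
    (∀ x : ℝ, extMult lam m x ≤ 1) ↔ SYM lam m g := by
  have hext : ∀ x : ℝ, extMult lam m x =
      {i : ℕ | 0 < lam i ∧ ((i : ℝ) + 1) - lam i + m ≤ 0 ∧
        (lam i : ℝ) - ((i : ℝ) + 1) - m = x}.ncard +
      {j : ℕ | 0 < conj lam (j + 1) ∧
        0 ≤ (conj lam (j + 1) : ℝ) - ((j : ℝ) + 1) + m ∧
        (conj lam (j + 1) : ℝ) - ((j : ℝ) + 1) + m = x}.ncard := fun x => rfl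
  have hRsub : ∀ x : ℝ, {i : ℕ | 0 < lam i ∧ ((i : ℝ) + 1) - lam i + m ≤ 0 ∧
      (lam i : ℝ) - ((i : ℝ) + 1) - m = x}.Subsingleton := by
    intro x i hi i' hi'
    simp only [Set.mem_setOf_eq] at hi hi'
    have e : (lam i : ℝ) - i = (lam i' : ℝ) - i' := by linarith [hi.2.2, hi'.2.2]
    have e' : (lam i : ℤ) - i = (lam i' : ℤ) - i' := by exact_mod_cast e
    exact content_inj hA e'
  have hCsub : ∀ x : ℝ, {j : ℕ | 0 < conj lam (j + 1) ∧
      0 ≤ (conj lam (j + 1) : ℝ) - ((j : ℝ) + 1) + m ∧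
      (conj lam (j + 1) : ℝ) - ((j : ℝ) + 1) + m = x}.Subsingleton := by
    intro x j hj j' hj'
    simp only [Set.mem_setOf_eq] at hj hj'
    have e : (conj lam (j+1) : ℝ) - (j+1) = (conj lam (j'+1) : ℝ) - (j'+1) := by
      linarith [hj.2.2, hj'.2.2]
    rw [conj_eq hA hN0, conj_eq hA hN0] at e
    rcases lt_trichotomy j j' with h' | h' | h'
    · exfalso
      have := CF_antitone hA hN0 h'.le
      have : (j:ℝ) < j' := by exact_mod_cast h'
      have : (CF lam j' : ℝ) ≤ CF lam j := by exact_mod_cast CF_antitone hA hN0 h'.le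
      linarith
    · exact h'
    · exfalso
      have : (j':ℝ) < j := by exact_mod_cast h'
      have : (CF lam j : ℝ) ≤ CF lam j' := by exact_mod_cast CF_antitone hA hN0 h'.le
      linarith
  constructor
  · intro hdist k hk hBk
    by_contra hnb
    set x : ℝ := (k : ℝ) - m - 1 with hx
    obtain ⟨i, hi⟩ := hBk
    have hk1 : 1 ≤ k := by
      have : (1:ℝ) ≤ (k:ℝ) := by linarith
      exact_mod_cast this
    have hlamI : (lam i : ℤ) = (i : ℤ) + k := by omega
    have hlamIR : (lam i : ℝ) = (i : ℝ) + (k : ℝ) := by exact_mod_cast hlamI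
    have hiR : i ∈ {i : ℕ | 0 < lam i ∧ ((i : ℝ) + 1) - lam i + m ≤ 0 ∧
        (lam i : ℝ) - ((i : ℝ) + 1) - m = x} := by
      refine ⟨?_, ?_, ?_⟩
      · have : (0:ℤ) < lam i := by omega
        exact_mod_cast this
      · rw [hlamIR]; linarith
      · rw [hlamIR, hx]; ring
    -- column witness
    have hlam0 : (k : ℤ) ≤ (lam 0 : ℤ) := by
      have := hA (show 0 ≤ i by omega)
      omega
    have h2k : (g : ℤ) + 2 ≤ 2 * k := by
      have : (g : ℝ) + 2 ≤ 2 * (k : ℝ) := by rw [hg]; linarith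
      exact_mod_cast this
    obtain ⟨j, hj1, hj2⟩ := (dual hA hN0 ((k : ℤ) - 1 - (g:ℤ))).mpr
      ⟨by rwa [show -((k : ℤ) - 1 - (g:ℤ)) = (g:ℤ) + 1 - k by ring],
       fun hpos => by omega⟩
    have hjC : j ∈ {j : ℕ | 0 < conj lam (j + 1) ∧
        0 ≤ (conj lam (j + 1) : ℝ) - ((j : ℝ) + 1) + m ∧
        (conj lam (j + 1) : ℝ) - ((j : ℝ) + 1) + m = x} := by
      rw [Set.mem_setOf_eq, conj_eq hA hN0]
      have hCFR : (CF lam j : ℝ) = (j : ℝ) + 1 + ((k:ℝ) - 1 - (g:ℝ)) := by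
        exact_mod_cast hj2
      refine ⟨hj1, ?_, ?_⟩
      · rw [hCFR, hg]; linarith
      · rw [hCFR, hg, hx]; ring
    have h1 := (Set.ncard_pos ((hRsub x).finite)).mpr ⟨i, hiR⟩
    have h2 := (Set.ncard_pos ((hCsub x).finite)).mpr ⟨j, hjC⟩
    have := hdist x
    rw [hext x] at this
    omega
  · intro hS x
    rw [hext x]
    rcases Set.eq_empty_or_nonempty {i : ℕ | 0 < lam i ∧ ((i : ℝ) + 1) - lam i + m ≤ 0 ∧
        (lam i : ℝ) - ((i : ℝ) + 1) - m = x} with hRe | hRne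
    · rw [hRe, Set.ncard_empty]
      have := subsing_ncard_le_one (hCsub x)
      omega
    rcases Set.eq_empty_or_nonempty {j : ℕ | 0 < conj lam (j + 1) ∧
        0 ≤ (conj lam (j + 1) : ℝ) - ((j : ℝ) + 1) + m ∧
        (conj lam (j + 1) : ℝ) - ((j : ℝ) + 1) + m = x} with hCe | hCne
    · rw [hCe, Set.ncard_empty]
      have := subsing_ncard_le_one (hRsub x)
      omega
    exfalso
    obtain ⟨i, hi⟩ := hRne
    obtain ⟨j, hj⟩ := hCne
    simp only [Set.mem_setOf_eq] at hi hj
    set k : ℤ := (lam i : ℤ) - i with hk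
    have hkR : (k : ℝ) = (lam i : ℝ) - i := by push_cast [hk]; ring
    have hxk : x = (k : ℝ) - m - 1 := by rw [hkR]; linarith [hi.2.2]
    have hmk : m + 1 ≤ (k : ℝ) := by rw [hkR]; linarith [hi.2.1]
    have hBk : Bset lam k := ⟨i, rfl⟩
    rw [conj_eq hA hN0] at hj
    have hdualIn : ∃ j' : ℕ, 1 ≤ CF lam j' ∧
        (CF lam j' : ℤ) = (j' : ℤ) + 1 + ((k:ℤ) - 1 - (g:ℤ)) := by
      refine ⟨j, ?_, ?_⟩
      · have : (0:ℕ) < CF lam j := hj.1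
        omega
      · have : (CF lam j : ℝ) = (j : ℝ) + 1 + ((k:ℝ) - 1 - (g:ℝ)) := by
          rw [hg]; rw [hxk] at hj; linarith [hj.2.2]
        exact_mod_cast this
    have := ((dual hA hN0 ((k : ℤ) - 1 - (g:ℤ))).mp hdualIn).1
    rw [show -((k : ℤ) - 1 - (g:ℤ)) = (g:ℤ) + 1 - k by ring] at this
    exact this (hS k hmk hBk)

end Stmt4Aux

/-- for `m ≥ 0` with `2m ∈ ℤ` and a partition `lam` of `n`, the
`m`-tableau `T_m(λ)` is residual if and only if the extremities of `T_m(λ)`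
are pairwise distinct (the multiset of extremities has no repeated element). -/
theorem stmt4 (n : ℕ) (m : ℝ) (hm0 : 0 ≤ m)
    (h2m : ∃ c : ℤ, 2 * m = (c : ℝ))
    (lam : ℕ → ℕ) (hlam : IsPartitionOf lam n) :
    Residual lam m ↔ ∀ x : ℝ, extMult lam m x ≤ 1 := by
  obtain ⟨hA, N, hN0, -⟩ := hlam
  obtain ⟨c2, hc2⟩ := h2m
  have hc2n : 0 ≤ c2 := by
    have : (0:ℝ) ≤ (c2 : ℝ) := by rw [← hc2]; linarith
    exact_mod_cast this
  have hg : ((c2.toNat : ℕ) : ℝ) = 2 * m := by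
    rw [hc2]
    norm_cast
    omega
  rw [Stmt4Aux.resid_iff hA hN0 hm0 hg, ← Stmt4Aux.ext_iff_sym hA hN0 hm0 hg]
end

section
/- Let m ≥ 0 with 2m ∈ ℤ and let λ be a partition of n. Then there exist a partition ν whose Young diagram is contained in that of λ, an integer s ≥ 0, and pairwise distinct values l_1 > l_2 > … > l_s ≥ 0 with each l_i − m ∈ ℤ (so l_i ∈ ℤ_{≥0} if m ∈ ℤ, and l_i ∈ ℤ_{≥0} + 1/2 otherwise), such that T_m(ν) is residual and, as multisets, the entries of T_m(λ) equal the entries of T_m(ν) together with the multisets H_{l_1}, …, H_{l_s}, where H_l = {|x| : x ∈ ℤ, −l ≤ x ≤ l} = {0, 1, 1, 2, 2, …, l, l} if m ∈ ℤ and H_l = {|x| : x ∈ ℤ + 1/2, −l ≤ x ≤ l} = {1/2, 1/2, 3/2, 3/2, …, l, l} if m ∉ ℤ. In particular |ν| = n − Σ_{i=1}^s (2 l_i + 1), and the numbers 2 l_i + 1 are pairwise distinct, all odd when m ∈ ℤ and all even when m ∉ ℤ. -/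
open scoped Classical

/-- The multiplicity of the value `x` in the "hook" multiset
`H_l = {|y| : y ∈ l - ℤ, -l ≤ y ≤ l}` (so `H_l = {0,1,1,…,l,l}` when `l ∈ ℤ`
and `H_l = {1/2,1/2,…,l,l}` when `l ∈ ℤ + 1/2`). -/
noncomputable def hookMult (l : ℝ) (x : ℝ) : ℕ :=
  Set.ncard {k : ℤ | -l ≤ l - (k : ℝ) ∧ l - (k : ℝ) ≤ l ∧ |l - (k : ℝ)| = x}

/-!
Encode a Young diagram by its diagonal lengths `g d = #{(i, j) ∈ λ | i - j = d}`. A function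
`g : ℤ → ℕ` of finite support arises this way iff it rises by steps of at most one up to the
main diagonal and falls by steps of at most one after it. The entry of a box of content `d` in
`T_m(λ)` is `|d + m|`, so the diagonals `c` and `-c - 2m` carry the same entry `m + c`, and
`M_{m+c} = g c + g (-c - 2m)`. Hence removing the multiset `H_{B+m}` is the same as lowering
`g` by one on the interval of diagonals `[-B - 2m, B]`; this keeps a diagonal profile exactly
when the interval is removable, a condition read off at its two ends.

Greedily remove the removable interval with the largest right end `B`: afterwards every
removable interval ends strictly left of `B`, so the `B`s strictly decrease, and the weight
drops at each step. When nothing is removable any more, the step conditions on `g` at `c`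
and `-c - 2m`, together with the failure of removability, give exactly the conditions of
residuality on `M_{m+c} - M_{m+c+1}`.
-/

lemma Set.Finite.eq_Iio_ncard {S : Set ℕ} (hS : S.Finite) (hsucc : ∀ j, j + 1 ∈ S → j ∈ S) :
    S = Set.Iio S.ncard := by
  have hlow : IsLowerSet S := by
    intro a b hba ha
    obtain ⟨k, rfl⟩ := Nat.exists_eq_add_of_le hba
    clear hba
    induction k with
    | zero => exact ha
    | succ k ih => exact ih (hsucc _ (by rwa [← add_assoc] at ha))
  rcases hlow.eq_univ_or_Iio with h | ⟨a, rfl⟩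
  · exact absurd (h ▸ hS) Set.infinite_univ
  · rw [Set.ncard_Iio_nat]

def IsDiagonalProfile (g : ℤ → ℕ) : Prop :=
  (∀ d, 0 ≤ d → g (d + 1) ≤ g d ∧ g d ≤ g (d + 1) + 1) ∧
  (∀ d, d < 0 → g d ≤ g (d + 1) ∧ g (d + 1) ≤ g d + 1)

namespace IsDiagonalProfile

variable {g : ℤ → ℕ}

lemma antitoneOn (hg : IsDiagonalProfile g) : AntitoneOn g (Set.Ici 0) :=
  antitoneOn_of_succ_le Set.ordConnected_Ici fun d _ hd _ => (hg.1 d hd).1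

lemma monotoneOn (hg : IsDiagonalProfile g) : MonotoneOn g (Set.Iic 0) :=
  monotoneOn_of_le_succ Set.ordConnected_Iic fun d _ _ hd =>
    (hg.2 d (by simp [Order.succ_eq_add_one] at hd; omega)).1

lemma min_le {A B d : ℤ} (hg : IsDiagonalProfile g) (hAd : A ≤ d) (hdB : d ≤ B) :
    min (g A) (g B) ≤ g d := by
  rcases le_or_gt d 0 with hd | hd
  · exact (min_le_left _ _).trans (hg.monotoneOn (hAd.trans hd) hd hAd)
  · exact (min_le_right _ _).trans (hg.antitoneOn hd.le (hd.le.trans hdB) hdB)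

end IsDiagonalProfile

noncomputable def diagCount (lam : ℕ → ℕ) (d : ℤ) : ℕ :=
  Set.ncard {p : ℕ × ℕ | p.2 < lam p.1 ∧ (p.1 : ℤ) - p.2 = d}

-- The `k`-th box of the diagonal `d` is `(k + d⁺, k + d⁻)`.
lemma diagCount_eq_ncard (lam : ℕ → ℕ) (d : ℤ) :
    diagCount lam d = Set.ncard {k : ℕ | k + (-d).toNat < lam (k + d.toNat)} := by
  have hinj : Function.Injective fun k : ℕ => (k + d.toNat, k + (-d).toNat) :=
    fun k k' h => by simpa using congrArg Prod.fst h
  rw [diagCount, ← Set.ncard_image_of_injective _ hinj]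
  congr 1
  ext ⟨i, j⟩
  simp only [Set.mem_ofPred_eq, Set.mem_image, Prod.mk.injEq]
  constructor
  · rintro ⟨hij, rfl⟩
    refine ⟨min i j, ?_, by omega, by omega⟩
    rwa [show min i j + ((i : ℤ) - j).toNat = i by omega,
      show min i j + (-((i : ℤ) - j)).toNat = j by omega]
  · rintro ⟨k, hk, rfl, rfl⟩
    omega

section DiagCount

variable {lam : ℕ → ℕ} {N : ℕ}

lemma lt_diagCount_iff (hanti : Antitone lam) (hvan : ∀ i, N ≤ i → lam i = 0) (d : ℤ) (k : ℕ) :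
    k < diagCount lam d ↔ k + (-d).toNat < lam (k + d.toNat) := by
  have hfin : {k : ℕ | k + (-d).toNat < lam (k + d.toNat)}.Finite :=
    (Set.finite_Iio N).subset fun k hk => by
      by_contra h
      simp only [Set.mem_ofPred_eq, Set.mem_Iio] at hk h
      rw [hvan _ (by omega)] at hk
      omega
  have hsucc : ∀ k, k + 1 ∈ {k : ℕ | k + (-d).toNat < lam (k + d.toNat)} →
      k ∈ {k : ℕ | k + (-d).toNat < lam (k + d.toNat)} := fun k hk => by
    simp only [Set.mem_ofPred_eq] at hk ⊢
    have := hanti (show k + d.toNat ≤ k + 1 + d.toNat by omega)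
    omega
  rw [diagCount_eq_ncard, ← Set.mem_Iio, ← hfin.eq_Iio_ncard hsucc, Set.mem_ofPred_eq]

lemma lt_iff_min_lt_diagCount (hanti : Antitone lam) (hvan : ∀ i, N ≤ i → lam i = 0) (i j : ℕ) :
    j < lam i ↔ min i j < diagCount lam (i - j) := by
  rw [lt_diagCount_iff hanti hvan, show min i j + (-((i : ℤ) - j)).toNat = j by omega,
    show min i j + ((i : ℤ) - j).toNat = i by omega]

lemma diagCount_isDiagonalProfile (hanti : Antitone lam) (hvan : ∀ i, N ≤ i → lam i = 0) :
    IsDiagonalProfile (diagCount lam) := by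
  have key := lt_diagCount_iff hanti hvan
  refine ⟨fun d hd => ⟨le_of_forall_lt fun k hk => ?_, le_of_forall_lt fun k hk => ?_⟩,
    fun d hd => ⟨le_of_forall_lt fun k hk => ?_, le_of_forall_lt fun k hk => ?_⟩⟩
  · rw [key] at hk ⊢
    have := hanti (show k + d.toNat ≤ k + (d + 1).toNat by omega)
    omega
  · rcases k with _ | k
    · omega
    suffices k < diagCount lam (d + 1) by omega
    rw [key] at hk ⊢
    rw [show k + (d + 1).toNat = k + 1 + d.toNat by omega]
    omega
  · rw [key] at hk ⊢
    rw [show (d + 1).toNat = d.toNat by omega]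
    omega
  · rcases k with _ | k
    · omega
    suffices k < diagCount lam d by omega
    rw [key] at hk ⊢
    have := hanti (show k + d.toNat ≤ k + 1 + (d + 1).toNat by omega)
    omega

lemma support_diagCount_subset (hanti : Antitone lam) (hvan : ∀ i, N ≤ i → lam i = 0) :
    Function.support (diagCount lam) ⊆ Set.Ioo (-((N + lam 0 : ℕ) : ℤ)) (N + lam 0 : ℕ) := by
  intro d hd
  have h0 := (lt_diagCount_iff hanti hvan d 0).1 (Nat.pos_of_ne_zero hd)
  have hN : d.toNat < N := by
    by_contra h
    rw [hvan _ (by omega)] at h0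
    omega
  have hl := hanti (Nat.zero_le (0 + d.toNat))
  constructor <;> push_cast <;> omega

lemma boxes_eq_biUnion (hvan : ∀ i, N ≤ i → lam i = 0) :
    {p : ℕ × ℕ | p.2 < lam p.1} = ⋃ i ∈ Set.Iio N, Prod.mk i '' Set.Iio (lam i) := by
  ext ⟨i, j⟩
  simp only [Set.mem_ofPred_eq, Set.mem_iUnion, Set.mem_image, Set.mem_Iio, Prod.mk.injEq]
  constructor
  · intro h
    refine ⟨i, ?_, j, h, rfl, rfl⟩
    by_contra hi
    rw [hvan i (by omega)] at h
    omega
  · rintro ⟨i, -, j, hj, rfl, rfl⟩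
    exact hj

lemma finite_boxes (hvan : ∀ i, N ≤ i → lam i = 0) : {p : ℕ × ℕ | p.2 < lam p.1}.Finite := by
  rw [boxes_eq_biUnion hvan]
  exact (Set.finite_Iio N).biUnion fun i _ => (Set.finite_Iio _).image _

lemma ncard_boxes (hvan : ∀ i, N ≤ i → lam i = 0) :
    {p : ℕ × ℕ | p.2 < lam p.1}.ncard = ∑ i ∈ Finset.range N, lam i := by
  rw [boxes_eq_biUnion hvan, Set.Finite.ncard_biUnion (Set.finite_Iio N)
    (fun i _ => (Set.finite_Iio _).image _), ← Finset.coe_range, finsum_mem_coe_finset]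
  · simp [Set.ncard_image_of_injective _ (Prod.mk_right_injective _)]
  · intro i _ i' _ hii'
    simp only [Function.onFun, Set.disjoint_left, Set.mem_image]
    rintro _ ⟨j, -, rfl⟩ ⟨j', -, h⟩
    exact hii' (congrArg Prod.fst h).symm

lemma ncard_boxes_of_content_mem (hvan : ∀ i, N ≤ i → lam i = 0) {t : Set ℤ} (ht : t.Finite) :
    {p : ℕ × ℕ | p.2 < lam p.1 ∧ (p.1 : ℤ) - p.2 ∈ t}.ncard = ∑ᶠ d ∈ t, diagCount lam d := by
  have hdiag : ∀ d, {p : ℕ × ℕ | p.2 < lam p.1 ∧ (p.1 : ℤ) - p.2 = d}.Finite := fun d =>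
    (finite_boxes hvan).subset fun p hp => hp.1
  simp only [diagCount]
  rw [← Set.Finite.ncard_biUnion ht (fun d _ => hdiag d)]
  · congr 1
    ext p
    simp
  · intro d _ d' _ hdd'
    simp only [Function.onFun, Set.disjoint_left, Set.mem_ofPred_eq]
    rintro p ⟨-, rfl⟩ ⟨-, h⟩
    exact hdd' h

lemma finite_support_diagCount (hvan : ∀ i, N ≤ i → lam i = 0) :
    (Function.support (diagCount lam)).Finite :=
  ((finite_boxes hvan).image fun p : ℕ × ℕ => (p.1 : ℤ) - p.2).subset fun d hd => by
    obtain ⟨p, hp, rfl⟩ := Set.nonempty_of_ncard_ne_zero hd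
    exact ⟨p, hp, rfl⟩

lemma finsum_diagCount (hvan : ∀ i, N ≤ i → lam i = 0) :
    ∑ᶠ d, diagCount lam d = ∑ i ∈ Finset.range N, lam i := by
  rw [← finsum_mem_support, ← ncard_boxes_of_content_mem hvan (finite_support_diagCount hvan),
    ← ncard_boxes hvan]
  congr 1
  ext p
  refine ⟨fun h => h.1, fun h => ⟨h, ?_⟩⟩
  have hfin : {q : ℕ × ℕ | q.2 < lam q.1 ∧ (q.1 : ℤ) - q.2 = (p.1 : ℤ) - p.2}.Finite :=
    (finite_boxes hvan).subset fun q hq => hq.1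
  exact ((Set.ncard_pos hfin).2 ⟨p, h, rfl⟩).ne'

end DiagCount

-- Box `(i, j)` is the `min i j`-th box of the diagonal `i - j`.
noncomputable def ofDiagProfile (g : ℤ → ℕ) (i : ℕ) : ℕ :=
  Set.ncard {j : ℕ | min i j < g (i - j)}

section OfDiagProfile

variable {g : ℤ → ℕ} {N : ℕ}

lemma IsDiagonalProfile.min_lt_of_min_succ_right_lt (hg : IsDiagonalProfile g) {i j : ℕ}
    (h : min i (j + 1) < g (i - (j + 1 : ℕ))) : min i j < g (i - j) := by
  have e : (i : ℤ) - (j + 1 : ℕ) + 1 = i - j := by push_cast; ring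
  rcases le_or_gt (j + 1) i with hji | hji
  · have := (hg.1 ((i : ℤ) - (j + 1 : ℕ)) (by omega)).2
    rw [e] at this
    omega
  · have := (hg.2 ((i : ℤ) - (j + 1 : ℕ)) (by omega)).1
    rw [e] at this
    omega

lemma IsDiagonalProfile.min_lt_of_min_succ_left_lt (hg : IsDiagonalProfile g) {i j : ℕ}
    (h : min (i + 1) j < g ((i + 1 : ℕ) - j)) : min i j < g (i - j) := by
  have e : (i : ℤ) - j + 1 = (i + 1 : ℕ) - j := by push_cast; ring
  rcases le_or_gt j i with hji | hji
  · have := (hg.1 (i - j) (by omega)).1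
    rw [e] at this
    omega
  · have := (hg.2 (i - j) (by omega)).2
    rw [e] at this
    omega

lemma lt_ofDiagProfile_iff (hg : IsDiagonalProfile g)
    (hs : Function.support g ⊆ Set.Ioo (-(N : ℤ)) N) (i j : ℕ) :
    j < ofDiagProfile g i ↔ min i j < g (i - j) := by
  have hfin : {j : ℕ | min i j < g (i - j)}.Finite :=
    (Set.finite_Iio (i + N)).subset fun j hj => by
      by_contra h
      have : g (i - j) = 0 := Function.notMem_support.1 fun hd => by
        have := (hs hd).1
        simp only [Set.mem_Iio] at h
        omega
      simp only [Set.mem_ofPred_eq] at hj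
      omega
  rw [ofDiagProfile, ← Set.mem_Iio,
    ← hfin.eq_Iio_ncard fun j hj => hg.min_lt_of_min_succ_right_lt hj, Set.mem_ofPred_eq]

lemma antitone_ofDiagProfile (hg : IsDiagonalProfile g)
    (hs : Function.support g ⊆ Set.Ioo (-(N : ℤ)) N) : Antitone (ofDiagProfile g) :=
  antitone_nat_of_succ_le fun i => le_of_forall_lt fun j hj => by
    rw [lt_ofDiagProfile_iff hg hs] at hj ⊢
    exact hg.min_lt_of_min_succ_left_lt hj

lemma ofDiagProfile_eq_zero (hg : IsDiagonalProfile g)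
    (hs : Function.support g ⊆ Set.Ioo (-(N : ℤ)) N) {i : ℕ} (hi : N ≤ i) :
    ofDiagProfile g i = 0 := by
  by_contra h
  have h0 := (lt_ofDiagProfile_iff hg hs i 0).1 (Nat.pos_of_ne_zero h)
  have := (hs (Function.mem_support.2 (by simpa using h0.ne'))).2
  omega

lemma diagCount_ofDiagProfile (hg : IsDiagonalProfile g)
    (hs : Function.support g ⊆ Set.Ioo (-(N : ℤ)) N) : diagCount (ofDiagProfile g) = g := by
  funext d
  refine eq_of_forall_lt_iff fun k => ?_
  rw [lt_diagCount_iff (antitone_ofDiagProfile hg hs) (fun i => ofDiagProfile_eq_zero hg hs),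
    lt_ofDiagProfile_iff hg hs,
    show min (k + d.toNat) (k + (-d).toNat) = k by omega,
    show ((k + d.toNat : ℕ) : ℤ) - (k + (-d).toNat : ℕ) = d by omega]

end OfDiagProfile

lemma le_of_diagCount_le {nu lam : ℕ → ℕ} {N N' : ℕ} (hnu : Antitone nu)
    (hnuvan : ∀ i, N' ≤ i → nu i = 0) (hlam : Antitone lam) (hlamvan : ∀ i, N ≤ i → lam i = 0)
    (h : ∀ d, diagCount nu d ≤ diagCount lam d) (i : ℕ) : nu i ≤ lam i :=
  le_of_forall_lt fun j hj => by
    rw [lt_iff_min_lt_diagCount hnu hnuvan] at hj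
    rw [lt_iff_min_lt_diagCount hlam hlamvan]
    exact hj.trans_le (h _)

noncomputable def hookInd (μ B : ℤ) : ℤ → ℕ := (Set.Icc (-B - μ) B).indicator 1

lemma hookInd_apply (μ B d : ℤ) : hookInd μ B d = if -B - μ ≤ d ∧ d ≤ B then 1 else 0 := by
  simp [hookInd, Set.indicator_apply]

lemma hookInd_le_one (μ B d : ℤ) : hookInd μ B d ≤ 1 := by
  rw [hookInd_apply]
  split_ifs <;> simp

lemma finsum_hookInd {μ B : ℤ} (h : -B - μ ≤ B) : ∑ᶠ d, hookInd μ B d = (2 * B + μ + 1).toNat := by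
  rw [hookInd, ← finsum_mem_def]
  simp only [Pi.one_apply]
  rw [finsum_one, ← Finset.coe_Icc, Set.ncard_coe_finset, Int.card_Icc]
  omega

-- With `μ = 2m`, the diagonals `-B - μ, …, B` carry in `T_m` exactly the entries of `H_{B+m}`
-- (`hookMult_eq_finsum`); the end conditions say that lowering them by one keeps a profile.
structure IsRemovableHook (μ : ℤ) (g : ℤ → ℕ) (B : ℤ) : Prop where
  le : -B - μ ≤ B
  pos : ∀ d, -B - μ ≤ d → d ≤ B → 1 ≤ g d
  right_of_nonneg : 0 ≤ B → g B = g (B + 1) + 1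
  right_of_neg : B < 0 → g (B + 1) = g B
  left : g (-B - μ) = g (-B - μ - 1) + 1

namespace IsRemovableHook

variable {μ B : ℤ} {g : ℤ → ℕ}

lemma hookInd_le (hr : IsRemovableHook μ g B) : hookInd μ B ≤ g := fun d => by
  rw [hookInd_apply]
  split_ifs with h
  exacts [hr.pos d h.1 h.2, Nat.zero_le _]

lemma isDiagonalProfile_sub (hμ : 0 ≤ μ) (hr : IsRemovableHook μ g B)
    (hg : IsDiagonalProfile g) : IsDiagonalProfile (g - hookInd μ B) := by
  have hstep : ∀ d, d ≠ B → d + 1 ≠ -B - μ → hookInd μ B (d + 1) = hookInd μ B d := by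
    intro d h1 h2
    simp only [hookInd_apply]
    split_ifs <;> omega
  have hB : hookInd μ B B = 1 ∧ hookInd μ B (B + 1) = 0 := by
    simp [hookInd_apply, hr.le]
  have hA : hookInd μ B (-B - μ) = 1 ∧ hookInd μ B (-B - μ - 1) = 0 := by
    simp [hookInd_apply, hr.le]
  have hle : ∀ d, hookInd μ B d ≤ 1 ∧ hookInd μ B d ≤ g d := fun d =>
    ⟨hookInd_le_one μ B d, hr.hookInd_le d⟩
  have hA0 : -B - μ ≤ 0 := by have := hr.le; omega
  refine ⟨fun d hd => ?_, fun d hd => ?_⟩ <;> simp only [Pi.sub_apply]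
  · rcases eq_or_ne d B with rfl | hdB
    · have := hr.right_of_nonneg hd
      omega
    · rw [hstep d hdB (by omega)]
      have := hg.1 d hd
      have := hle d
      have := hle (d + 1)
      omega
  · rcases eq_or_ne d B with rfl | hdB
    · have := hr.right_of_neg hd
      have := hr.pos d hr.le le_rfl
      omega
    rcases eq_or_ne (d + 1) (-B - μ) with hdA | hdA
    · obtain rfl : d = -B - μ - 1 := by omega
      rw [sub_add_cancel]
      have := hr.left
      omega
    · rw [hstep d hdB hdA]
      have := hg.2 d hd
      have := hle d
      have := hle (d + 1)
      omega

lemma mem_Ioo {N : ℕ} (hr : IsRemovableHook μ g B)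
    (hs : Function.support g ⊆ Set.Ioo (-(N : ℤ)) N) : B ∈ Set.Ioo (-(N : ℤ)) N :=
  hs (Nat.one_le_iff_ne_zero.1 (hr.pos B hr.le le_rfl))

lemma lt_of_isRemovableHook_sub (hr : IsRemovableHook μ g B)
    (hmax : ∀ B', IsRemovableHook μ g B' → B' ≤ B) {B' : ℤ}
    (hr' : IsRemovableHook μ (g - hookInd μ B) B') : B' < B := by
  rcases lt_trichotomy B' B with h | rfl | h
  · exact h
  · have e₁ : (g - hookInd μ B') B' = g B' - 1 := by simp [hookInd_apply, hr.le]
    have e₂ : (g - hookInd μ B') (B' + 1) = g (B' + 1) := by simp [hookInd_apply]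
    have := hr.pos B' hr.le le_rfl
    rcases le_or_gt 0 B' with hb | hb
    · have := hr.right_of_nonneg hb
      have := hr'.right_of_nonneg hb
      omega
    · have := hr.right_of_neg hb
      have := hr'.right_of_neg hb
      omega
  · -- away from the removed hook nothing changed, so `B'` was already removable for `g`
    have hout : ∀ e, (e < -B - μ ∨ B < e) → (g - hookInd μ B) e = g e := fun e he => by
      simp only [Pi.sub_apply, hookInd_apply]
      split_ifs <;> omega
    refine absurd (hmax B' ⟨hr'.le, fun d h₁ h₂ => ?_, fun hb => ?_, fun hb => ?_, ?_⟩) (not_le.2 h)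
    · exact (hr'.pos d h₁ h₂).trans (Nat.sub_le _ _)
    · rw [← hout B' (by omega), ← hout (B' + 1) (by omega)]
      exact hr'.right_of_nonneg hb
    · rw [← hout B' (by omega), ← hout (B' + 1) (by omega)]
      exact hr'.right_of_neg hb
    · rw [← hout (-B' - μ) (by omega), ← hout (-B' - μ - 1) (by omega)]
      exact hr'.left

end IsRemovableHook

lemma support_subset_support_of_le {α : Type*} {f g : α → ℕ} (h : f ≤ g) :
    Function.support f ⊆ Function.support g :=
  fun a ha hga => ha (Nat.eq_zero_of_le_zero (hga ▸ h a))

theorem IsDiagonalProfile.exists_hookDecomposition {μ : ℤ} {N : ℕ} {g : ℤ → ℕ}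
    (hg : IsDiagonalProfile g) (hμ : 0 ≤ μ) (hs : Function.support g ⊆ Set.Ioo (-(N : ℤ)) N) :
    ∃ (g' : ℤ → ℕ) (s : ℕ) (B : ℕ → ℤ), IsDiagonalProfile g' ∧ g' ≤ g ∧
      (∀ B', ¬ IsRemovableHook μ g' B') ∧
      (∀ i, i + 1 < s → B (i + 1) < B i) ∧ (∀ i < s, -B i - μ ≤ B i) ∧
      g = g' + ∑ i ∈ Finset.range s, hookInd μ (B i) ∧
      (0 < s → IsGreatest {B' | IsRemovableHook μ g B'} (B 0)) := by
  induction hW : ∑ d ∈ Finset.Icc (-(N : ℤ)) N, g d using Nat.strong_induction_on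
    generalizing g with
  | _ W ih =>
  by_cases hrem : ∃ B, IsRemovableHook μ g B
  swap
  · exact ⟨g, 0, fun _ => 0, hg, le_rfl, fun B hB => hrem ⟨B, hB⟩, by simp, by simp, by simp,
      by simp⟩
  obtain ⟨B, hB, hBmax⟩ :=
    Int.exists_greatest_of_bdd ⟨N, fun B' hB' => (hB'.mem_Ioo hs).2.le⟩ hrem
  set g₁ := g - hookInd μ B
  have hle : g₁ ≤ g := fun d => Nat.sub_le _ _
  have hlt : ∑ d ∈ Finset.Icc (-(N : ℤ)) N, g₁ d < W := by
    rw [← hW]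
    obtain ⟨hB₁, hB₂⟩ := hB.mem_Ioo hs
    refine Finset.sum_lt_sum (fun d _ => hle d) ⟨B, Finset.mem_Icc.2 ⟨hB₁.le, hB₂.le⟩, ?_⟩
    have := hB.pos B hB.le le_rfl
    simp only [g₁, Pi.sub_apply, hookInd_apply, hB.le, le_refl, and_self, if_true]
    omega
  obtain ⟨g', s, Bs, hg', hle', hno, hdec, hBs, hsum, hgreat⟩ :=
    ih _ hlt (hB.isDiagonalProfile_sub hμ hg) ((support_subset_support_of_le hle).trans hs) rfl
  refine ⟨g', s + 1, fun i => if i = 0 then B else Bs (i - 1), hg', hle'.trans hle, hno, ?_, ?_, ?_,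
    fun _ => ⟨hB, hBmax⟩⟩
  · rintro (_ | i) hi
    · simpa using hB.lt_of_isRemovableHook_sub hBmax (hgreat (by omega)).1
    · simpa using hdec i (by omega)
  · rintro (_ | i) hi
    · simpa using hB.le
    · simpa using hBs i (by omega)
  · rw [Finset.sum_range_succ']
    simp only [Nat.add_one_ne_zero, if_false, Nat.add_sub_cancel, if_true]
    rw [← add_assoc, ← hsum]
    exact (tsub_add_cancel_of_le hB.hookInd_le).symm

def entryDiagonals (m x : ℝ) : Set ℤ := {d : ℤ | |(d : ℝ) + m| = x}

section Entries

variable {m x : ℝ} {μ : ℤ}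

lemma finite_entryDiagonals (m x : ℝ) : (entryDiagonals m x).Finite :=
  ((Set.toFinite {x - m, -x - m}).preimage Int.cast_injective.injOn).subset fun d hd => by
    simp only [Set.mem_preimage, Set.mem_insert_iff, Set.mem_singleton_iff]
    rcases eq_or_eq_neg_of_abs_eq hd with h | h <;> [left; right] <;> linarith

lemma pos_two_mul_add_of_pos (h2m : 2 * m = μ) {c : ℤ} (hpos : 0 < m + c) : 0 < 2 * c + μ := by
  have : (0 : ℝ) < ((2 * c + μ : ℤ) : ℝ) := by push_cast; linarith
  exact_mod_cast this

lemma entryDiagonals_of_pos (h2m : 2 * m = μ) {c : ℤ} (hx : x = m + c) (hpos : 0 < x) :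
    entryDiagonals m x = {c, -c - μ} := by
  ext d
  simp only [entryDiagonals, Set.mem_ofPred_eq, Set.mem_insert_iff, Set.mem_singleton_iff,
    abs_eq hpos.le, ← Int.cast_inj (α := ℝ)]
  push_cast
  constructor <;> rintro (h | h)
  exacts [Or.inl (by linarith), Or.inr (by linarith), Or.inl (by linarith), Or.inr (by linarith)]

lemma entryDiagonals_zero {c₀ : ℤ} (hm : m = c₀) : entryDiagonals m 0 = {-c₀} := by
  ext d
  simp only [entryDiagonals, Set.mem_ofPred_eq, Set.mem_singleton_iff, abs_eq_zero,
    ← Int.cast_inj (α := ℝ)]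
  push_cast
  constructor <;> intro h <;> linarith

lemma Mmult_eq_finsum {lam : ℕ → ℕ} {N : ℕ} (hvan : ∀ i, N ≤ i → lam i = 0) (m x : ℝ) :
    Mmult lam m x = ∑ᶠ d ∈ entryDiagonals m x, diagCount lam d := by
  rw [Mmult, ← ncard_boxes_of_content_mem hvan (finite_entryDiagonals m x)]
  congr 1
  ext p
  simp [entryDiagonals]

lemma Mmult_of_pos {lam : ℕ → ℕ} {N : ℕ} (hvan : ∀ i, N ≤ i → lam i = 0) (h2m : 2 * m = μ)
    {c : ℤ} (hx : x = m + c) (hpos : 0 < x) :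
    Mmult lam m x = diagCount lam c + diagCount lam (-c - μ) := by
  have := pos_two_mul_add_of_pos h2m (hx ▸ hpos)
  rw [Mmult_eq_finsum hvan, entryDiagonals_of_pos h2m hx hpos, finsum_mem_pair (by omega)]

lemma Mmult_zero {lam : ℕ → ℕ} {N : ℕ} (hvan : ∀ i, N ≤ i → lam i = 0) {c₀ : ℤ} (hm : m = c₀) :
    Mmult lam m 0 = diagCount lam (-c₀) := by
  rw [Mmult_eq_finsum hvan, entryDiagonals_zero hm, finsum_mem_singleton]

lemma hookMult_eq_finsum (h2m : 2 * m = μ) (B : ℤ) (x : ℝ) :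
    hookMult (B + m) x = ∑ᶠ d ∈ entryDiagonals m x, hookInd μ B d := by
  have hset : {k : ℤ | -(B + m) ≤ B + m - k ∧ B + m - k ≤ B + m ∧ |B + m - k| = x} =
      (B - ·) ⁻¹' (entryDiagonals m x ∩ Set.Icc (-B - μ) B) := by
    ext k
    simp only [entryDiagonals, Set.mem_preimage, Set.mem_inter_iff, Set.mem_ofPred_eq,
      Set.mem_Icc, ← Int.cast_le (R := ℝ)]
    push_cast
    rw [show (B : ℝ) - k + m = B + m - k by ring]
    constructor
    · rintro ⟨h₁, h₂, h₃⟩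
      exact ⟨h₃, by linarith, by linarith⟩
    · rintro ⟨h₃, h₁, h₂⟩
      exact ⟨by linarith, by linarith, h₃⟩
  rw [hookMult, hset, Set.ncard_preimage_of_injective_subset_range sub_right_injective
      fun d _ => ⟨B - d, sub_sub_cancel B d⟩, ← finsum_one, finsum_mem_def, finsum_mem_def,
    hookInd, Set.indicator_indicator]
  rfl

end Entries

namespace IsDiagonalProfile

variable {g : ℤ → ℕ} {μ : ℤ}

-- Here `g c + g (-c - μ)` is the multiplicity of the entry `m + c` (`Mmult_of_pos`).
lemma pair_step_of_nonneg (hg : IsDiagonalProfile g) (hμ : 0 ≤ μ)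
    (hno : ∀ B, ¬ IsRemovableHook μ g B) {c : ℤ} (hc : 0 ≤ c) :
    g (c + 1) + g (-(c + 1) - μ) ≤ g c + g (-c - μ) ∧
      g c + g (-c - μ) ≤ g (c + 1) + g (-(c + 1) - μ) + 1 := by
  have hc₁ := hg.1 c hc
  have hc₂ := hg.2 (-c - μ - 1) (by omega)
  rw [sub_add_cancel] at hc₂
  rw [show -(c + 1) - μ = -c - μ - 1 by ring]
  refine ⟨by omega, not_lt.1 fun h => hno c ⟨by omega, fun d h₁ h₂ => ?_, fun _ => by omega,
    fun h => by omega, by omega⟩⟩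
  have := hg.min_le h₁ h₂
  omega

lemma pair_step_of_neg (hg : IsDiagonalProfile g) (hno : ∀ B, ¬ IsRemovableHook μ g B)
    {c : ℤ} (hc : c < 0) (hcμ : 0 < 2 * c + μ) :
    g c + g (-c - μ) ≤ g (c + 1) + g (-(c + 1) - μ) ∧
      g (c + 1) + g (-(c + 1) - μ) ≤ g c + g (-c - μ) + 1 := by
  have hc₁ := hg.2 c hc
  have hc₂ := hg.2 (-c - μ - 1) (by omega)
  rw [sub_add_cancel] at hc₂
  rw [show -(c + 1) - μ = -c - μ - 1 by ring]
  refine ⟨not_lt.1 fun h => hno c ⟨by omega, fun d h₁ h₂ => ?_, fun h => by omega,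
    fun _ => by omega, by omega⟩, by omega⟩
  have := hg.min_le h₁ h₂
  have := hg.monotoneOn (show -c - μ ≤ 0 by omega) hc.le (show -c - μ ≤ c by omega)
  omega

lemma eq_div_two_of_forall_not_isRemovableHook_zero (hg : IsDiagonalProfile g)
    (hno : ∀ B, ¬ IsRemovableHook 0 g B) : g 0 = (g 1 + g (-1) + 1) / 2 := by
  have h₁ := hg.1 0 le_rfl
  have h₂ := hg.2 (-1) (by omega)
  norm_num at h₁ h₂
  by_contra h
  refine hno 0 ⟨le_rfl, fun d h₁ h₂ => ?_, fun _ => by norm_num; omega, by omega,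
    by norm_num; omega⟩
  obtain rfl : d = 0 := by omega
  omega

lemma eq_div_two_of_forall_not_isRemovableHook {c₀ : ℤ} (hg : IsDiagonalProfile g)
    (hno : ∀ B, ¬ IsRemovableHook (2 * c₀) g B) (hc₀ : 0 < c₀) :
    g (-c₀) = (g (1 - c₀) + g (-c₀ - 1)) / 2 := by
  have h₁ := hg.2 (-c₀) (by omega)
  have h₂ := hg.2 (-c₀ - 1) (by omega)
  rw [sub_add_cancel] at h₂
  rw [show 1 - c₀ = -c₀ + 1 by ring]
  by_contra h
  have e : -(-c₀) - 2 * c₀ = -c₀ := by ring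
  refine hno (-c₀) ⟨by omega, fun d h₁ h₂ => ?_, fun _ => by omega, fun _ => by omega, ?_⟩
  · obtain rfl : d = -c₀ := by omega
    omega
  · rw [e]
    omega

end IsDiagonalProfile

theorem residual_of_forall_not_isRemovableHook {nu : ℕ → ℕ} {N : ℕ} {m : ℝ} {μ : ℤ}
    (hm : 0 ≤ m) (h2m : 2 * m = μ) (hanti : Antitone nu) (hvan : ∀ i, N ≤ i → nu i = 0)
    (hno : ∀ B, ¬ IsRemovableHook μ (diagCount nu) B) : Residual nu m := by
  have hμ : 0 ≤ μ := by exact_mod_cast (show (0 : ℝ) ≤ μ by linarith)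
  have hg := diagCount_isDiagonalProfile hanti hvan
  have hsucc : ∀ c : ℤ, m + c + 1 = m + (c + 1 : ℤ) := fun c => by push_cast; ring
  refine ⟨?_, ?_, ?_⟩
  · rintro l ⟨c, rfl⟩ hl hml
    have hc : 0 ≤ c := by exact_mod_cast (show (0 : ℝ) ≤ c by linarith)
    rw [Mmult_of_pos hvan h2m rfl hl, Mmult_of_pos hvan h2m (hsucc c) (by linarith)]
    exact hg.pair_step_of_nonneg hμ hno hc
  · rintro l ⟨c, rfl⟩ hl hlm
    have hc : c < 0 := by exact_mod_cast (show (c : ℝ) < 0 by linarith)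
    rw [Mmult_of_pos hvan h2m rfl hl, Mmult_of_pos hvan h2m (hsucc c) (by linarith)]
    exact hg.pair_step_of_neg hno hc (pos_two_mul_add_of_pos h2m hl)
  · rintro ⟨c₀, hc₀⟩
    have hμc : μ = 2 * c₀ := by exact_mod_cast (show (μ : ℝ) = 2 * c₀ by linarith)
    subst hμc
    rw [Mmult_zero hvan hc₀, Mmult_of_pos hvan h2m (c := 1 - c₀) (by push_cast; linarith) one_pos,
      show -(1 - c₀) - 2 * c₀ = -c₀ - 1 by ring]
    refine ⟨fun hm₀ => ?_, fun hm₀ => ?_⟩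
    · obtain rfl : c₀ = 0 := by exact_mod_cast (show (c₀ : ℝ) = 0 by linarith)
      simpa using hg.eq_div_two_of_forall_not_isRemovableHook_zero (by simpa using hno)
    · have : 0 < c₀ := by
        have : (0 : ℝ) < c₀ := lt_of_le_of_ne (by linarith) (by rw [← hc₀]; exact Ne.symm hm₀)
        exact_mod_cast this
      exact hg.eq_div_two_of_forall_not_isRemovableHook hno this

theorem exists_partition_hookDecomposition {lam : ℕ → ℕ} {N : ℕ} {μ : ℤ} (hμ : 0 ≤ μ)
    (hanti : Antitone lam) (hvan : ∀ i, N ≤ i → lam i = 0) :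
    ∃ (nu : ℕ → ℕ) (s : ℕ) (B : ℕ → ℤ), Antitone nu ∧ (∀ i, N + lam 0 ≤ i → nu i = 0) ∧
      (∀ i, nu i ≤ lam i) ∧ (∀ B', ¬ IsRemovableHook μ (diagCount nu) B') ∧
      (∀ i, i + 1 < s → B (i + 1) < B i) ∧ (∀ i < s, -B i - μ ≤ B i) ∧
      diagCount lam = diagCount nu + ∑ i ∈ Finset.range s, hookInd μ (B i) := by
  have hsupp := support_diagCount_subset hanti hvan
  obtain ⟨g, s, B, hg, hle, hno, hdec, hB, hsum, -⟩ :=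
    (diagCount_isDiagonalProfile hanti hvan).exists_hookDecomposition hμ hsupp
  have hs := (support_subset_support_of_le hle).trans hsupp
  have hnu := antitone_ofDiagProfile hg hs
  have hnuvan : ∀ i, N + lam 0 ≤ i → ofDiagProfile g i = 0 := fun i => ofDiagProfile_eq_zero hg hs
  have hdiag := diagCount_ofDiagProfile hg hs
  refine ⟨ofDiagProfile g, s, B, hnu, hnuvan, le_of_diagCount_le hnu hnuvan hanti hvan ?_, ?_,
    hdec, hB, ?_⟩ <;> rw [hdiag]
  exacts [hle, hno, hsum]

lemma sum_range_eq_of_diagCount_eq_add {lam nu : ℕ → ℕ} {N N' s : ℕ} {μ : ℤ} {B : ℕ → ℤ}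
    (hvan : ∀ i, N ≤ i → lam i = 0) (hnuvan : ∀ i, N' ≤ i → nu i = 0)
    (hB : ∀ i < s, -B i - μ ≤ B i)
    (hdiag : diagCount lam = diagCount nu + ∑ i ∈ Finset.range s, hookInd μ (B i)) :
    ∑ i ∈ Finset.range N, lam i =
      ∑ i ∈ Finset.range N', nu i + ∑ i ∈ Finset.range s, (2 * B i + μ + 1).toNat := by
  have hfin : ∀ i, (hookInd μ (B i)).HasFiniteSupport := fun i =>
    (Set.finite_Icc (-B i - μ) (B i)).subset Set.support_indicator_subset
  rw [← finsum_diagCount hvan, ← finsum_diagCount hnuvan, hdiag]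
  simp only [Pi.add_apply, Finset.sum_apply]
  rw [finsum_add_distrib (finite_support_diagCount hnuvan) (.sum hfin _),
    finsum_sum_comm _ _ fun i _ => hfin i]
  exact congrArg _ (Finset.sum_congr rfl fun i hi => finsum_hookInd (hB i (Finset.mem_range.1 hi)))

lemma Mmult_eq_add_sum_hookMult {lam nu : ℕ → ℕ} {N N' s : ℕ} {m : ℝ} {μ : ℤ} {B : ℕ → ℤ}
    (hvan : ∀ i, N ≤ i → lam i = 0) (hnuvan : ∀ i, N' ≤ i → nu i = 0) (h2m : 2 * m = μ)
    (hdiag : diagCount lam = diagCount nu + ∑ i ∈ Finset.range s, hookInd μ (B i)) (x : ℝ) :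
    Mmult lam m x = Mmult nu m x + ∑ i ∈ Finset.range s, hookMult (B i + m) x := by
  have hfin := finite_entryDiagonals m x
  simp only [Mmult_eq_finsum hvan, Mmult_eq_finsum hnuvan, hookMult_eq_finsum h2m, hdiag,
    Pi.add_apply, Finset.sum_apply, finsum_mem_eq_finite_toFinset_sum _ hfin]
  rw [Finset.sum_add_distrib, Finset.sum_comm]

/-- for `m ≥ 0` with `2m ∈ ℤ` and a partition `lam` of `n`, there
exist a partition `nu ⊆ lam`, of some weight `w`, whose `m`-tableau is
residual, and pairwise distinct values `l_1 > l_2 > … > l_s ≥ 0` with each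
`l_i - m ∈ ℤ`, such that the multiset of entries of `T_m(λ)` equals the
multiset of entries of `T_m(ν)` together with the hook multisets `H_{l_i}`.
In particular `w = n - Σ (2 l_i + 1)`, and the numbers `2 l_i + 1` are
pairwise distinct, all odd when `m ∈ ℤ` and all even when `m ∉ ℤ`. -/
theorem stmt6 (n : ℕ) (m : ℝ) (hm0 : 0 ≤ m)
    (h2m : ∃ c : ℤ, 2 * m = (c : ℝ))
    (lam : ℕ → ℕ) (hlam : IsPartitionOf lam n) :
    ∃ (nu : ℕ → ℕ) (w s : ℕ) (L : ℕ → ℝ),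
      IsPartitionOf nu w ∧ (∀ i, nu i ≤ lam i) ∧ Residual nu m ∧
      (∀ i, i + 1 < s → L (i + 1) < L i) ∧
      (∀ i, i < s → 0 ≤ L i ∧ ∃ c : ℤ, L i - m = (c : ℝ)) ∧
      (∀ x : ℝ, Mmult lam m x =
        Mmult nu m x + ∑ i ∈ Finset.range s, hookMult (L i) x) ∧
      ((w : ℝ) = (n : ℝ) - ∑ i ∈ Finset.range s, (2 * L i + 1)) ∧
      ((∃ c : ℤ, m = (c : ℝ)) → ∀ i < s, ∃ a : ℤ, 2 * L i + 1 = 2 * (a : ℝ) + 1) ∧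
      ((¬ ∃ c : ℤ, m = (c : ℝ)) → ∀ i < s, ∃ a : ℤ, 2 * L i + 1 = 2 * (a : ℝ)) := by
  obtain ⟨hanti, N, hvan, rfl⟩ := hlam
  obtain ⟨μ, h2m⟩ := h2m
  have hμ : 0 ≤ μ := by exact_mod_cast (show (0 : ℝ) ≤ μ by linarith)
  obtain ⟨nu, s, B, hnu, hnuvan, hle, hno, hdec, hB, hdiag⟩ :=
    exists_partition_hookDecomposition hμ hanti hvan
  have hlen : ∀ i ∈ Finset.range s, ((2 * B i + μ + 1).toNat : ℝ) = 2 * (B i + m) + 1 :=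
    fun i hi => by
      have := hB i (Finset.mem_range.1 hi)
      rw [← Int.cast_natCast, Int.toNat_of_nonneg (by omega)]
      push_cast
      linarith
  refine ⟨nu, _, s, fun i => B i + m, ⟨hnu, _, hnuvan, rfl⟩, hle,
    residual_of_forall_not_isRemovableHook hm0 h2m hnu hnuvan hno,
    fun i hi => by simpa using hdec i hi, fun i hi => ⟨?_, B i, by ring⟩,
    Mmult_eq_add_sum_hookMult hvan hnuvan h2m hdiag, ?_, ?_, ?_⟩
  · have : (-B i - μ : ℝ) ≤ B i := by exact_mod_cast hB i hi
    linarith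
  · rw [sum_range_eq_of_diagCount_eq_add hvan hnuvan hB hdiag]
    push_cast
    rw [Finset.sum_congr rfl hlen]
    ring
  · rintro ⟨c, hc⟩ i -
    exact ⟨B i + c, by push_cast; linarith⟩
  · rintro hm i -
    obtain ⟨k, hk⟩ : Odd μ := Int.not_even_iff_odd.1 fun ⟨k, hk⟩ =>
      hm ⟨k, by push_cast [hk] at h2m; linarith⟩
    exact ⟨B i + k + 1, by push_cast [hk] at h2m ⊢; linarith⟩
end
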